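/- arXiv:2210.11445 — 8 statements merged into one kernel-verified Lean document; each statement's English description precedes it below -/
import Mathlib

section
/- Fix a finite index set ι with N ≥ 2 elements, a family a : ι → ℝ, and y ∈ ℝ. Then for every integer M with 1 ≤ M ≤ N, the average over all injective maps m : Fin M → ι (each with weight (N−M)!/N!) of ( y − (1/M) ∑_{j} a_{m(j)} )² equals (y − ā)² + ((N−M)/(N−1))·(1/M)·V, where ā = (1/N) ∑_{I∈ι} a_I and V = (1/N) ∑_{I∈ι} (a_I − ā)². (Conditional squared-risk decomposition of the M-bagged predictor under simple random sampling without replacement, evaluated at a fixed test point.) -/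
open Finset

section BagAux

variable {ι : Type*} [Fintype ι] [DecidableEq ι]

/-- Number of `M`-subsets of `univ` containing a fixed subset `t`. -/
lemma bag_count_supersets (t : Finset ι) (M : ℕ) (htM : t.card ≤ M) :
    ((Finset.powersetCard M (univ : Finset ι)).filter (fun s => t ⊆ s)).card
      = (Fintype.card ι - t.card).choose (M - t.card) := by
  have h1 : ((univ : Finset ι) \ t).card = Fintype.card ι - t.card := by
    rw [card_sdiff_of_subset (subset_univ t), card_univ]
  rw [← h1, ← Finset.card_powersetCard]
  refine Finset.card_bij' (fun s _ => s \ t) (fun s _ => s ∪ t) ?_ ?_ ?_ ?_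
  · intro s hs
    simp only [mem_filter, mem_powersetCard] at hs
    obtain ⟨⟨_, hcard⟩, hts⟩ := hs
    refine mem_powersetCard.2 ⟨sdiff_subset_sdiff (subset_univ s) le_rfl, ?_⟩
    rw [card_sdiff_of_subset hts, hcard]
  · intro s hs
    simp only [mem_powersetCard] at hs
    obtain ⟨hsub, hcard⟩ := hs
    have hdisj : Disjoint s t := by
      refine disjoint_left.2 fun x hx => ?_
      exact (Finset.mem_sdiff.1 (hsub hx)).2
    refine mem_filter.2 ⟨mem_powersetCard.2 ⟨subset_univ _, ?_⟩, subset_union_right⟩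
    rw [card_union_of_disjoint hdisj, hcard, Nat.sub_add_cancel htM]
  · intro s hs
    simp only [mem_filter, mem_powersetCard] at hs
    exact sdiff_union_of_subset hs.2
  · intro s hs
    simp only [mem_powersetCard] at hs
    have hdisj : Disjoint s t := by
      refine disjoint_left.2 fun x hx => ?_
      exact (Finset.mem_sdiff.1 (hs.1 hx)).2
    show (s ∪ t) \ t = s
    rw [union_sdiff_distrib, sdiff_self]
    simpa using sdiff_eq_self_of_disjoint hdisj

lemma bag_sum_mem (M : ℕ) (hM : 1 ≤ M) (f : ι → ℝ) :
    ∑ s ∈ Finset.powersetCard M (univ : Finset ι), ∑ I ∈ s, f I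
      = ((Fintype.card ι - 1).choose (M - 1) : ℝ) * ∑ I : ι, f I := by
  have h1 : ∀ s : Finset ι, ∑ I ∈ s, f I = ∑ I : ι, if I ∈ s then f I else 0 := fun s => by
    rw [Finset.sum_ite_mem, univ_inter]
  rw [Finset.sum_congr rfl (fun s _ => h1 s), Finset.sum_comm, Finset.mul_sum]
  refine Finset.sum_congr rfl fun I _ => ?_
  rw [← Finset.sum_filter, Finset.sum_const]
  have := bag_count_supersets {I} M (by simpa using hM)
  simp only [Finset.singleton_subset_iff, Finset.card_singleton] at this
  rw [this, nsmul_eq_mul]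

lemma bag_sum_sq (M : ℕ) (hM2 : 2 ≤ M) (f : ι → ℝ) :
    ∑ s ∈ Finset.powersetCard M (univ : Finset ι), (∑ I ∈ s, f I) ^ 2
      = ((Fintype.card ι - 1).choose (M - 1) : ℝ) * ∑ I : ι, f I ^ 2
        + ((Fintype.card ι - 2).choose (M - 2) : ℝ)
            * ((∑ I : ι, f I) ^ 2 - ∑ I : ι, f I ^ 2) := by
  set N := Fintype.card ι
  have key : ∀ I J : ι, ∑ s ∈ Finset.powersetCard M (univ : Finset ι),
      (if I ∈ s then f I else 0) * (if J ∈ s then f J else 0)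
      = (if I = J then ((N - 1).choose (M - 1) : ℝ) else ((N - 2).choose (M - 2) : ℝ))
          * (f I * f J) := by
    intro I J
    have h2 : ∀ s : Finset ι, (if I ∈ s then f I else 0) * (if J ∈ s then f J else 0)
        = if I ∈ s ∧ J ∈ s then f I * f J else 0 := by
      intro s; by_cases hI : I ∈ s <;> by_cases hJ : J ∈ s <;> simp [hI, hJ]
    rw [Finset.sum_congr rfl (fun s _ => h2 s), ← Finset.sum_filter, Finset.sum_const,
      nsmul_eq_mul]
    by_cases h : I = J
    · subst h
      have := bag_count_supersets {I} M (le_trans (by simp) hM2)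
      simp only [Finset.singleton_subset_iff, Finset.card_singleton] at this
      simp only [and_self]
      rw [this]
      simp
      left; rfl
    · have hcard : ({I, J} : Finset ι).card = 2 := by
        rw [Finset.card_insert_of_notMem (by simpa using h), Finset.card_singleton]
      have := bag_count_supersets {I, J} M (hcard ▸ hM2)
      rw [hcard] at this
      have hiff : ∀ s : Finset ι, ({I, J} : Finset ι) ⊆ s ↔ I ∈ s ∧ J ∈ s := by
        intro s; rw [Finset.insert_subset_iff, Finset.singleton_subset_iff]
      simp only [hiff] at this
      rw [this, if_neg h]
  have h1 : ∀ s : Finset ι, ∑ I ∈ s, f I = ∑ I : ι, if I ∈ s then f I else 0 := fun s => by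
    rw [Finset.sum_ite_mem, univ_inter]
  calc ∑ s ∈ Finset.powersetCard M (univ : Finset ι), (∑ I ∈ s, f I) ^ 2
      = ∑ s ∈ Finset.powersetCard M (univ : Finset ι), ∑ I : ι, ∑ J : ι,
          (if I ∈ s then f I else 0) * (if J ∈ s then f J else 0) := by
        refine Finset.sum_congr rfl fun s _ => ?_
        rw [h1, sq, Finset.sum_mul_sum]
    _ = ∑ I : ι, ∑ J : ι, ∑ s ∈ Finset.powersetCard M (univ : Finset ι),
          (if I ∈ s then f I else 0) * (if J ∈ s then f J else 0) := by
        rw [Finset.sum_comm]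
        exact Finset.sum_congr rfl fun I _ => Finset.sum_comm
    _ = ∑ I : ι, ∑ J : ι,
          (if I = J then ((N - 1).choose (M - 1) : ℝ) else ((N - 2).choose (M - 2) : ℝ))
            * (f I * f J) := by
        exact Finset.sum_congr rfl fun I _ => Finset.sum_congr rfl fun J _ => key I J
    _ = ∑ I : ι, ∑ J : ι,
          (((N - 2).choose (M - 2) : ℝ) * (f I * f J)
            + if I = J then (((N - 1).choose (M - 1) : ℝ)
                - ((N - 2).choose (M - 2) : ℝ)) * (f I * f J) else 0) := by
        refine Finset.sum_congr rfl fun I _ => Finset.sum_congr rfl fun J _ => ?_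
        by_cases h : I = J <;> simp [h] <;> ring
    _ = ((N - 1).choose (M - 1) : ℝ) * ∑ I : ι, f I ^ 2
        + ((N - 2).choose (M - 2) : ℝ) * ((∑ I : ι, f I) ^ 2 - ∑ I : ι, f I ^ 2) := by
        simp only [Finset.sum_add_distrib, Finset.sum_ite_eq, Finset.mem_univ, if_pos,
          ← Finset.mul_sum, ← Finset.sum_mul]
        ring

lemma bag_fiber_card (M : ℕ) (s : Finset ι) (hcard : s.card = M) :
    ((univ.filter (fun m : Fin M → ι => Function.Injective m)).filter
        (fun m => univ.image m = s)).card = M.factorial := by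
  rw [Finset.filter_filter]
  have hmem : ∀ m : Fin M → ι, Function.Injective m ∧ univ.image m = s →
      ∀ j : Fin M, m j ∈ s := by
    intro m hm j
    rw [← hm.2]
    exact mem_image_of_mem _ (mem_univ j)
  have hbij : ∀ (m : Fin M → ι) (hm : Function.Injective m ∧ univ.image m = s),
      Function.Bijective (fun j : Fin M => (⟨m j, hmem m hm j⟩ : {x // x ∈ s})) := by
    intro m hm
    refine (Fintype.bijective_iff_injective_and_card _).2 ⟨?_, ?_⟩
    · intro j k h
      exact hm.1 (congrArg Subtype.val h)
    · rw [Fintype.card_fin, Fintype.card_coe, hcard]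
  have E : {m : Fin M → ι // Function.Injective m ∧ univ.image m = s}
      ≃ (Fin M ≃ {x // x ∈ s}) := by
    refine
      { toFun := fun m => Equiv.ofBijective _ (hbij m.1 m.2)
        invFun := fun e => ⟨fun j => (e j : ι), ?_, ?_⟩
        left_inv := ?_
        right_inv := ?_ }
    · intro j k h
      exact e.injective (Subtype.ext h)
    · refine Finset.eq_of_subset_of_card_le ?_ ?_
      · intro x hx
        obtain ⟨j, -, rfl⟩ := mem_image.1 hx
        exact (e j).2
      · rw [hcard, Finset.card_image_of_injective _ (fun j k h => e.injective (Subtype.ext h)),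
          Finset.card_univ, Fintype.card_fin]
    · intro m
      exact Subtype.ext rfl
    · intro e
      exact Equiv.ext fun j => Subtype.ext rfl
  have h1 : Fintype.card {m : Fin M → ι // Function.Injective m ∧ univ.image m = s}
      = M.factorial := by
    rw [Fintype.card_congr E,
      Fintype.card_equiv ((finCongr hcard.symm).trans s.equivFin.symm), Fintype.card_fin]
  rw [← h1, Fintype.card_subtype]

lemma bag_sum_inj (M : ℕ) (G : Finset ι → ℝ) :
    ∑ m ∈ univ.filter (fun m : Fin M → ι => Function.Injective m), G (univ.image m)
      = (M.factorial : ℝ) * ∑ s ∈ Finset.powersetCard M (univ : Finset ι), G s := by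
  have himg : (univ.filter (fun m : Fin M → ι => Function.Injective m)).image
      (fun m => univ.image m) = Finset.powersetCard M (univ : Finset ι) := by
    apply Finset.Subset.antisymm
    · intro s hs
      simp only [Finset.mem_image, Finset.mem_filter] at hs
      obtain ⟨m, ⟨-, hinj⟩, rfl⟩ := hs
      exact mem_powersetCard.2 ⟨subset_univ _, by
        rw [Finset.card_image_of_injective _ hinj, Finset.card_univ, Fintype.card_fin]⟩
    · intro s hs
      obtain ⟨-, hcard⟩ := mem_powersetCard.1 hs
      have e : Fin M ≃ {x // x ∈ s} := (finCongr hcard.symm).trans s.equivFin.symm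
      have hinj : Function.Injective (fun j : Fin M => (e j : ι)) :=
        fun j k h => e.injective (Subtype.ext h)
      refine Finset.mem_image.2 ⟨fun j => (e j : ι), Finset.mem_filter.2 ⟨mem_univ _, hinj⟩, ?_⟩
      refine Finset.eq_of_subset_of_card_le ?_ ?_
      · intro x hx
        obtain ⟨j, -, rfl⟩ := mem_image.1 hx
        exact (e j).2
      · rw [hcard, Finset.card_image_of_injective _ hinj, Finset.card_univ, Fintype.card_fin]
  rw [Finset.sum_comp G (fun m => univ.image m), himg, Finset.mul_sum]
  refine Finset.sum_congr rfl fun s hs => ?_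
  obtain ⟨-, hcard⟩ := mem_powersetCard.1 hs
  rw [show ({m ∈ univ.filter (fun m : Fin M → ι => Function.Injective m) |
      univ.image m = s} : Finset _)
    = (univ.filter (fun m : Fin M → ι => Function.Injective m)).filter
        (fun m => univ.image m = s) from rfl, bag_fiber_card M s hcard, nsmul_eq_mul]

end BagAux

/-- Conditional squared-risk decomposition of the `M`-bagged predictor under simple
random sampling without replacement, evaluated at a fixed test point. -/
theorem bagged_risk_decomposition_without_replacement
    {ι : Type*} [Fintype ι] [DecidableEq ι] (N : ℕ) (hN : N = Fintype.card ι)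
    (hN2 : 2 ≤ N) (a : ι → ℝ) (y : ℝ) (abar V : ℝ)
    (habar : abar = (1 / (N : ℝ)) * ∑ I : ι, a I)
    (hV : V = (1 / (N : ℝ)) * ∑ I : ι, (a I - abar) ^ 2)
    (M : ℕ) (hM1 : 1 ≤ M) (hMN : M ≤ N) :
    (((N - M).factorial : ℝ) / (N.factorial : ℝ)) *
        ∑ m ∈ Finset.univ.filter (fun m : Fin M → ι => Function.Injective m),
          (y - (1 / (M : ℝ)) * ∑ j : Fin M, a (m j)) ^ 2
      = (y - abar) ^ 2 + (((N : ℝ) - M) / ((N : ℝ) - 1)) * ((1 / (M : ℝ)) * V) := by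
  classical
  have hNpos : (0:ℝ) < N := by exact_mod_cast (by omega : 0 < N)
  have hMpos : (0:ℝ) < M := by exact_mod_cast (by omega : 0 < M)
  have hNne : (N : ℝ) ≠ 0 := ne_of_gt hNpos
  have hMne : (M : ℝ) ≠ 0 := ne_of_gt hMpos
  have hN1ne : (N : ℝ) - 1 ≠ 0 := by
    have : (1:ℝ) < N := by exact_mod_cast (by omega : 1 < N)
    linarith
  have hfNne : (N.factorial : ℝ) ≠ 0 := by
    exact_mod_cast Nat.factorial_ne_zero N
  have hfMne : (M.factorial : ℝ) ≠ 0 := by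
    exact_mod_cast Nat.factorial_ne_zero M
  have hfNMne : ((N - M).factorial : ℝ) ≠ 0 := by
    exact_mod_cast Nat.factorial_ne_zero (N - M)
  -- basic algebraic facts about `abar`, `V`
  have hT : ∑ I : ι, a I = (N : ℝ) * abar := by
    rw [habar]; field_simp
  have hsq_expand : ∑ I : ι, (a I - abar) ^ 2
      = (∑ I : ι, a I ^ 2) - 2 * abar * ∑ I : ι, a I + (N : ℝ) * abar ^ 2 := by
    rw [Finset.sum_congr rfl
      (fun I _ => show (a I - abar) ^ 2 = a I ^ 2 - 2 * abar * a I + abar ^ 2 by ring)]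
    rw [Finset.sum_add_distrib, Finset.sum_sub_distrib, ← Finset.mul_sum, Finset.sum_const,
      Finset.card_univ, ← hN, nsmul_eq_mul]
  have hQ : ∑ I : ι, a I ^ 2 = (N : ℝ) * V + (N : ℝ) * abar ^ 2 := by
    have hNV : (N : ℝ) * V = ∑ I : ι, (a I - abar) ^ 2 := by
      rw [hV]; field_simp
    rw [hsq_expand, hT] at hNV
    linarith
  -- replace the sum over injections by a sum over `M`-subsets
  have hstep1 : ∑ m ∈ Finset.univ.filter (fun m : Fin M → ι => Function.Injective m),
      (y - (1 / (M : ℝ)) * ∑ j : Fin M, a (m j)) ^ 2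
      = ∑ m ∈ Finset.univ.filter (fun m : Fin M → ι => Function.Injective m),
        (fun s => (y - (1 / (M : ℝ)) * ∑ I ∈ s, a I) ^ 2) (Finset.univ.image m) := by
    refine Finset.sum_congr rfl fun m hm => ?_
    have hinj : Function.Injective m := (Finset.mem_filter.1 hm).2
    simp only
    rw [Finset.sum_image (fun x _ x' _ h => hinj h)]
  rw [hstep1, bag_sum_inj M (fun s => (y - (1 / (M : ℝ)) * ∑ I ∈ s, a I) ^ 2)]
  rcases Nat.lt_or_ge M 2 with hM2 | hM2
  · -- case M = 1
    have hM1' : M = 1 := by omega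
    subst hM1'
    have hP1 : ∑ s ∈ Finset.powersetCard 1 (univ : Finset ι),
        (y - (1 / (1 : ℕ) : ℝ) * ∑ I ∈ s, a I) ^ 2
        = ∑ I : ι, (y - (1 / (1 : ℕ) : ℝ) * a I) ^ 2 := by
      rw [Finset.powersetCard_one, Finset.sum_map]
      exact Finset.sum_congr rfl fun I _ => by simp
    rw [hP1]
    have hsum : ∑ I : ι, (y - (1 / (1 : ℕ) : ℝ) * a I) ^ 2
        = (N : ℝ) * y ^ 2 - 2 * y * ((N : ℝ) * abar)
          + ((N : ℝ) * V + (N : ℝ) * abar ^ 2) := by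
      rw [Finset.sum_congr rfl (fun I _ =>
        show (y - (1 / (1 : ℕ) : ℝ) * a I) ^ 2 = y ^ 2 - 2 * y * a I + a I ^ 2 by
          push_cast; ring)]
      rw [Finset.sum_add_distrib, Finset.sum_sub_distrib, ← Finset.mul_sum, Finset.sum_const,
        Finset.card_univ, ← hN, nsmul_eq_mul, hT, hQ]
    rw [hsum]
    have hfac : (N : ℝ) * ((N - 1).factorial : ℝ) = (N.factorial : ℝ) := by
      exact_mod_cast Nat.mul_factorial_pred (by omega : N ≠ 0)
    have h11 : ((1 : ℕ).factorial : ℝ) = 1 := by norm_num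
    push_cast
    field_simp
    linear_combination ((y - abar) ^ 2 + V) * hfac
  · -- case 2 ≤ M
    have hmem := bag_sum_mem (ι := ι) M hM1 a
    rw [← hN] at hmem
    have hsq := bag_sum_sq (ι := ι) M hM2 a
    rw [← hN] at hsq
    have hexp : ∑ s ∈ Finset.powersetCard M (univ : Finset ι),
        (y - (1 / (M : ℝ)) * ∑ I ∈ s, a I) ^ 2
        = (N.choose M : ℝ) * y ^ 2
          - (2 * (1 / (M : ℝ)) * y) * (((N - 1).choose (M - 1) : ℝ) * ∑ I : ι, a I)
          + (1 / (M : ℝ)) ^ 2 * (((N - 1).choose (M - 1) : ℝ) * ∑ I : ι, a I ^ 2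
              + ((N - 2).choose (M - 2) : ℝ)
                  * ((∑ I : ι, a I) ^ 2 - ∑ I : ι, a I ^ 2)) := by
      rw [Finset.sum_congr rfl (fun s _ =>
        show (y - (1 / (M : ℝ)) * ∑ I ∈ s, a I) ^ 2
          = y ^ 2 - (2 * (1 / (M : ℝ)) * y) * (∑ I ∈ s, a I)
            + (1 / (M : ℝ)) ^ 2 * (∑ I ∈ s, a I) ^ 2 by ring)]
      rw [Finset.sum_add_distrib, Finset.sum_sub_distrib, ← Finset.mul_sum, ← Finset.mul_sum,
        Finset.sum_const, Finset.card_powersetCard, Finset.card_univ, ← hN, nsmul_eq_mul,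
        hmem, hsq]
    rw [hexp, hT, hQ]
    -- factorial identities
    have keyCnat : N.choose M * (M.factorial * (N - M).factorial) = N.factorial := by
      rw [← Nat.choose_mul_factorial_mul_factorial hMN]; ring
    have key1nat : (N - 1).choose (M - 1) * (M.factorial * (N - M).factorial) * N
        = M * N.factorial := by
      have h1 := Nat.choose_mul_factorial_mul_factorial (show M - 1 ≤ N - 1 by omega)
      have h2 : N - 1 - (M - 1) = N - M := by omega
      rw [h2] at h1
      have h3 : M.factorial = M * (M - 1).factorial :=
        (Nat.mul_factorial_pred (by omega)).symm
      have h4 : N.factorial = N * (N - 1).factorial :=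
        (Nat.mul_factorial_pred (by omega)).symm
      calc (N - 1).choose (M - 1) * (M.factorial * (N - M).factorial) * N
          = ((N - 1).choose (M - 1) * (M - 1).factorial * (N - M).factorial) * (M * N) := by
            rw [h3]; ring
        _ = M * N.factorial := by rw [h1, h4]; ring
    have key2nat : (N - 2).choose (M - 2) * (M.factorial * (N - M).factorial) * (N * (N - 1))
        = (M * (M - 1)) * N.factorial := by
      have h1 := Nat.choose_mul_factorial_mul_factorial (show M - 2 ≤ N - 2 by omega)
      have h2 : N - 2 - (M - 2) = N - M := by omega
      rw [h2] at h1
      have h3 : M.factorial = M * ((M - 1) * (M - 2).factorial) := by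
        have ha : M * (M - 1).factorial = M.factorial := Nat.mul_factorial_pred (by omega)
        have hb : (M - 1) * (M - 2).factorial = (M - 1).factorial := by
          have := Nat.mul_factorial_pred (show M - 1 ≠ 0 by omega)
          rwa [show M - 1 - 1 = M - 2 by omega] at this
        rw [← ha, ← hb]
      have h4 : N.factorial = N * ((N - 1) * (N - 2).factorial) := by
        have ha : N * (N - 1).factorial = N.factorial := Nat.mul_factorial_pred (by omega)
        have hb : (N - 1) * (N - 2).factorial = (N - 1).factorial := by
          have := Nat.mul_factorial_pred (show N - 1 ≠ 0 by omega)
          rwa [show N - 1 - 1 = N - 2 by omega] at this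
        rw [← ha, ← hb]
      calc (N - 2).choose (M - 2) * (M.factorial * (N - M).factorial) * (N * (N - 1))
          = ((N - 2).choose (M - 2) * (M - 2).factorial * (N - M).factorial)
              * (M * (M - 1) * N * (N - 1)) := by rw [h3]; ring
        _ = (M * (M - 1)) * N.factorial := by rw [h1, h4]; ring
    have hcC : (N.choose M : ℝ)
        = (N.factorial : ℝ) / ((M.factorial : ℝ) * ((N - M).factorial : ℝ)) := by
      rw [eq_div_iff (mul_ne_zero hfMne hfNMne)]
      exact_mod_cast keyCnat
    have hc1 : (((N - 1).choose (M - 1) : ℕ) : ℝ)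
        = (M : ℝ) * (N.factorial : ℝ)
            / (((M.factorial : ℝ) * ((N - M).factorial : ℝ)) * (N : ℝ)) := by
      rw [eq_div_iff (mul_ne_zero (mul_ne_zero hfMne hfNMne) hNne)]
      have := key1nat
      have hcast : (((N - 1).choose (M - 1) : ℕ) : ℝ)
          * ((M.factorial : ℝ) * ((N - M).factorial : ℝ)) * (N : ℝ)
          = (M : ℝ) * (N.factorial : ℝ) := by exact_mod_cast congrArg (fun n : ℕ => (n : ℝ)) this
      linear_combination hcast
    have hc2 : (((N - 2).choose (M - 2) : ℕ) : ℝ)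
        = (M : ℝ) * ((M : ℝ) - 1) * (N.factorial : ℝ)
            / (((M.factorial : ℝ) * ((N - M).factorial : ℝ)) * ((N : ℝ) * ((N : ℝ) - 1))) := by
      rw [eq_div_iff (mul_ne_zero (mul_ne_zero hfMne hfNMne) (mul_ne_zero hNne hN1ne))]
      have hcast := congrArg (fun n : ℕ => (n : ℝ)) key2nat
      push_cast [Nat.cast_sub (show 1 ≤ N by omega), Nat.cast_sub (show 1 ≤ M by omega)]
        at hcast
      linear_combination hcast
    rw [hcC, hc1, hc2]
    field_simp
    ring
end

section
/- Fix a finite index set ι with N elements, a family a : ι → ℝ, and y ∈ ℝ. For every integer M ≥ 1 (with N ≥ 1): the average over all maps m : Fin M → ι of ( y − (1/M) ∑_j a_{m(j)} )² equals −(1 − 2/M)·R₁ + 2(1 − 1/M)·R₂^{WR}, where R₁ = (1/N) ∑_{I∈ι} (y − a_I)² and R₂^{WR} = (1/N²) ∑_{I,J∈ι} ( y − (a_I + a_J)/2 )². Moreover, if N ≥ 2 and 1 ≤ M ≤ N, the average over all injective maps m : Fin M → ι of ( y − (1/M) ∑_j a_{m(j)} )² equals −(1 − 2/M)·R₁ +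 2(1 − 1/M)·R₂^{WOR}, where R₂^{WOR} = (1/(N(N−1))) ∑_{I≠J} ( y − (a_I + a_J)/2 )². (The data-conditional squared risk of the M-bagged predictor is a linear combination of the risks for M = 1 and M = 2, for both sampling with and without replacement.) -/
open Finset

set_option linter.unusedSectionVars false
set_option maxHeartbeats 1000000

section BaggingAux

variable {κ ι : Type*} [Fintype κ] [DecidableEq κ] [Fintype ι] [DecidableEq ι]

variable {κ ι : Type*} [Fintype κ] [DecidableEq κ] [Fintype ι] [DecidableEq ι]

lemma card_ne_aux (j : κ) : Fintype.card {l : κ // l ≠ j} = Fintype.card κ - 1 := by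
  simp [Ne, Fintype.card_subtype_compl]


lemma sumFunA (j : κ) (g : ι → ℝ) :
    ∑ m : κ → ι, g (m j)
      = (Fintype.card ι : ℝ) ^ (Fintype.card κ - 1) * ∑ i, g i := by
  rw [Fintype.sum_equiv (Equiv.funSplitAt j ι) (fun m => g (m j)) (fun p => g p.1) (fun m => rfl)]
  rw [Fintype.sum_prod_type]
  rw [Finset.mul_sum]
  refine Finset.sum_congr rfl fun i _ => ?_
  simp only []
  rw [show (fun y : {l : κ // l ≠ j} → ι => g (i, y).1) = fun _ => g i from rfl]
  rw [Finset.sum_const, Finset.card_univ, nsmul_eq_mul]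
  congr 1
  rw [Fintype.card_fun, card_ne_aux j]
  push_cast
  ring

lemma sumFunB (j k : κ) (hkj : k ≠ j) (f : ι → ι → ℝ) :
    ∑ m : κ → ι, f (m j) (m k)
      = (Fintype.card ι : ℝ) ^ (Fintype.card κ - 2) * ∑ i, ∑ i', f i i' := by
  rw [Fintype.sum_equiv (Equiv.funSplitAt j ι) (fun m => f (m j) (m k))
    (fun p => f p.1 (p.2 ⟨k, hkj⟩)) (fun m => rfl)]
  rw [Fintype.sum_prod_type]
  rw [Finset.mul_sum]
  refine Finset.sum_congr rfl fun i _ => ?_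
  rw [sumFunA (⟨k, hkj⟩ : {l : κ // l ≠ j}) (fun i' => f i i')]
  rw [card_ne_aux j, Nat.sub_sub]


def fiberEquiv (j : κ) (i : ι) :
    {m : κ → ι // Function.Injective m ∧ m j = i} ≃
      {m' : {l : κ // l ≠ j} → {i' : ι // i' ≠ i} // Function.Injective m'} where
  toFun x := ⟨fun l => ⟨x.1 l.1, fun h => l.2 (x.2.1 (h.trans x.2.2.symm))⟩,
    fun l₁ l₂ h => Subtype.ext (x.2.1 (congrArg Subtype.val h))⟩
  invFun x := ⟨fun l => if h : l = j then i else (x.1 ⟨l, h⟩).1, by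
    constructor
    · intro l₁ l₂ h
      dsimp only at h
      by_cases h₁ : l₁ = j <;> by_cases h₂ : l₂ = j
      · exact h₁.trans h₂.symm
      · rw [dif_pos h₁, dif_neg h₂] at h; exact absurd h.symm (x.1 ⟨l₂, h₂⟩).2
      · rw [dif_neg h₁, dif_pos h₂] at h; exact absurd h (x.1 ⟨l₁, h₁⟩).2
      · rw [dif_neg h₁, dif_neg h₂] at h
        exact congrArg Subtype.val (x.2 (Subtype.ext h))
    · simp⟩
  left_inv x := Subtype.ext (funext fun l => by
    by_cases h : l = j
    · subst h; simp [x.2.2]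
    · simp [h])
  right_inv x := Subtype.ext (funext fun l => Subtype.ext (by simp [l.2]))

lemma card_fiber (j : κ) (i : ι) :
    ((Finset.univ.filter (fun m : κ → ι => Function.Injective m ∧ m j = i)).card)
      = (Fintype.card ι - 1).descFactorial (Fintype.card κ - 1) := by
  classical
  rw [← Fintype.card_of_subtype
    (p := fun m : κ → ι => Function.Injective m ∧ m j = i)
    (Finset.univ.filter (fun m : κ → ι => Function.Injective m ∧ m j = i)) (fun m => by simp)]
  rw [Fintype.card_congr ((fiberEquiv j i).trans
    (Equiv.subtypeInjectiveEquivEmbedding _ _))]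
  rw [Fintype.card_embedding_eq, card_ne_aux j]
  congr 1
  simp [Ne, Fintype.card_subtype_compl]

lemma sumInjA (j : κ) (g : ι → ℝ) :
    ∑ m ∈ Finset.univ.filter (fun m : κ → ι => Function.Injective m), g (m j)
      = ((Fintype.card ι - 1).descFactorial (Fintype.card κ - 1) : ℝ) * ∑ i, g i := by
  rw [← Finset.sum_fiberwise (Finset.univ.filter (fun m : κ → ι => Function.Injective m))
    (fun m => m j) (fun m => g (m j))]
  rw [Finset.mul_sum]
  refine Finset.sum_congr rfl fun i _ => ?_
  calc ∑ m ∈ (Finset.univ.filter (fun m : κ → ι => Function.Injective m)).filter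
        (fun m => m j = i), g (m j)
      = ∑ m ∈ (Finset.univ.filter (fun m : κ → ι => Function.Injective m)).filter
        (fun m => m j = i), g i :=
        Finset.sum_congr rfl fun m hm => by rw [(Finset.mem_filter.1 hm).2]
    _ = _ := by
        rw [Finset.sum_const, Finset.filter_filter, card_fiber j i, nsmul_eq_mul]

lemma sumInjB (j k : κ) (hkj : k ≠ j) (f : ι → ι → ℝ) :
    ∑ m ∈ Finset.univ.filter (fun m : κ → ι => Function.Injective m), f (m j) (m k)
      = ((Fintype.card ι - 2).descFactorial (Fintype.card κ - 2) : ℝ) *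
          ∑ i, ∑ i' ∈ Finset.univ.filter (fun i' => i' ≠ i), f i i' := by
  classical
  rw [← Finset.sum_fiberwise (Finset.univ.filter (fun m : κ → ι => Function.Injective m))
    (fun m => m j) (fun m => f (m j) (m k))]
  rw [Finset.mul_sum]
  refine Finset.sum_congr rfl fun i _ => ?_
  have h1 : ∑ m ∈ (Finset.univ.filter (fun m : κ → ι => Function.Injective m)).filter
        (fun m => m j = i), f (m j) (m k)
      = ∑ m ∈ Finset.univ.filter (fun m : κ → ι => Function.Injective m ∧ m j = i),
          f i (m k) := by
    rw [Finset.filter_filter]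
    exact Finset.sum_congr rfl fun m hm => by
      rw [((Finset.mem_filter.1 hm).2).2]
  rw [h1]
  rw [Finset.sum_subtype (p := fun m : κ → ι => Function.Injective m ∧ m j = i)
    (Finset.univ.filter (fun m : κ → ι => Function.Injective m ∧ m j = i))
    (fun m => by simp) (fun m => f i (m k))]
  rw [Fintype.sum_equiv (fiberEquiv j i)
    (fun x : {m : κ → ι // Function.Injective m ∧ m j = i} => f i (x.1 k))
    (fun x : {m' : {l : κ // l ≠ j} → {i' : ι // i' ≠ i} // Function.Injective m'} =>
      f i ((x.1 ⟨k, hkj⟩).1)) (fun x => rfl)]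
  rw [← Finset.sum_subtype
    (p := fun m' : {l : κ // l ≠ j} → {i' : ι // i' ≠ i} => Function.Injective m')
    (Finset.univ.filter
      (fun m' : {l : κ // l ≠ j} → {i' : ι // i' ≠ i} => Function.Injective m'))
    (fun m => by simp) (fun m' => f i ((m' ⟨k, hkj⟩).1))]
  rw [sumInjA (⟨k, hkj⟩ : {l : κ // l ≠ j}) (fun i' : {i' : ι // i' ≠ i} => f i i'.1)]
  rw [← Finset.sum_subtype (p := fun i' : ι => i' ≠ i)
    (Finset.univ.filter (fun i' : ι => i' ≠ i))
    (fun i' => by simp) (fun i' => f i i')]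
  rw [card_ne_aux i, card_ne_aux j, Nat.sub_sub, Nat.sub_sub]


lemma pointwise_sq (M : ℕ) (hM : 1 ≤ M) (a : ι → ℝ) (y : ℝ)
    (m : Fin M → ι) :
    (y - 1 / (M : ℝ) * ∑ j, a (m j)) ^ 2
      = 2 / (M : ℝ) ^ 2 * ∑ j : Fin M, ∑ k : Fin M, (y - (a (m j) + a (m k)) / 2) ^ 2
        - 1 / (M : ℝ) * ∑ j : Fin M, (y - a (m j)) ^ 2 := by
  have hM0 : (M : ℝ) ≠ 0 := Nat.cast_ne_zero.2 (by omega)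
  have hT : y - 1 / (M : ℝ) * ∑ j, a (m j) = 1 / (M : ℝ) * ∑ j : Fin M, (y - a (m j)) := by
    rw [Finset.sum_sub_distrib, Finset.sum_const, Finset.card_univ, Fintype.card_fin,
      nsmul_eq_mul]
    field_simp
  have h1 : ∑ j : Fin M, ∑ k : Fin M, (y - (a (m j) + a (m k)) / 2) ^ 2
      = ((M : ℝ) * ∑ j : Fin M, (y - a (m j)) ^ 2 + (∑ j : Fin M, (y - a (m j))) ^ 2) / 2 := by
    have e1 : ∑ j : Fin M, ∑ k : Fin M, (y - (a (m j) + a (m k)) / 2) ^ 2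
        = ∑ j : Fin M, ∑ k : Fin M, ((y - a (m j)) ^ 2 / 4 + (y - a (m k)) ^ 2 / 4
            + (y - a (m j)) * (y - a (m k)) / 2) :=
      Finset.sum_congr rfl fun j _ => Finset.sum_congr rfl fun k _ => by ring
    rw [e1, sq (∑ j : Fin M, (y - a (m j))), Finset.sum_mul_sum]
    simp only [Finset.sum_add_distrib, ← Finset.sum_div, ← Finset.mul_sum, ← Finset.sum_mul,
      Finset.sum_const, Finset.card_univ, Fintype.card_fin, nsmul_eq_mul]
    ring
  rw [hT, h1]
  field_simp
  ring

lemma aggFun2 (M : ℕ) (hM : 1 ≤ M) (c : ι → ι → ℝ) :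
    ∑ m : Fin M → ι, ∑ j : Fin M, ∑ k : Fin M, c (m j) (m k)
      = (M : ℝ) * ((Fintype.card ι : ℝ) ^ (M - 1) * ∑ i, c i i)
        + (M : ℝ) * ((M : ℝ) - 1) *
            ((Fintype.card ι : ℝ) ^ (M - 2) * ∑ i, ∑ i', c i i') := by
  calc ∑ m : Fin M → ι, ∑ j : Fin M, ∑ k : Fin M, c (m j) (m k)
      = ∑ j : Fin M, ∑ m : Fin M → ι, ∑ k : Fin M, c (m j) (m k) := Finset.sum_comm
    _ = ∑ j : Fin M, ∑ k : Fin M, ∑ m : Fin M → ι, c (m j) (m k) :=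
        Finset.sum_congr rfl fun j _ => Finset.sum_comm
    _ = ∑ _j : Fin M, ((Fintype.card ι : ℝ) ^ (M - 1) * ∑ i, c i i
          + ((M : ℝ) - 1) * ((Fintype.card ι : ℝ) ^ (M - 2) * ∑ i, ∑ i', c i i')) := by
        refine Finset.sum_congr rfl fun j _ => ?_
        rw [← Finset.add_sum_erase _ _ (Finset.mem_univ j)]
        congr 1
        · calc ∑ m : Fin M → ι, c (m j) (m j)
              = ∑ m : Fin M → ι, (fun i => c i i) (m j) := rfl
            _ = _ := by rw [sumFunA j (fun i => c i i), Fintype.card_fin]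
        · calc ∑ k ∈ Finset.univ.erase j, ∑ m : Fin M → ι, c (m j) (m k)
              = ∑ k ∈ Finset.univ.erase j,
                  ((Fintype.card ι : ℝ) ^ (M - 2) * ∑ i, ∑ i', c i i') := by
                refine Finset.sum_congr rfl fun k hk => ?_
                rw [sumFunB j k (Finset.ne_of_mem_erase hk), Fintype.card_fin]
            _ = _ := by
                rw [Finset.sum_const, Finset.card_erase_of_mem (Finset.mem_univ j),
                  Finset.card_univ, Fintype.card_fin, nsmul_eq_mul, Nat.cast_sub hM,
                  Nat.cast_one]
    _ = _ := by
        rw [Finset.sum_const, Finset.card_univ, Fintype.card_fin, nsmul_eq_mul]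
        ring

lemma aggFun1 (M : ℕ) (hM : 1 ≤ M) (g : ι → ℝ) :
    ∑ m : Fin M → ι, ∑ j : Fin M, g (m j)
      = (M : ℝ) * ((Fintype.card ι : ℝ) ^ (M - 1) * ∑ i, g i) := by
  calc ∑ m : Fin M → ι, ∑ j : Fin M, g (m j)
      = ∑ j : Fin M, ∑ m : Fin M → ι, g (m j) := Finset.sum_comm
    _ = ∑ _j : Fin M, ((Fintype.card ι : ℝ) ^ (M - 1) * ∑ i, g i) := by
        refine Finset.sum_congr rfl fun j _ => ?_
        rw [sumFunA j g, Fintype.card_fin]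
    _ = _ := by
        rw [Finset.sum_const, Finset.card_univ, Fintype.card_fin, nsmul_eq_mul]

lemma aggInj2 (M : ℕ) (hM : 1 ≤ M) (c : ι → ι → ℝ) :
    ∑ m ∈ Finset.univ.filter (fun m : Fin M → ι => Function.Injective m),
        ∑ j : Fin M, ∑ k : Fin M, c (m j) (m k)
      = (M : ℝ) * (((Fintype.card ι - 1).descFactorial (M - 1) : ℝ) * ∑ i, c i i)
        + (M : ℝ) * ((M : ℝ) - 1) *
            (((Fintype.card ι - 2).descFactorial (M - 2) : ℝ) *
              ∑ i, ∑ i' ∈ Finset.univ.filter (fun i' => i' ≠ i), c i i') := by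
  calc ∑ m ∈ Finset.univ.filter (fun m : Fin M → ι => Function.Injective m),
        ∑ j : Fin M, ∑ k : Fin M, c (m j) (m k)
      = ∑ j : Fin M, ∑ m ∈ Finset.univ.filter (fun m : Fin M → ι => Function.Injective m),
          ∑ k : Fin M, c (m j) (m k) := Finset.sum_comm
    _ = ∑ j : Fin M, ∑ k : Fin M,
          ∑ m ∈ Finset.univ.filter (fun m : Fin M → ι => Function.Injective m),
            c (m j) (m k) :=
        Finset.sum_congr rfl fun j _ => Finset.sum_comm
    _ = ∑ _j : Fin M, (((Fintype.card ι - 1).descFactorial (M - 1) : ℝ) * ∑ i, c i i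
          + ((M : ℝ) - 1) * (((Fintype.card ι - 2).descFactorial (M - 2) : ℝ) *
              ∑ i, ∑ i' ∈ Finset.univ.filter (fun i' => i' ≠ i), c i i')) := by
        refine Finset.sum_congr rfl fun j _ => ?_
        rw [← Finset.add_sum_erase _ _ (Finset.mem_univ j)]
        congr 1
        · calc ∑ m ∈ Finset.univ.filter (fun m : Fin M → ι => Function.Injective m),
                c (m j) (m j)
              = ∑ m ∈ Finset.univ.filter (fun m : Fin M → ι => Function.Injective m),
                (fun i => c i i) (m j) := rfl
            _ = _ := by rw [sumInjA j (fun i => c i i), Fintype.card_fin]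
        · calc ∑ k ∈ Finset.univ.erase j,
                ∑ m ∈ Finset.univ.filter (fun m : Fin M → ι => Function.Injective m),
                  c (m j) (m k)
              = ∑ k ∈ Finset.univ.erase j,
                  (((Fintype.card ι - 2).descFactorial (M - 2) : ℝ) *
                    ∑ i, ∑ i' ∈ Finset.univ.filter (fun i' => i' ≠ i), c i i') := by
                refine Finset.sum_congr rfl fun k hk => ?_
                rw [sumInjB j k (Finset.ne_of_mem_erase hk), Fintype.card_fin]
            _ = _ := by
                rw [Finset.sum_const, Finset.card_erase_of_mem (Finset.mem_univ j),
                  Finset.card_univ, Fintype.card_fin, nsmul_eq_mul, Nat.cast_sub hM,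
                  Nat.cast_one]
    _ = _ := by
        rw [Finset.sum_const, Finset.card_univ, Fintype.card_fin, nsmul_eq_mul]
        ring

lemma aggInj1 (M : ℕ) (hM : 1 ≤ M) (g : ι → ℝ) :
    ∑ m ∈ Finset.univ.filter (fun m : Fin M → ι => Function.Injective m),
        ∑ j : Fin M, g (m j)
      = (M : ℝ) * (((Fintype.card ι - 1).descFactorial (M - 1) : ℝ) * ∑ i, g i) := by
  calc ∑ m ∈ Finset.univ.filter (fun m : Fin M → ι => Function.Injective m),
        ∑ j : Fin M, g (m j)
      = ∑ j : Fin M, ∑ m ∈ Finset.univ.filter (fun m : Fin M → ι => Function.Injective m),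
          g (m j) := Finset.sum_comm
    _ = ∑ _j : Fin M, (((Fintype.card ι - 1).descFactorial (M - 1) : ℝ) * ∑ i, g i) := by
        refine Finset.sum_congr rfl fun j _ => ?_
        rw [sumInjA j g, Fintype.card_fin]
    _ = _ := by
        rw [Finset.sum_const, Finset.card_univ, Fintype.card_fin, nsmul_eq_mul]

end BaggingAux

lemma desc_one_aux (N M : ℕ) (hM : 1 ≤ M) (hMN : M ≤ N) :
    (N - M).factorial * ((N - 1).descFactorial (M - 1) * N) = N.factorial := by
  have h2 : N.descFactorial M = N * (N - 1).descFactorial (M - 1) := by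
    obtain ⟨n, rfl⟩ : ∃ n, N = n + 1 := ⟨N - 1, by omega⟩
    obtain ⟨k, rfl⟩ : ∃ k, M = k + 1 := ⟨M - 1, by omega⟩
    simpa using Nat.succ_descFactorial_succ n k
  have h1 := Nat.factorial_mul_descFactorial hMN
  rw [h2] at h1
  rw [← h1]; ring

lemma desc_two_aux (N M : ℕ) (hM : 2 ≤ M) (hMN : M ≤ N) :
    (N - M).factorial * ((N - 2).descFactorial (M - 2) * (N * (N - 1))) = N.factorial := by
  have h2 : N.descFactorial M = N * ((N - 1) * (N - 2).descFactorial (M - 2)) := by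
    obtain ⟨n, rfl⟩ : ∃ n, N = n + 2 := ⟨N - 2, by omega⟩
    obtain ⟨k, rfl⟩ : ∃ k, M = k + 2 := ⟨M - 2, by omega⟩
    have a1 := Nat.succ_descFactorial_succ (n + 1) (k + 1)
    have a2 := Nat.succ_descFactorial_succ n k
    rw [show n + 2 - 1 = n + 1 from rfl, show n + 2 - 2 = n from rfl,
      show k + 2 - 2 = k from rfl]
    rw [show n + 2 = n + 1 + 1 from rfl, show k + 2 = k + 1 + 1 from rfl, a1, a2]
  have h1 := Nat.factorial_mul_descFactorial hMN
  rw [h2] at h1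
  rw [← h1]; ring

/-- The data-conditional squared risk of the `M`-bagged predictor is a linear combination
of the risks for `M = 1` and `M = 2`, for sampling both with and without replacement. -/
theorem bagged_risk_linear_combination
    {ι : Type*} [Fintype ι] [DecidableEq ι] (N : ℕ) (hN : N = Fintype.card ι)
    (a : ι → ℝ) (y : ℝ) (R1 R2WR R2WOR : ℝ)
    (hR1 : R1 = (1 / (N : ℝ)) * ∑ I : ι, (y - a I) ^ 2)
    (hR2WR : R2WR = (1 / (N : ℝ) ^ 2) * ∑ I : ι, ∑ J : ι, (y - (a I + a J) / 2) ^ 2)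
    (hR2WOR : R2WOR = (1 / ((N : ℝ) * ((N : ℝ) - 1))) *
        ∑ I : ι, ∑ J ∈ Finset.univ.filter (fun J : ι => J ≠ I), (y - (a I + a J) / 2) ^ 2)
    (M : ℕ) (hM : 1 ≤ M) (hN1 : 1 ≤ N) :
    (((N : ℝ) ^ M)⁻¹ *
        ∑ m : Fin M → ι, (y - (1 / (M : ℝ)) * ∑ j : Fin M, a (m j)) ^ 2
      = -(1 - 2 / (M : ℝ)) * R1 + 2 * (1 - 1 / (M : ℝ)) * R2WR)
    ∧ (2 ≤ N → M ≤ N →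
        (((N - M).factorial : ℝ) / (N.factorial : ℝ)) *
          ∑ m ∈ Finset.univ.filter (fun m : Fin M → ι => Function.Injective m),
            (y - (1 / (M : ℝ)) * ∑ j : Fin M, a (m j)) ^ 2
        = -(1 - 2 / (M : ℝ)) * R1 + 2 * (1 - 1 / (M : ℝ)) * R2WOR) := by
  have hM0 : (M : ℝ) ≠ 0 := Nat.cast_ne_zero.2 (by omega)
  subst hN
  subst hR1
  subst hR2WR
  subst hR2WOR
  have hN0 : (Fintype.card ι : ℝ) ≠ 0 := Nat.cast_ne_zero.2 (by omega)
  constructor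
  · have hexp : ∑ m : Fin M → ι, (y - 1 / (M : ℝ) * ∑ j : Fin M, a (m j)) ^ 2
        = 2 / (M : ℝ) ^ 2 *
            ∑ m : Fin M → ι, ∑ j : Fin M, ∑ k : Fin M, (y - (a (m j) + a (m k)) / 2) ^ 2
          - 1 / (M : ℝ) * ∑ m : Fin M → ι, ∑ j : Fin M, (y - a (m j)) ^ 2 := by
      rw [Finset.mul_sum, Finset.mul_sum, ← Finset.sum_sub_distrib]
      exact Finset.sum_congr rfl fun m _ => pointwise_sq M hM a y m
    have e1 := aggFun1 (ι := ι) M hM (fun i => (y - a i) ^ 2)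
    have e2 := aggFun2 (ι := ι) M hM (fun i i' => (y - (a i + a i') / 2) ^ 2)
    have hdiag : ∑ i : ι, (y - (a i + a i) / 2) ^ 2 = ∑ i : ι, (y - a i) ^ 2 :=
      Finset.sum_congr rfl fun i _ => by ring
    rw [hdiag] at e2
    rw [hexp, e1, e2]
    obtain ⟨M', rfl⟩ : ∃ M', M = M' + 1 := ⟨M - 1, by omega⟩
    cases M' with
    | zero =>
      norm_num
      exact Or.inl (by ring)
    | succ M'' =>
      simp only [show M'' + 1 + 1 - 1 = M'' + 1 from rfl, show M'' + 1 + 1 - 2 = M'' from rfl]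
      rw [show (Fintype.card ι : ℝ) ^ (M'' + 1 + 1)
          = (Fintype.card ι : ℝ) ^ M'' * (Fintype.card ι : ℝ) * (Fintype.card ι : ℝ) by
        rw [pow_succ, pow_succ],
        show (Fintype.card ι : ℝ) ^ (M'' + 1)
          = (Fintype.card ι : ℝ) ^ M'' * (Fintype.card ι : ℝ) by rw [pow_succ]]
      push_cast
      field_simp
      ring
  · intro hN2 hMN
    have hexp : ∑ m ∈ Finset.univ.filter (fun m : Fin M → ι => Function.Injective m),
          (y - 1 / (M : ℝ) * ∑ j : Fin M, a (m j)) ^ 2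
        = 2 / (M : ℝ) ^ 2 *
            ∑ m ∈ Finset.univ.filter (fun m : Fin M → ι => Function.Injective m),
              ∑ j : Fin M, ∑ k : Fin M, (y - (a (m j) + a (m k)) / 2) ^ 2
          - 1 / (M : ℝ) *
            ∑ m ∈ Finset.univ.filter (fun m : Fin M → ι => Function.Injective m),
              ∑ j : Fin M, (y - a (m j)) ^ 2 := by
      rw [Finset.mul_sum, Finset.mul_sum, ← Finset.sum_sub_distrib]
      exact Finset.sum_congr rfl fun m _ => pointwise_sq M hM a y m
    have e1 := aggInj1 (ι := ι) M hM (fun i => (y - a i) ^ 2)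
    have e2 := aggInj2 (ι := ι) M hM (fun i i' => (y - (a i + a i') / 2) ^ 2)
    have hdiag : ∑ i : ι, (y - (a i + a i) / 2) ^ 2 = ∑ i : ι, (y - a i) ^ 2 :=
      Finset.sum_congr rfl fun i _ => by ring
    rw [hdiag] at e2
    rw [hexp, e1, e2]
    have hfac0 : ((Fintype.card ι).factorial : ℝ) ≠ 0 :=
      Nat.cast_ne_zero.2 (Nat.factorial_pos _).ne'
    have hNm1 : ((Fintype.card ι : ℝ) - 1) ≠ 0 := by
      have : (2 : ℝ) ≤ (Fintype.card ι : ℝ) := by exact_mod_cast hN2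
      intro h; nlinarith
    set W := (((Fintype.card ι - M).factorial : ℕ) : ℝ) / (((Fintype.card ι).factorial : ℕ) : ℝ)
      with hW
    set A1 := (((Fintype.card ι - 1).descFactorial (M - 1) : ℕ) : ℝ) with hA1
    set A2 := (((Fintype.card ι - 2).descFactorial (M - 2) : ℕ) : ℝ) with hA2
    set Dv := ∑ i : ι, (y - a i) ^ 2 with hDv
    set Cv := ∑ i : ι, ∑ i' ∈ Finset.univ.filter (fun i' : ι => i' ≠ i),
      (y - (a i + a i') / 2) ^ 2 with hCv
    have hw1 : W * A1 = 1 / (Fintype.card ι : ℝ) := by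
      rw [hW, hA1, div_mul_eq_mul_div, div_eq_div_iff hfac0 hN0, one_mul]
      have h := congrArg (Nat.cast (R := ℝ)) (desc_one_aux (Fintype.card ι) M hM hMN)
      push_cast at h
      linear_combination h
    have hw2 : ((M : ℝ) - 1) * (W * A2)
        = ((M : ℝ) - 1) * (1 / ((Fintype.card ι : ℝ) * ((Fintype.card ι : ℝ) - 1))) := by
      rcases Nat.lt_or_ge M 2 with hM1 | hM2
      · have : M = 1 := by omega
        subst this
        norm_num
      · have hprod : (Fintype.card ι : ℝ) * ((Fintype.card ι : ℝ) - 1) ≠ 0 :=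
          mul_ne_zero hN0 hNm1
        have h := congrArg (Nat.cast (R := ℝ)) (desc_two_aux (Fintype.card ι) M hM2 hMN)
        push_cast [Nat.cast_sub (show 1 ≤ Fintype.card ι by omega)] at h
        congr 1
        rw [hW, hA2, div_mul_eq_mul_div, div_eq_div_iff hfac0 hprod, one_mul]
        linear_combination h
    calc W * (2 / (M : ℝ) ^ 2 * ((M : ℝ) * (A1 * Dv)
            + (M : ℝ) * ((M : ℝ) - 1) * (A2 * Cv))
          - 1 / (M : ℝ) * ((M : ℝ) * (A1 * Dv)))
        = (2 / (M : ℝ) - 1) * (W * A1) * Dv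
            + 2 / (M : ℝ) * (((M : ℝ) - 1) * (W * A2)) * Cv := by
          field_simp
          ring
      _ = (2 / (M : ℝ) - 1) * (1 / (Fintype.card ι : ℝ)) * Dv
            + 2 / (M : ℝ) * (((M : ℝ) - 1) *
              (1 / ((Fintype.card ι : ℝ) * ((Fintype.card ι : ℝ) - 1)))) * Cv := by
          rw [hw1, hw2]
      _ = -(1 - 2 / (M : ℝ)) * (1 / (Fintype.card ι : ℝ) * Dv)
            + 2 * (1 - 1 / (M : ℝ)) *
              (1 / ((Fintype.card ι : ℝ) * ((Fintype.card ι : ℝ) - 1)) * Cv) := by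
          field_simp
          ring
end

section
/- Let (𝒳, 𝒜) be a measurable space, P a probability measure on 𝒳 × ℝ, M ≥ 2 an integer, and g₁, …, g_M : 𝒳 → ℝ measurable functions such that (x, y) ↦ (y − g_ℓ(x))² is P-integrable for each ℓ. Define R_M = ∫ ( y − (1/M) ∑_{ℓ=1}^M g_ℓ(x) )² dP(x,y), R₁(ℓ) = ∫ (y − g_ℓ(x))² dP(x,y), and R₂(i,j) = ∫ ( y − (g_i(x) + g_j(x))/2 )² dP(x,y). Then for all real numbers b₁, b₂: | R_M − [ (2b₂ − b₁) + 2(b₁ − b₂)/M ] | ≤ | (1/M) ∑_{ℓ=1}^M R₁(ℓ) − b₁ | + 2 | (1/(M(M−1))) ∑_{i ≠ j} R₂(i,j) − b₂ |. (Bound on the subsample-conditional squared prediction risk of the bagged predictor with M bags in terms of the one-bag and two-bag risks.) -/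
open MeasureTheory



lemma pair_sum_sq {M : ℕ} (a : Fin M → ℝ) :
    ∑ i : Fin M, ∑ j ∈ Finset.univ.filter (fun j : Fin M => j ≠ i), (a i + a j) ^ 2
      = (2 * (M : ℝ) - 4) * (∑ ℓ : Fin M, (a ℓ) ^ 2) + 2 * (∑ ℓ : Fin M, a ℓ) ^ 2 := by
  have h1 : ∀ i : Fin M, ∑ j ∈ Finset.univ.filter (fun j : Fin M => j ≠ i), (a i + a j) ^ 2
      = (∑ j : Fin M, (a i + a j) ^ 2) - (a i + a i) ^ 2 := by
    intro i
    rw [Finset.filter_ne', Finset.sum_erase_eq_sub (Finset.mem_univ i)]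
  have h2 : ∀ i : Fin M, ∑ j : Fin M, (a i + a j) ^ 2
      = (M : ℝ) * (a i) ^ 2 + 2 * a i * (∑ ℓ : Fin M, a ℓ) + ∑ ℓ : Fin M, (a ℓ) ^ 2 := by
    intro i
    have : ∀ j ∈ Finset.univ, (a i + a j) ^ 2 = (a i) ^ 2 + 2 * a i * a j + (a j) ^ 2 :=
      fun j _ => by ring
    rw [Finset.sum_congr rfl this, Finset.sum_add_distrib, Finset.sum_add_distrib,
      Finset.sum_const, ← Finset.mul_sum]
    simp [Finset.card_univ]
  simp only [h1, h2, Finset.sum_sub_distrib, Finset.sum_add_distrib, Finset.sum_const,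
    Finset.card_univ, Fintype.card_fin, nsmul_eq_mul]
  rw [← Finset.sum_mul, ← Finset.mul_sum]
  have hsq : ∀ i ∈ Finset.univ, (a i + a i) ^ 2 = 4 * (a i) ^ 2 := fun i _ => by ring
  rw [Finset.sum_congr rfl hsq]
  simp only [← Finset.mul_sum]
  ring

lemma pt_id {M : ℕ} (hM0 : (M : ℝ) ≠ 0) (a : Fin M → ℝ) :
    ((1 / (M : ℝ)) * ∑ ℓ : Fin M, a ℓ) ^ 2
      = ((2 - (M : ℝ)) / (M : ℝ) ^ 2) * ∑ ℓ : Fin M, (a ℓ) ^ 2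
        + (2 / (M : ℝ) ^ 2) * ∑ i : Fin M, ∑ j ∈ Finset.univ.filter (fun j : Fin M => j ≠ i),
            ((a i + a j) / 2) ^ 2 := by
  have h4 : ∀ i : Fin M, ∑ j ∈ Finset.univ.filter (fun j : Fin M => j ≠ i),
      ((a i + a j) / 2) ^ 2
      = (∑ j ∈ Finset.univ.filter (fun j : Fin M => j ≠ i), (a i + a j) ^ 2) / 4 := by
    intro i
    rw [Finset.sum_div]
    exact Finset.sum_congr rfl fun j _ => by ring
  rw [Finset.sum_congr rfl fun i _ => h4 i, ← Finset.sum_div, pair_sum_sq]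
  field_simp
  ring

/-- Bound on the subsample-conditional squared prediction risk of the bagged predictor
with `M` bags in terms of the one-bag and two-bag risks. -/
theorem bagged_risk_bound_via_one_and_two_bags
    {X : Type*} [MeasurableSpace X] (P : Measure (X × ℝ)) [IsProbabilityMeasure P]
    (M : ℕ) (hM : 2 ≤ M) (g : Fin M → X → ℝ)
    (hmeas : ∀ ℓ, Measurable (g ℓ))
    (hint : ∀ ℓ, Integrable (fun p : X × ℝ => (p.2 - g ℓ p.1) ^ 2) P)
    (b₁ b₂ : ℝ) :
    |(∫ p : X × ℝ, (p.2 - (1 / (M : ℝ)) * ∑ ℓ : Fin M, g ℓ p.1) ^ 2 ∂P)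
        - ((2 * b₂ - b₁) + 2 * (b₁ - b₂) / (M : ℝ))|
      ≤ |(1 / (M : ℝ)) * ∑ ℓ : Fin M, (∫ p : X × ℝ, (p.2 - g ℓ p.1) ^ 2 ∂P) - b₁|
        + 2 * |(1 / ((M : ℝ) * ((M : ℝ) - 1))) *
            ∑ i : Fin M, ∑ j ∈ Finset.univ.filter (fun j : Fin M => j ≠ i),
              (∫ p : X × ℝ, (p.2 - (g i p.1 + g j p.1) / 2) ^ 2 ∂P) - b₂| := by
  have hM2 : (2 : ℝ) ≤ (M : ℝ) := by exact_mod_cast hM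
  have hM0 : (0 : ℝ) < (M : ℝ) := by linarith
  have hMne : (M : ℝ) ≠ 0 := ne_of_gt hM0
  have hM1 : (M : ℝ) - 1 ≠ 0 := ne_of_gt (by linarith)
  have hmeasPair : ∀ i j : Fin M,
      Measurable (fun p : X × ℝ => (p.2 - (g i p.1 + g j p.1) / 2) ^ 2) := fun i j =>
    (measurable_snd.sub ((((hmeas i).comp measurable_fst).add
      ((hmeas j).comp measurable_fst)).div_const 2)).pow_const 2
  have hintPair : ∀ i j : Fin M,
      Integrable (fun p : X × ℝ => (p.2 - (g i p.1 + g j p.1) / 2) ^ 2) P := by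
    intro i j
    refine ((((hint i).add (hint j)).div_const 2)).mono'
      ((hmeasPair i j).aestronglyMeasurable) ?_
    filter_upwards with p
    simp only [Pi.add_apply, Real.norm_eq_abs]
    rw [abs_of_nonneg (sq_nonneg _)]
    nlinarith [sq_nonneg ((p.2 - g i p.1) - (p.2 - g j p.1))]
  have hfun : (fun p : X × ℝ => (p.2 - (1 / (M : ℝ)) * ∑ ℓ : Fin M, g ℓ p.1) ^ 2)
      = fun p : X × ℝ =>
        ((2 - (M : ℝ)) / (M : ℝ) ^ 2) * ∑ ℓ : Fin M, (p.2 - g ℓ p.1) ^ 2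
          + (2 / (M : ℝ) ^ 2) * ∑ i : Fin M,
              ∑ j ∈ Finset.univ.filter (fun j : Fin M => j ≠ i),
                (p.2 - (g i p.1 + g j p.1) / 2) ^ 2 := by
    funext p
    have h1 : p.2 - (1 / (M : ℝ)) * ∑ ℓ : Fin M, g ℓ p.1
        = (1 / (M : ℝ)) * ∑ ℓ : Fin M, (p.2 - g ℓ p.1) := by
      rw [Finset.sum_sub_distrib, Finset.sum_const, Finset.card_univ, Fintype.card_fin,
        nsmul_eq_mul]
      field_simp
    rw [h1, pt_id hMne (fun ℓ => p.2 - g ℓ p.1)]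
    congr 1
    congr 1
    exact Finset.sum_congr rfl fun i _ => Finset.sum_congr rfl fun j _ => by ring
  have hintSum : Integrable (fun p : X × ℝ => ∑ ℓ : Fin M, (p.2 - g ℓ p.1) ^ 2) P :=
    integrable_finset_sum _ fun ℓ _ => hint ℓ
  have hintSum2 : Integrable (fun p : X × ℝ => ∑ i : Fin M,
      ∑ j ∈ Finset.univ.filter (fun j : Fin M => j ≠ i),
        (p.2 - (g i p.1 + g j p.1) / 2) ^ 2) P :=
    integrable_finset_sum _ fun i _ => integrable_finset_sum _ fun j _ => hintPair i j
  have key : (∫ p : X × ℝ, (p.2 - (1 / (M : ℝ)) * ∑ ℓ : Fin M, g ℓ p.1) ^ 2 ∂P)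
      = ((2 - (M : ℝ)) / (M : ℝ) ^ 2) * ∑ ℓ : Fin M, (∫ p : X × ℝ, (p.2 - g ℓ p.1) ^ 2 ∂P)
        + (2 / (M : ℝ) ^ 2) * ∑ i : Fin M,
            ∑ j ∈ Finset.univ.filter (fun j : Fin M => j ≠ i),
              (∫ p : X × ℝ, (p.2 - (g i p.1 + g j p.1) / 2) ^ 2 ∂P) := by
    rw [hfun, integral_add (hintSum.const_mul _) (hintSum2.const_mul _),
      integral_const_mul, integral_const_mul,
      integral_finset_sum _ (fun ℓ _ => hint ℓ),
      integral_finset_sum _ (fun i _ => integrable_finset_sum _ fun j _ => hintPair i j)]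
    congr 1
    congr 1
    exact Finset.sum_congr rfl fun i _ => integral_finset_sum _ fun j _ => hintPair i j
  rw [key]
  set T := ∑ ℓ : Fin M, (∫ p : X × ℝ, (p.2 - g ℓ p.1) ^ 2 ∂P) with hT
  set S := ∑ i : Fin M, ∑ j ∈ Finset.univ.filter (fun j : Fin M => j ≠ i),
      (∫ p : X × ℝ, (p.2 - (g i p.1 + g j p.1) / 2) ^ 2 ∂P) with hS
  set u := (1 / (M : ℝ)) * T - b₁ with hu
  set v := (1 / ((M : ℝ) * ((M : ℝ) - 1))) * S - b₂ with hv
  have hdecomp : ((2 - (M : ℝ)) / (M : ℝ) ^ 2) * T + (2 / (M : ℝ) ^ 2) * S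
      - ((2 * b₂ - b₁) + 2 * (b₁ - b₂) / (M : ℝ))
      = ((2 - (M : ℝ)) / (M : ℝ)) * u + (2 * ((M : ℝ) - 1) / (M : ℝ)) * v := by
    rw [hu, hv]
    field_simp
    ring
  rw [hdecomp]
  have habs : |((2 - (M : ℝ)) / (M : ℝ)) * u + (2 * ((M : ℝ) - 1) / (M : ℝ)) * v|
      ≤ |(2 - (M : ℝ)) / (M : ℝ)| * |u| + |2 * ((M : ℝ) - 1) / (M : ℝ)| * |v| := by
    refine (abs_add_le _ _).trans ?_
    rw [abs_mul, abs_mul]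
  have h1 : |(2 - (M : ℝ)) / (M : ℝ)| ≤ 1 := by
    rw [abs_div, abs_of_pos hM0, div_le_one hM0, abs_le]
    constructor <;> linarith
  have h2 : |2 * ((M : ℝ) - 1) / (M : ℝ)| ≤ 2 := by
    rw [abs_div, abs_of_pos hM0, div_le_iff₀ hM0, abs_of_nonneg (by linarith)]
    linarith
  nlinarith [abs_nonneg u, abs_nonneg v, habs, h1, h2]
end

section
/- Let ι be a finite nonempty index set with N elements, a : ι → ℝ, and let g : ℝ → ℝ be convex. For M ≥ 1 define r_M = N^{-M} ∑_{m : Fin M → ι} g( (1/M) ∑_j a_{m(j)} ) (the expected loss of the M-bagged prediction under simple random sampling with replacement), and, for 1 ≤ M ≤ N with N ≥ 2, define r_M^{WOR} = ((N−M)!/N!) ∑_{m : Fin M → ι, m injective} g( (1/M) ∑_j a_{m(j)} ). Then: (i) r_{M+1} ≤ r_M for every M ≥ 1; (ii) r_{M+1}^{WOR} ≤ r_M^{WOR} for every 1 ≤ M ≤ N−1; and (iii) g(ā) ≤ r_M and g(ā) ≤ r_M^{WOR} for every admissible M, where ā = (1/N) ∑_{I∈ι} a_I. (For a loss that is convex in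 the prediction, the risk of the bagged predictor is non-increasing in the number of bags M and bounded below by the loss of the fully aggregated predictor.) -/
open Finset

/-- Jensen's inequality for uniform averages over a nonempty finset. -/
lemma bag_jensen {α : Type*} {g : ℝ → ℝ} (hg : ConvexOn ℝ Set.univ g) (t : Finset α)
    (ht : t.Nonempty) (p : α → ℝ) :
    g ((∑ i ∈ t, p i) / t.card) ≤ (∑ i ∈ t, g (p i)) / t.card := by
  have hc : (0:ℝ) < t.card := by exact_mod_cast ht.card_pos
  have h := hg.map_sum_le (t := t) (w := fun _ => (t.card:ℝ)⁻¹) (p := p)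
    (fun i _ => by positivity) (by rw [Finset.sum_const, nsmul_eq_mul]; field_simp)
    (fun i _ => trivial)
  simpa [smul_eq_mul, ← Finset.mul_sum, div_eq_inv_mul] using h

/-- Splitting a sum over `Fin (M+1) → ι` into the value at `k` and the rest. -/
lemma bag_sum_insertNth {ι : Type*} [Fintype ι] (M : ℕ) (k : Fin (M+1))
    (G : (Fin (M+1) → ι) → ℝ) :
    ∑ m : Fin (M+1) → ι, G m = ∑ x : ι, ∑ m' : Fin M → ι, G (k.insertNth x m') := by
  rw [← Fintype.sum_equiv (Fin.insertNthEquiv (fun _ => ι) k)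
    (fun p => G (k.insertNth p.1 p.2)) G (fun p => rfl), Fintype.sum_prod_type]

lemma bag_injective_insertNth_iff {ι : Type*} {M : ℕ} (k : Fin (M+1)) (x : ι)
    (m' : Fin M → ι) :
    Function.Injective (k.insertNth x m') ↔ Function.Injective m' ∧ ∀ j, m' j ≠ x := by
  constructor
  · intro h
    refine ⟨fun i j hij => ?_, fun j hj => ?_⟩
    · apply Fin.succAbove_right_injective (p := k)
      apply h
      simpa using hij
    · have heq : (k.insertNth x m' : Fin (M+1) → ι) (k.succAbove j)
          = (k.insertNth x m' : Fin (M+1) → ι) k := by simp [hj]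
      exact Fin.succAbove_ne k j (h heq)
  · rintro ⟨h1, h2⟩ i j hij
    rcases eq_or_ne i k with hi | hi
    · rcases eq_or_ne j k with hj2 | hj2
      · rw [hi, hj2]
      · exfalso
        obtain ⟨j', rfl⟩ := Fin.exists_succAbove_eq hj2
        rw [hi] at hij
        simp only [Fin.insertNth_apply_same, Fin.insertNth_apply_succAbove] at hij
        exact (h2 j') hij.symm
    · obtain ⟨i', rfl⟩ := Fin.exists_succAbove_eq hi
      rcases eq_or_ne j k with hj2 | hj2
      · exfalso
        rw [hj2] at hij
        simp only [Fin.insertNth_apply_same, Fin.insertNth_apply_succAbove] at hij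
        exact (h2 i') hij
      · obtain ⟨j', rfl⟩ := Fin.exists_succAbove_eq hj2
        simp only [Fin.insertNth_apply_succAbove] at hij
        exact congrArg k.succAbove (h1 hij)

/-- Summing a function of the restriction over injective maps. -/
lemma bag_sum_inj_comp {ι : Type*} [Fintype ι] [DecidableEq ι] {M : ℕ} (k : Fin (M+1))
    (F : (Fin M → ι) → ℝ) :
    ∑ m ∈ univ.filter (fun m : Fin (M+1) → ι => Function.Injective m),
        F (fun j => m (k.succAbove j))
      = ((Fintype.card ι - M : ℕ) : ℝ) *
        ∑ m ∈ univ.filter (fun m : Fin M → ι => Function.Injective m), F m := by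
  rw [Finset.sum_filter, Finset.sum_filter,
    bag_sum_insertNth M k
      (fun m => if Function.Injective m then F (fun j => m (k.succAbove j)) else 0),
    Finset.sum_comm, Finset.mul_sum]
  refine Finset.sum_congr rfl fun m' _ => ?_
  have hins : ∀ x : ι, (fun j => (k.insertNth x m' : Fin (M+1) → ι) (k.succAbove j)) = m' := by
    intro x; funext j; simp
  by_cases hm : Function.Injective m'
  · simp only [hm, if_true]
    have hterm : ∀ x : ι,
        (if Function.Injective (k.insertNth x m')
          then F (fun j => (k.insertNth x m' : Fin (M+1) → ι) (k.succAbove j)) else 0)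
        = if x ∈ (univ : Finset ι) \ Finset.image m' univ then F m' else 0 := by
      intro x
      rw [hins x]
      congr 1
      rw [eq_iff_iff, bag_injective_insertNth_iff]
      simp [hm]
    rw [Finset.sum_congr rfl fun x _ => hterm x, Finset.sum_ite_mem,
      Finset.univ_inter, Finset.sum_const, Finset.card_sdiff_of_subset (Finset.subset_univ _),
      Finset.card_univ, Finset.card_image_of_injective _ hm, Finset.card_univ,
      Fintype.card_fin, nsmul_eq_mul]
  · simp only [hm, if_false, mul_zero]
    refine Finset.sum_eq_zero fun x _ => ?_
    rw [if_neg]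
    intro hcon
    exact hm ((bag_injective_insertNth_iff k x m').1 hcon).1

/-- Cardinality of the set of injective maps `Fin M → ι`. -/
lemma bag_card_inj {ι : Type*} [Fintype ι] [DecidableEq ι] :
    ∀ M : ℕ, (univ.filter (fun m : Fin M → ι => Function.Injective m)).card
      = (Fintype.card ι).descFactorial M := by
  intro M
  induction M with
  | zero =>
    rw [Nat.descFactorial_zero]
    have : (univ.filter (fun m : Fin 0 → ι => Function.Injective m)) = univ := by
      refine Finset.filter_true_of_mem fun m _ => ?_
      intro i j _; exact Subsingleton.elim i j
    rw [this, Finset.card_univ, Fintype.card_fun]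
    simp
  | succ M ih =>
    have h := bag_sum_inj_comp (ι := ι) (M := M) 0 (fun _ => (1:ℝ))
    simp only [Finset.sum_const, nsmul_eq_mul, mul_one] at h
    have h2 : ((univ.filter (fun m : Fin (M+1) → ι => Function.Injective m)).card : ℝ)
        = (((Fintype.card ι - M) * (univ.filter
            (fun m : Fin M → ι => Function.Injective m)).card : ℕ) : ℝ) := by
      push_cast
      exact h
    have h3 : (univ.filter (fun m : Fin (M+1) → ι => Function.Injective m)).card
        = (Fintype.card ι - M) * (univ.filter
            (fun m : Fin M → ι => Function.Injective m)).card := by exact_mod_cast h2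
    rw [h3, ih, Nat.descFactorial_succ]

/-- For a loss that is convex in the prediction, the risk of the bagged predictor is
non-increasing in the number of bags `M` and bounded below by the loss of the fully
aggregated predictor, for sampling both with and without replacement. -/
theorem bagged_risk_monotone_convex_loss
    {ι : Type*} [Fintype ι] [DecidableEq ι] (N : ℕ) (hN : N = Fintype.card ι)
    (hN1 : 1 ≤ N) (a : ι → ℝ) (g : ℝ → ℝ) (hg : ConvexOn ℝ Set.univ g)
    (abar : ℝ) (habar : abar = (1 / (N : ℝ)) * ∑ I : ι, a I)
    (r rwor : ℕ → ℝ)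
    (hr : ∀ M : ℕ, r M = ((N : ℝ) ^ M)⁻¹ *
        ∑ m : Fin M → ι, g ((1 / (M : ℝ)) * ∑ j : Fin M, a (m j)))
    (hrwor : ∀ M : ℕ, rwor M = (((N - M).factorial : ℝ) / (N.factorial : ℝ)) *
        ∑ m ∈ Finset.univ.filter (fun m : Fin M → ι => Function.Injective m),
          g ((1 / (M : ℝ)) * ∑ j : Fin M, a (m j))) :
    (∀ M : ℕ, 1 ≤ M → r (M + 1) ≤ r M)
    ∧ (2 ≤ N → ∀ M : ℕ, 1 ≤ M → M ≤ N - 1 → rwor (M + 1) ≤ rwor M)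
    ∧ (∀ M : ℕ, 1 ≤ M → g abar ≤ r M)
    ∧ (2 ≤ N → ∀ M : ℕ, 1 ≤ M → M ≤ N → g abar ≤ rwor M) := by
  have hNpos : (0:ℝ) < N := by exact_mod_cast hN1
  -- pointwise Jensen step shared by (i) and (ii)
  have hjensen : ∀ (M : ℕ), 1 ≤ M → ∀ m : Fin (M+1) → ι,
      g ((1 / ((M+1 : ℕ) : ℝ)) * ∑ j : Fin (M+1), a (m j))
        ≤ (∑ k : Fin (M+1), g ((1 / (M : ℝ)) * ∑ j : Fin M, a (m (k.succAbove j))))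
            / ((M+1 : ℕ) : ℝ) := by
    intro M hM m
    have hMpos : (0:ℝ) < M := by exact_mod_cast hM
    have hj := bag_jensen hg (univ : Finset (Fin (M+1))) Finset.univ_nonempty
      (fun k => (1 / (M : ℝ)) * ∑ j : Fin M, a (m (k.succAbove j)))
    rw [Finset.card_univ, Fintype.card_fin] at hj
    have hsum : (∑ k : Fin (M+1), (1 / (M : ℝ)) * ∑ j : Fin M, a (m (k.succAbove j)))
        = ∑ j : Fin (M+1), a (m j) := by
      rw [← Finset.mul_sum]
      have hk : ∀ k : Fin (M+1), (∑ j : Fin M, a (m (k.succAbove j)))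
          = (∑ j : Fin (M+1), a (m j)) - a (m k) := by
        intro k
        have := Fin.sum_univ_succAbove (fun j => a (m j)) k
        linarith [this]
      rw [Finset.sum_congr rfl fun k _ => hk k, Finset.sum_sub_distrib,
        Finset.sum_const, Finset.card_univ, Fintype.card_fin, nsmul_eq_mul]
      field_simp
      push_cast
      ring
    rw [hsum] at hj
    have : (∑ j : Fin (M+1), a (m j)) / ((M+1 : ℕ):ℝ)
        = (1 / ((M+1 : ℕ) : ℝ)) * ∑ j : Fin (M+1), a (m j) := by ring
    rw [this] at hj
    exact_mod_cast hj
  -- (i) with replacement monotone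
  have part1 : ∀ M : ℕ, 1 ≤ M → r (M + 1) ≤ r M := by
    intro M hM
    rw [hr, hr]
    have hstep : (∑ m : Fin (M+1) → ι, g ((1 / ((M+1 : ℕ) : ℝ)) * ∑ j : Fin (M+1), a (m j)))
        ≤ (N:ℝ) * ∑ m' : Fin M → ι, g ((1 / (M : ℝ)) * ∑ j : Fin M, a (m' j)) := by
      calc (∑ m : Fin (M+1) → ι, g ((1 / ((M+1 : ℕ) : ℝ)) * ∑ j : Fin (M+1), a (m j)))
          ≤ ∑ m : Fin (M+1) → ι,
              (∑ k : Fin (M+1), g ((1 / (M : ℝ)) * ∑ j : Fin M, a (m (k.succAbove j))))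
                / ((M+1 : ℕ) : ℝ) :=
            Finset.sum_le_sum fun m _ => hjensen M hM m
        _ = (N:ℝ) * ∑ m' : Fin M → ι, g ((1 / (M : ℝ)) * ∑ j : Fin M, a (m' j)) := by
            rw [← Finset.sum_div, Finset.sum_comm]
            have hk : ∀ k : Fin (M+1),
                (∑ m : Fin (M+1) → ι, g ((1 / (M : ℝ)) * ∑ j : Fin M, a (m (k.succAbove j))))
                = (N:ℝ) * ∑ m' : Fin M → ι, g ((1 / (M : ℝ)) * ∑ j : Fin M, a (m' j)) := by
              intro k
              rw [bag_sum_insertNth M k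
                (fun m => g ((1 / (M : ℝ)) * ∑ j : Fin M, a (m (k.succAbove j))))]
              have : ∀ (x : ι) (m' : Fin M → ι),
                  g ((1 / (M : ℝ)) * ∑ j : Fin M,
                      a ((k.insertNth x m' : Fin (M+1) → ι) (k.succAbove j)))
                  = g ((1 / (M : ℝ)) * ∑ j : Fin M, a (m' j)) := by
                intro x m'
                congr 2
                exact Finset.sum_congr rfl fun j _ => by
                  rw [Fin.insertNth_apply_succAbove]
              rw [Finset.sum_congr rfl fun x _ => Finset.sum_congr rfl fun m' _ => this x m',
                Finset.sum_const, Finset.card_univ, ← hN, nsmul_eq_mul]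
            rw [Finset.sum_congr rfl fun k _ => hk k, Finset.sum_const, Finset.card_univ,
              Fintype.card_fin, nsmul_eq_mul]
            have hM1 : ((M+1 : ℕ) : ℝ) ≠ 0 := by positivity
            field_simp
    have hscale : ((N:ℝ) ^ (M+1))⁻¹ * ((N:ℝ) * ∑ m' : Fin M → ι,
        g ((1 / (M : ℝ)) * ∑ j : Fin M, a (m' j)))
        = ((N:ℝ) ^ M)⁻¹ * ∑ m' : Fin M → ι, g ((1 / (M : ℝ)) * ∑ j : Fin M, a (m' j)) := by
      rw [pow_succ]
      field_simp
    calc ((N:ℝ) ^ (M+1))⁻¹ * ∑ m : Fin (M+1) → ι, g ((1 / ((M+1 : ℕ):ℝ)) * ∑ j, a (m j))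
        ≤ ((N:ℝ) ^ (M+1))⁻¹ * ((N:ℝ) * ∑ m' : Fin M → ι,
            g ((1 / (M : ℝ)) * ∑ j : Fin M, a (m' j))) := by
          apply mul_le_mul_of_nonneg_left _ (by positivity)
          exact_mod_cast hstep
      _ = _ := hscale
  -- (ii) without replacement monotone
  have part2 : 2 ≤ N → ∀ M : ℕ, 1 ≤ M → M ≤ N - 1 → rwor (M + 1) ≤ rwor M := by
    intro _ M hM hMN
    have hM1N : M + 1 ≤ N := by omega
    rw [hrwor, hrwor]
    have hstep : (∑ m ∈ univ.filter (fun m : Fin (M+1) → ι => Function.Injective m),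
          g ((1 / ((M+1 : ℕ) : ℝ)) * ∑ j : Fin (M+1), a (m j)))
        ≤ ((N - M : ℕ):ℝ) * ∑ m' ∈ univ.filter (fun m : Fin M → ι => Function.Injective m),
            g ((1 / (M : ℝ)) * ∑ j : Fin M, a (m' j)) := by
      calc (∑ m ∈ univ.filter (fun m : Fin (M+1) → ι => Function.Injective m),
            g ((1 / ((M+1 : ℕ) : ℝ)) * ∑ j : Fin (M+1), a (m j)))
          ≤ ∑ m ∈ univ.filter (fun m : Fin (M+1) → ι => Function.Injective m),
              (∑ k : Fin (M+1), g ((1 / (M : ℝ)) * ∑ j : Fin M, a (m (k.succAbove j))))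
                / ((M+1 : ℕ) : ℝ) :=
            Finset.sum_le_sum fun m _ => hjensen M hM m
        _ = ((N - M : ℕ):ℝ) * ∑ m' ∈ univ.filter (fun m : Fin M → ι => Function.Injective m),
              g ((1 / (M : ℝ)) * ∑ j : Fin M, a (m' j)) := by
            rw [← Finset.sum_div, Finset.sum_comm]
            have hk : ∀ k : Fin (M+1),
                (∑ m ∈ univ.filter (fun m : Fin (M+1) → ι => Function.Injective m),
                  g ((1 / (M : ℝ)) * ∑ j : Fin M, a (m (k.succAbove j))))
                = ((N - M : ℕ):ℝ) *
                  ∑ m' ∈ univ.filter (fun m : Fin M → ι => Function.Injective m),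
                    g ((1 / (M : ℝ)) * ∑ j : Fin M, a (m' j)) := by
              intro k
              have := bag_sum_inj_comp (ι := ι) k
                (fun m' => g ((1 / (M : ℝ)) * ∑ j : Fin M, a (m' j)))
              rw [← hN] at this
              exact this
            rw [Finset.sum_congr rfl fun k _ => hk k, Finset.sum_const, Finset.card_univ,
              Fintype.card_fin, nsmul_eq_mul]
            have hM1 : ((M+1 : ℕ) : ℝ) ≠ 0 := by positivity
            field_simp
    have hfac : ((N - (M+1)).factorial : ℝ) * ((N - M : ℕ):ℝ) = ((N - M).factorial : ℝ) := by
      have h1 : N - M = (N - (M+1)) + 1 := by omega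
      rw [h1, Nat.factorial_succ]
      push_cast
      ring
    have hw0 : (0:ℝ) ≤ ((N - (M+1)).factorial : ℝ) / (N.factorial : ℝ) := by positivity
    calc ((N - (M+1)).factorial : ℝ) / (N.factorial : ℝ) *
          ∑ m ∈ univ.filter (fun m : Fin (M+1) → ι => Function.Injective m),
            g ((1 / ((M+1 : ℕ):ℝ)) * ∑ j, a (m j))
        ≤ ((N - (M+1)).factorial : ℝ) / (N.factorial : ℝ) *
          (((N - M : ℕ):ℝ) * ∑ m' ∈ univ.filter (fun m : Fin M → ι => Function.Injective m),
            g ((1 / (M : ℝ)) * ∑ j : Fin M, a (m' j))) := by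
          apply mul_le_mul_of_nonneg_left _ hw0
          exact_mod_cast hstep
      _ = ((N - M).factorial : ℝ) / (N.factorial : ℝ) *
            ∑ m' ∈ univ.filter (fun m : Fin M → ι => Function.Injective m),
              g ((1 / (M : ℝ)) * ∑ j : Fin M, a (m' j)) := by
          rw [← hfac]; ring
  -- (iii) lower bound with replacement
  have part3 : ∀ M : ℕ, 1 ≤ M → g abar ≤ r M := by
    intro M hM
    have hne : Nonempty ι := by
      rw [hN] at hN1
      exact Fintype.card_pos_iff.1 hN1
    obtain ⟨M', rfl⟩ : ∃ M', M = M' + 1 := ⟨M - 1, by omega⟩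
    set M := M' + 1 with hMdef
    have hMpos : (0:ℝ) < M := by positivity
    have hcard : ((univ : Finset (Fin M → ι)).card : ℝ) = (N:ℝ) ^ M := by
      rw [Finset.card_univ, Fintype.card_fun, Fintype.card_fin, hN]
      push_cast; ring
    have hj := bag_jensen hg (univ : Finset (Fin M → ι)) Finset.univ_nonempty
      (fun m => (1 / (M : ℝ)) * ∑ j : Fin M, a (m j))
    -- compute the average
    have hcoord : ∀ j : Fin M, (∑ m : Fin M → ι, a (m j)) = (N:ℝ) ^ M' * ∑ I : ι, a I := by
      intro j
      rw [bag_sum_insertNth M' j (fun m => a (m j))]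
      have : ∀ (x : ι) (m' : Fin M' → ι), a ((j.insertNth x m' : Fin M → ι) j) = a x := by
        intro x m'; rw [Fin.insertNth_apply_same]
      rw [Finset.sum_congr rfl fun x _ => Finset.sum_congr rfl fun m' _ => this x m']
      rw [Finset.sum_congr rfl fun x _ => Finset.sum_const (a x), ← Finset.smul_sum,
        Finset.card_univ, Fintype.card_fun, Fintype.card_fin, nsmul_eq_mul, ← hN]
      push_cast
      ring
    have htot : (∑ m : Fin M → ι, (1 / (M:ℝ)) * ∑ j : Fin M, a (m j))
        = (N:ℝ) ^ M' * ∑ I : ι, a I := by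
      rw [← Finset.mul_sum, Finset.sum_comm, Finset.sum_congr rfl fun j _ => hcoord j,
        Finset.sum_const, Finset.card_univ, Fintype.card_fin, nsmul_eq_mul]
      have hMne : (M:ℝ) ≠ 0 := ne_of_gt hMpos
      field_simp
    rw [hcard, htot] at hj
    have habar' : (N:ℝ) ^ M' * (∑ I : ι, a I) / (N:ℝ) ^ M = abar := by
      rw [habar, hMdef, pow_succ]
      have hNne : (N:ℝ) ≠ 0 := ne_of_gt hNpos
      field_simp
    rw [habar'] at hj
    rw [hr]
    calc g abar ≤ (∑ m : Fin M → ι, g ((1 / (M:ℝ)) * ∑ j : Fin M, a (m j))) / (N:ℝ) ^ M := hj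
      _ = ((N:ℝ) ^ M)⁻¹ * ∑ m : Fin M → ι, g ((1 / (M:ℝ)) * ∑ j : Fin M, a (m j)) := by
          rw [div_eq_inv_mul]
  refine ⟨part1, part2, part3, ?_⟩
  -- (iv) lower bound without replacement
  have hwn : rwor N = g abar := by
    rw [hrwor]
    have hb : ∀ m ∈ univ.filter (fun m : Fin N → ι => Function.Injective m),
        g ((1 / (N:ℝ)) * ∑ j : Fin N, a (m j)) = g abar := by
      intro m hm
      rw [Finset.mem_filter] at hm
      have hbij : Function.Bijective m :=
        (Fintype.bijective_iff_injective_and_card m).2 ⟨hm.2, by simp [hN]⟩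
      have hsum : (∑ j : Fin N, a (m j)) = ∑ I : ι, a I :=
        Fintype.sum_bijective m hbij _ _ (fun j => rfl)
      rw [hsum, ← habar]
    rw [Finset.sum_congr rfl hb, Finset.sum_const, bag_card_inj, ← hN,
      Nat.descFactorial_self, Nat.sub_self, Nat.factorial_zero, nsmul_eq_mul]
    have hfne : (N.factorial : ℝ) ≠ 0 := by positivity
    field_simp
    simp
  intro h2
  have key : ∀ d M, 1 ≤ M → M + d = N → g abar ≤ rwor M := by
    intro d
    induction d with
    | zero =>
      intro M hM hMN
      rw [show M = N by omega, hwn]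
    | succ d ih =>
      intro M hM hMN
      have ha := part2 h2 M hM (by omega)
      have hb := ih (M + 1) (by omega) (by omega)
      linarith
  intro M hM hMN
  exact key (N - M) M hM (by omega)
end

section
/- Let ι be a finite index set with N ≥ 2 elements, a : ι → ℝ, ā = (1/N) ∑_I a_I, V = (1/N) ∑_I (a_I − ā)². Let g : ℝ → ℝ be differentiable with x ↦ g(x) − (m/2)x² convex (m-strong convexity) and with derivative g′ Lipschitz with constant m̄ (m̄-smoothness), where m, m̄ ∈ ℝ. Then for every M ≥ 1: g(ā) + (m/2)·(1/M)·V ≤ N^{-M} ∑_{m' : Fin M → ι} g( (1/M) ∑_j a_{m'(j)} ) ≤ g(ā) + (m̄/2)·(1/M)·V; and for every 1 ≤ M ≤ N: g(ā) + (m/2)·((N−M)/(N−1))·(1/M)·V ≤ ((N−M)!/N!) ∑_{m' injective : Fin M → ι} g( (1/M) ∑_j a_{m'(j)} ) ≤ g(ā) + (m̄/2)·((N−M)/(N−1))·(1/M)·V. (Sandwich bounds on the excess risk of the M-bagged predictor for strongly convex and smooth losses, with sampling with and without replacement.) -/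
open Finset

/-- Tangent line inequality for a differentiable convex function on `univ`. -/
lemma BRS.tangent_line {h : ℝ → ℝ} (hc : ConvexOn ℝ Set.univ h)
    (hd : Differentiable ℝ h) (x y : ℝ) : h x + deriv h x * (y - x) ≤ h y := by
  rcases lt_trichotomy x y with hxy | rfl | hyx
  · have h1 : deriv h x ≤ slope h x y :=
      hc.deriv_le_slope (Set.mem_univ x) (Set.mem_univ y) hxy (hd x)
    rw [slope_def_field, div_eq_mul_inv] at h1
    have h2 : deriv h x * (y - x) ≤ h y - h x := by
      have := mul_le_mul_of_nonneg_right h1 (le_of_lt (sub_pos.mpr hxy))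
      rwa [mul_assoc, inv_mul_cancel₀ (sub_ne_zero.mpr hxy.ne'), mul_one] at this
    linarith
  · simp
  · have h1 : slope h y x ≤ deriv h x :=
      hc.slope_le_deriv (Set.mem_univ y) (Set.mem_univ x) hyx (hd x)
    rw [slope_def_field, div_eq_mul_inv] at h1
    have h2 : h x - h y ≤ deriv h x * (x - y) := by
      have := mul_le_mul_of_nonneg_right h1 (le_of_lt (sub_pos.mpr hyx))
      rwa [mul_assoc, inv_mul_cancel₀ (sub_ne_zero.mpr hyx.ne'), mul_one] at this
    linarith

/-- Pointwise sandwich for strongly convex smooth functions. -/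
lemma BRS.sandwich_pt (g : ℝ → ℝ) (mc mb : ℝ) (hdiff : Differentiable ℝ g)
    (hsc : ConvexOn ℝ Set.univ (fun x => g x - mc / 2 * x ^ 2))
    (hsmooth : ∀ x y : ℝ, |deriv g x - deriv g y| ≤ mb * |x - y|) (c x : ℝ) :
    g c + deriv g c * (x - c) + mc / 2 * (x - c) ^ 2 ≤ g x ∧
      g x ≤ g c + deriv g c * (x - c) + mb / 2 * (x - c) ^ 2 := by
  have hconst : ∀ (r z : ℝ), HasDerivAt (fun t : ℝ => r / 2 * t ^ 2) (r * z) z := by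
    intro r z
    have := (hasDerivAt_pow 2 z).const_mul (r / 2)
    simpa using this.congr_deriv (by ring)
  constructor
  · -- lower bound via strong convexity
    set h1 : ℝ → ℝ := fun x => g x - mc / 2 * x ^ 2 with hh1
    have hd1 : Differentiable ℝ h1 := hdiff.sub (by fun_prop)
    have hder : ∀ z, deriv h1 z = deriv g z - mc * z := by
      intro z
      exact (((hdiff z).hasDerivAt.sub (hconst mc z))).deriv
    have := BRS.tangent_line (h := h1) hsc hd1 c x
    rw [hder] at this
    simp only [hh1] at this
    nlinarith [this]
  · -- upper bound via smoothness
    set h2 : ℝ → ℝ := fun x => mb / 2 * x ^ 2 - g x with hh2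
    have hd2 : Differentiable ℝ h2 := (Differentiable.sub (by fun_prop) hdiff)
    have hder : ∀ z, deriv h2 z = mb * z - deriv g z := by
      intro z
      exact ((hconst mb z).sub (hdiff z).hasDerivAt).deriv
    have hmono : Monotone (deriv h2) := by
      intro u v huv
      rw [hder, hder]
      have h3 := (abs_le.mp (hsmooth v u)).2
      rw [abs_of_nonneg (sub_nonneg.mpr huv)] at h3
      linarith
    have hconv : ConvexOn ℝ Set.univ h2 := hmono.convexOn_univ_of_deriv hd2
    have := BRS.tangent_line hconv hd2 c x
    rw [hder] at this
    simp only [hh2] at this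
    nlinarith [this]

/-- Expectation sandwich from pointwise sandwich. -/
lemma BRS.exp_sandwich {σ : Type*} (g : ℝ → ℝ) (mc mb : ℝ) (c : ℝ)
    (hpt : ∀ x : ℝ, g c + deriv g c * (x - c) + mc / 2 * (x - c) ^ 2 ≤ g x ∧
      g x ≤ g c + deriv g c * (x - c) + mb / 2 * (x - c) ^ 2)
    (S : Finset σ) (X : σ → ℝ) (w v : ℝ) (hw : 0 ≤ w) (hwS : w * S.card = 1)
    (hmean : ∑ s ∈ S, (X s - c) = 0) (hvar : w * ∑ s ∈ S, (X s - c) ^ 2 = v) :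
    g c + mc / 2 * v ≤ w * ∑ s ∈ S, g (X s) ∧
      w * ∑ s ∈ S, g (X s) ≤ g c + mb / 2 * v := by
  have key : ∀ (m : ℝ), ∑ s ∈ S, (g c + deriv g c * (X s - c) + m / 2 * (X s - c) ^ 2)
      = S.card * g c + m / 2 * ∑ s ∈ S, (X s - c) ^ 2 := by
    intro m
    rw [Finset.sum_add_distrib, Finset.sum_add_distrib, Finset.sum_const,
      ← Finset.mul_sum, ← Finset.mul_sum, hmean, nsmul_eq_mul]
    ring
  constructor
  · have h1 : ∑ s ∈ S, (g c + deriv g c * (X s - c) + mc / 2 * (X s - c) ^ 2)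
        ≤ ∑ s ∈ S, g (X s) := Finset.sum_le_sum fun s _ => (hpt (X s)).1
    rw [key] at h1
    have := mul_le_mul_of_nonneg_left h1 hw
    calc g c + mc / 2 * v
        = w * (S.card * g c + mc / 2 * ∑ s ∈ S, (X s - c) ^ 2) := by
          rw [mul_add, ← mul_assoc, ← mul_assoc, hwS, one_mul]
          rw [mul_comm w (mc/2), mul_assoc, hvar]
      _ ≤ w * ∑ s ∈ S, g (X s) := this
  · have h1 : ∑ s ∈ S, g (X s)
        ≤ ∑ s ∈ S, (g c + deriv g c * (X s - c) + mb / 2 * (X s - c) ^ 2) :=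
      Finset.sum_le_sum fun s _ => (hpt (X s)).2
    rw [key] at h1
    have := mul_le_mul_of_nonneg_left h1 hw
    calc w * ∑ s ∈ S, g (X s)
        ≤ w * (S.card * g c + mb / 2 * ∑ s ∈ S, (X s - c) ^ 2) := this
      _ = g c + mb / 2 * v := by
          rw [mul_add, ← mul_assoc, ← mul_assoc, hwS, one_mul]
          rw [mul_comm w (mb/2), mul_assoc, hvar]

/-- Expanding the square of a sum when mixed moments are constant. -/
lemma BRS.sum_sq_expand {σ : Type*} (S : Finset σ) (M : ℕ) (t : σ → Fin M → ℝ) (α β : ℝ)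
    (hd : ∀ j, ∑ s ∈ S, t s j * t s j = α)
    (ho : ∀ j k, j ≠ k → ∑ s ∈ S, t s j * t s k = β) :
    ∑ s ∈ S, (∑ j, t s j) ^ 2 = M * α + M * ((M : ℝ) - 1) * β := by
  have h1 : ∀ s, (∑ j, t s j) ^ 2 = ∑ j, ∑ k, t s j * t s k := by
    intro s
    rw [sq, Finset.sum_mul_sum]
  simp_rw [h1]
  rw [Finset.sum_comm]
  have h2 : ∀ j : Fin M, ∑ s ∈ S, ∑ k, t s j * t s k = α + ((M : ℝ) - 1) * β := by
    intro j
    rw [Finset.sum_comm]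
    have h3 : ∀ k : Fin M, ∑ s ∈ S, t s j * t s k
        = β + (if k = j then α - β else 0) := by
      intro k
      by_cases hk : k = j
      · subst hk; rw [hd k]; simp
      · rw [ho j k (Ne.symm hk)]; simp [hk]
    simp_rw [h3]
    rw [Finset.sum_add_distrib, Finset.sum_const, Finset.sum_ite_eq' Finset.univ j
      (fun _ => α - β), if_pos (Finset.mem_univ j), Finset.card_univ, Fintype.card_fin,
      nsmul_eq_mul]
    ring
  simp_rw [h2]
  rw [Finset.sum_const, Finset.card_univ, Fintype.card_fin, nsmul_eq_mul]
  ring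

lemma BRS.sum_mean {σ : Type*} (S : Finset σ) (M : ℕ) (t : σ → Fin M → ℝ)
    (h : ∀ j, ∑ s ∈ S, t s j = 0) : ∑ s ∈ S, ∑ j, t s j = 0 := by
  rw [Finset.sum_comm]; simp [h]

/-- Sum of `f (m' j)` over all maps `m' : τ → ι`. -/
lemma BRS.Zgen {ι τ : Type*} [Fintype ι] [DecidableEq ι] [Fintype τ] [DecidableEq τ]
    (j : τ) (f : ι → ℝ) :
    ∑ m' : τ → ι, f (m' j)
      = (Fintype.card ({i : τ // i ≠ j} → ι) : ℝ) * ∑ I : ι, f I := by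
  rw [Fintype.sum_equiv (Equiv.funSplitAt j ι) (fun m' => f (m' j))
    (fun p : ι × ({i : τ // i ≠ j} → ι) => f p.1) (fun m' => rfl)]
  rw [Fintype.sum_prod_type]
  simp only [Finset.sum_const, Finset.card_univ, nsmul_eq_mul]
  rw [Finset.mul_sum]

lemma BRS.Zzero {ι τ : Type*} [Fintype ι] [DecidableEq ι] [Fintype τ] [DecidableEq τ]
    (j : τ) (f : ι → ℝ) (hf : ∑ I : ι, f I = 0) :
    ∑ m' : τ → ι, f (m' j) = 0 := by
  rw [BRS.Zgen j f, hf, mul_zero]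

/-- Mixed moment over all maps vanishes when one factor sums to zero. -/
lemma BRS.Zprod {ι τ : Type*} [Fintype ι] [DecidableEq ι] [Fintype τ] [DecidableEq τ]
    (j k : τ) (hkj : k ≠ j) (f h : ι → ℝ) (hh : ∑ I : ι, h I = 0) :
    ∑ m' : τ → ι, f (m' j) * h (m' k) = 0 := by
  rw [Fintype.sum_equiv (Equiv.funSplitAt j ι) (fun m' => f (m' j) * h (m' k))
    (fun p : ι × ({i : τ // i ≠ j} → ι) => f p.1 * h (p.2 ⟨k, hkj⟩)) (fun m' => rfl)]
  rw [Fintype.sum_prod_type]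
  have inner : ∀ x : ι, ∑ r : {i : τ // i ≠ j} → ι, f x * h (r ⟨k, hkj⟩) = 0 := by
    intro x
    rw [← Finset.mul_sum, BRS.Zzero (τ := {i : τ // i ≠ j}) ⟨k, hkj⟩ h hh, mul_zero]
  simp [inner]

/-- Cardinality relation for the split. -/
lemma BRS.card_split {ι τ : Type*} [Fintype ι] [DecidableEq ι] [Fintype τ] [DecidableEq τ]
    (j : τ) :
    Fintype.card ι * Fintype.card ({i : τ // i ≠ j} → ι) = Fintype.card (τ → ι) := by
  rw [Fintype.card_congr (Equiv.funSplitAt j ι), Fintype.card_prod]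

/-- Fiberwise decomposition of a sum. -/
lemma BRS.sum_fiber {σ β : Type*} [Fintype β] [DecidableEq β] (S : Finset σ)
    (φ : σ → β) (f : β → ℝ) :
    ∑ s ∈ S, f (φ s)
      = ∑ y : β, ((S.filter (fun s => φ s = y)).card : ℝ) * f y := by
  rw [← Finset.sum_fiberwise_of_maps_to (fun s _ => Finset.mem_univ (φ s))
    (fun s => f (φ s))]
  refine Finset.sum_congr rfl fun y _ => ?_
  rw [Finset.sum_congr rfl (fun s hs => by rw [(Finset.mem_filter.mp hs).2]),
    Finset.sum_const, nsmul_eq_mul]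

/-- A permutation moving one prescribed value to another. -/
lemma BRS.pair_perm {ι : Type*} [DecidableEq ι] {I J I' J' : ι}
    (hIJ : I ≠ J) (hIJ' : I' ≠ J') :
    ∃ σ : Equiv.Perm ι, σ I = I' ∧ σ J = J' := by
  refine ⟨(Equiv.swap I I').trans (Equiv.swap (Equiv.swap I I' J) J'), ?_, ?_⟩
  · have h1 : Equiv.swap I I' J ≠ I' := fun h =>
      hIJ ((Equiv.swap I I').injective (h.trans (Equiv.swap_apply_left I I').symm)).symm
    simp only [Equiv.trans_apply, Equiv.swap_apply_left]
    exact Equiv.swap_apply_of_ne_of_ne (Ne.symm h1) hIJ'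
  · simp only [Equiv.trans_apply, Equiv.swap_apply_left]

/-- Composing with a permutation is a bijection of the injective maps preserving fibers. -/
lemma BRS.card_fiber_perm {ι : Type*} [Fintype ι] [DecidableEq ι] {M : ℕ}
    (σ : Equiv.Perm ι) {β : Type*} [DecidableEq β] (φ : (Fin M → ι) → β) (y y' : β)
    (hφ : ∀ m' : Fin M → ι, φ m' = y ↔ φ (σ ∘ m') = y') :
    ((Finset.univ.filter fun m' : Fin M → ι => Function.Injective m').filter
        (fun m' => φ m' = y)).card
      = ((Finset.univ.filter fun m' : Fin M → ι => Function.Injective m').filter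
        (fun m' => φ m' = y')).card := by
  refine Finset.card_bij' (fun m' _ => σ ∘ m') (fun m' _ => σ.symm ∘ m') ?_ ?_ ?_ ?_
  · intro m' hm'
    simp only [Finset.mem_filter, Finset.mem_univ, true_and] at hm' ⊢
    exact ⟨σ.injective.comp hm'.1, (hφ m').mp hm'.2⟩
  · intro m' hm'
    simp only [Finset.mem_filter, Finset.mem_univ, true_and] at hm' ⊢
    refine ⟨σ.symm.injective.comp hm'.1, ?_⟩
    rw [hφ (σ.symm ∘ m')]
    have hcomp : σ ∘ (σ.symm ∘ m') = m' := by funext i; simp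
    rw [hcomp]; exact hm'.2
  · intro m' _; funext i; simp
  · intro m' _; funext i; simp
section
variable {ι : Type*} [Fintype ι] [DecidableEq ι]

lemma BRS.inj_card (M : ℕ) :
    ((Finset.univ.filter fun m' : Fin M → ι => Function.Injective m').card)
      = (Fintype.card ι).descFactorial M := by
  have h1 : (Finset.univ.filter fun m' : Fin M → ι => Function.Injective m').card
      = Fintype.card {f : Fin M → ι // Function.Injective f} :=
    (Fintype.card_subtype _).symm
  rw [h1, Fintype.card_congr (Equiv.subtypeInjectiveEquivEmbedding (Fin M) ι),
    Fintype.card_embedding_eq, Fintype.card_fin]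

lemma BRS.diag_card :
    ((Finset.univ : Finset (ι × ι)).filter fun p => p.1 = p.2).card
      = Fintype.card ι := by
  have himg : ((Finset.univ : Finset (ι × ι)).filter fun p => p.1 = p.2)
      = Finset.image (fun I : ι => (I, I)) Finset.univ := by
    ext p
    constructor
    · intro hp
      rw [Finset.mem_filter] at hp
      exact Finset.mem_image.mpr ⟨p.1, Finset.mem_univ _, Prod.ext rfl hp.2⟩
    · intro hp
      obtain ⟨I, -, rfl⟩ := Finset.mem_image.mp hp
      exact Finset.mem_filter.mpr ⟨Finset.mem_univ _, rfl⟩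
  rw [himg, Finset.card_image_of_injective _ (fun x y h => (Prod.ext_iff.mp h).1),
    Finset.card_univ]

lemma BRS.inj_moments (hcard : 2 ≤ Fintype.card ι) (M : ℕ) (b : ι → ℝ)
    (hb : ∑ I : ι, b I = 0) :
    (∀ j : Fin M, ∑ m' ∈ Finset.univ.filter
        (fun m' : Fin M → ι => Function.Injective m'), b (m' j) = 0) ∧
    (∀ j : Fin M, ∑ m' ∈ Finset.univ.filter
        (fun m' : Fin M → ι => Function.Injective m'), b (m' j) * b (m' j)
      = (((Finset.univ.filter fun m' : Fin M → ι => Function.Injective m').card : ℝ)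
          / (Fintype.card ι : ℝ)) * ∑ I : ι, b I * b I) ∧
    (∀ j k : Fin M, j ≠ k → ∑ m' ∈ Finset.univ.filter
        (fun m' : Fin M → ι => Function.Injective m'), b (m' j) * b (m' k)
      = -(((Finset.univ.filter fun m' : Fin M → ι => Function.Injective m').card : ℝ)
          / ((Fintype.card ι : ℝ) ^ 2 - (Fintype.card ι : ℝ)))
          * ∑ I : ι, b I * b I) := by
  set S := Finset.univ.filter fun m' : Fin M → ι => Function.Injective m' with hS
  have hN0 : (0 : ℝ) < (Fintype.card ι : ℝ) := by
    exact_mod_cast lt_of_lt_of_le (by norm_num) hcard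
  have hNne : (Fintype.card ι : ℝ) ≠ 0 := ne_of_gt hN0
  -- single-index fibers
  have single : ∀ (j : Fin M) (f : ι → ℝ),
      ∑ m' ∈ S, f (m' j)
        = ((S.card : ℝ) / (Fintype.card ι : ℝ)) * ∑ I : ι, f I := by
    intro j f
    obtain ⟨I₀⟩ : Nonempty ι := Fintype.card_pos_iff.mp (by omega)
    have hconst : ∀ I : ι, (S.filter fun m' => m' j = I).card
        = (S.filter fun m' => m' j = I₀).card := by
      intro I
      refine BRS.card_fiber_perm (Equiv.swap I I₀) (fun m' => m' j) I I₀ ?_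
      intro m'
      constructor
      · intro h; simp [Function.comp, h]
      · intro h
        have h2 : Equiv.swap I I₀ (m' j) = Equiv.swap I I₀ I := by
          simpa [Function.comp] using h
        exact (Equiv.swap I I₀).injective h2
    have htotal : S.card = ∑ I : ι, (S.filter fun m' => m' j = I).card :=
      Finset.card_eq_sum_card_fiberwise fun m' _ => Finset.mem_univ (m' j)
    have hcount : (S.card : ℝ)
        = (Fintype.card ι : ℝ) * ((S.filter fun m' => m' j = I₀).card : ℝ) := by
      rw [htotal]
      push_cast
      rw [Finset.sum_congr rfl fun I _ => by rw [hconst I]]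
      rw [Finset.sum_const, Finset.card_univ, nsmul_eq_mul]
    rw [BRS.sum_fiber S (fun m' => m' j) f]
    rw [Finset.sum_congr rfl fun I _ => by rw [hconst I]]
    rw [← Finset.mul_sum, hcount]
    field_simp
  refine ⟨?_, ?_, ?_⟩
  · intro j; rw [single j b, hb, mul_zero]
  · intro j; exact single j (fun I => b I * b I)
  · -- pair fibers
    intro j k hjk
    obtain ⟨I₀, J₀, hIJ₀⟩ := Fintype.exists_pair_of_one_lt_card
      (by omega : 1 < Fintype.card ι)
    set d₀ := (S.filter fun m' => (m' j, m' k) = (I₀, J₀)).card with hd₀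
    have hdiag : ∀ p : ι × ι, p.1 = p.2 →
        (S.filter fun m' => (m' j, m' k) = p).card = 0 := by
      intro p hp
      rw [Finset.card_eq_zero, Finset.filter_eq_empty_iff]
      intro m' hm' h
      have hinj : Function.Injective m' := (Finset.mem_filter.mp hm').2
      have hf : m' j = p.1 := congrArg Prod.fst h
      have hs : m' k = p.2 := congrArg Prod.snd h
      exact hjk (hinj (by rw [hf, hs]; exact hp))
    have hconst : ∀ p : ι × ι, p.1 ≠ p.2 →
        (S.filter fun m' => (m' j, m' k) = p).card = d₀ := by
      intro p hp
      obtain ⟨σ, hσI, hσJ⟩ := BRS.pair_perm hp hIJ₀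
      refine BRS.card_fiber_perm σ (fun m' => (m' j, m' k)) p (I₀, J₀) ?_
      intro m'
      constructor
      · intro h
        have h1 : m' j = p.1 := congrArg Prod.fst h
        have h2 : m' k = p.2 := congrArg Prod.snd h
        refine Prod.ext ?_ ?_
        · show σ (m' j) = I₀
          rw [h1, hσI]
        · show σ (m' k) = J₀
          rw [h2, hσJ]
      · intro h
        have h1 : σ (m' j) = I₀ := congrArg Prod.fst h
        have h2 : σ (m' k) = J₀ := congrArg Prod.snd h
        have e1 : σ (m' j) = σ p.1 := by rw [h1, hσI]
        have e2 : σ (m' k) = σ p.2 := by rw [h2, hσJ]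
        exact Prod.ext (σ.injective e1) (σ.injective e2)
    have htotal : S.card = ∑ p : ι × ι, (S.filter fun m' => (m' j, m' k) = p).card :=
      Finset.card_eq_sum_card_fiberwise fun m' _ => Finset.mem_univ _
    have hfib : ∀ p : ι × ι, ((S.filter fun m' => (m' j, m' k) = p).card : ℝ)
        = if p.1 = p.2 then 0 else (d₀ : ℝ) := by
      intro p
      by_cases hp : p.1 = p.2
      · rw [if_pos hp, hdiag p hp]; norm_num
      · rw [if_neg hp, hconst p hp]
    have hoff : (((Finset.univ : Finset (ι × ι)).filter
          fun p => ¬ p.1 = p.2).card : ℝ)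
        = (Fintype.card ι : ℝ) ^ 2 - (Fintype.card ι : ℝ) := by
      have hsplit := Finset.card_filter_add_card_filter_not
        (s := (Finset.univ : Finset (ι × ι))) (fun p : ι × ι => p.1 = p.2)
      rw [BRS.diag_card, Finset.card_univ, Fintype.card_prod] at hsplit
      have hc := congrArg (fun n : ℕ => (n : ℝ)) hsplit
      push_cast at hc
      linear_combination hc
    have hcount : (S.card : ℝ)
        = ((Fintype.card ι : ℝ) ^ 2 - (Fintype.card ι : ℝ)) * (d₀ : ℝ) := by
      rw [htotal]
      push_cast
      rw [Finset.sum_congr rfl fun p _ => hfib p, Finset.sum_ite,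
        Finset.sum_const, Finset.sum_const, smul_zero, zero_add, nsmul_eq_mul, hoff]
    rw [BRS.sum_fiber S (fun m' => (m' j, m' k)) (fun p => b p.1 * b p.2)]
    have hterm : ∀ p : ι × ι,
        ((S.filter fun m' => (m' j, m' k) = p).card : ℝ) * (b p.1 * b p.2)
          = (d₀ : ℝ) * (b p.1 * b p.2)
            - (if p.1 = p.2 then (d₀ : ℝ) * (b p.1 * b p.2) else 0) := by
      intro p
      rw [hfib p]
      by_cases hp : p.1 = p.2
      · rw [if_pos hp, if_pos hp]; ring
      · rw [if_neg hp, if_neg hp]; ring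
    rw [Finset.sum_congr rfl fun p _ => hterm p, Finset.sum_sub_distrib, ← Finset.mul_sum]
    have hsq : ∑ p : ι × ι, b p.1 * b p.2 = 0 := by
      rw [Fintype.sum_prod_type]
      simp_rw [← Finset.mul_sum]
      rw [← Finset.sum_mul, hb, zero_mul]
    have hdiag2 : ∑ p : ι × ι, (if p.1 = p.2 then (d₀ : ℝ) * (b p.1 * b p.2) else 0)
        = (d₀ : ℝ) * ∑ I : ι, b I * b I := by
      rw [Fintype.sum_prod_type]
      rw [Finset.sum_congr rfl fun x _ => Finset.sum_ite_eq Finset.univ x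
        (fun y => (d₀ : ℝ) * (b x * b y))]
      simp only [Finset.mem_univ, if_pos, if_true]
      rw [← Finset.mul_sum]
    rw [hsq, hdiag2, mul_zero, zero_sub]
    have hne : (Fintype.card ι : ℝ) ^ 2 - (Fintype.card ι : ℝ) ≠ 0 := by
      have h2 : (2 : ℝ) ≤ (Fintype.card ι : ℝ) := by exact_mod_cast hcard
      nlinarith
    rw [hcount]
    have hN1' : (Fintype.card ι : ℝ) - 1 ≠ 0 := by
      have h2 : (2 : ℝ) ≤ (Fintype.card ι : ℝ) := by exact_mod_cast hcard
      intro h; linarith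
    field_simp
    try ring
end
/-- Sandwich bounds on the excess risk of the `M`-bagged predictor for strongly convex
and smooth losses, with sampling both with and without replacement. -/
theorem bagged_risk_sandwich_strongly_convex_smooth
    {ι : Type*} [Fintype ι] [DecidableEq ι] (N : ℕ) (hN : N = Fintype.card ι)
    (hN2 : 2 ≤ N) (a : ι → ℝ) (abar V : ℝ)
    (habar : abar = (1 / (N : ℝ)) * ∑ I : ι, a I)
    (hV : V = (1 / (N : ℝ)) * ∑ I : ι, (a I - abar) ^ 2)
    (g : ℝ → ℝ) (mc mb : ℝ)
    (hdiff : Differentiable ℝ g)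
    (hsc : ConvexOn ℝ Set.univ (fun x => g x - mc / 2 * x ^ 2))
    (hsmooth : ∀ x y : ℝ, |deriv g x - deriv g y| ≤ mb * |x - y|) :
    (∀ M : ℕ, 1 ≤ M →
      g abar + mc / 2 * (1 / (M : ℝ)) * V
          ≤ ((N : ℝ) ^ M)⁻¹ *
              ∑ m' : Fin M → ι, g ((1 / (M : ℝ)) * ∑ j : Fin M, a (m' j))
        ∧ ((N : ℝ) ^ M)⁻¹ *
              ∑ m' : Fin M → ι, g ((1 / (M : ℝ)) * ∑ j : Fin M, a (m' j))
            ≤ g abar + mb / 2 * (1 / (M : ℝ)) * V)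
    ∧ (∀ M : ℕ, 1 ≤ M → M ≤ N →
      g abar + mc / 2 * (((N : ℝ) - M) / ((N : ℝ) - 1)) * (1 / (M : ℝ)) * V
          ≤ (((N - M).factorial : ℝ) / (N.factorial : ℝ)) *
              ∑ m' ∈ Finset.univ.filter (fun m' : Fin M → ι => Function.Injective m'),
                g ((1 / (M : ℝ)) * ∑ j : Fin M, a (m' j))
        ∧ (((N - M).factorial : ℝ) / (N.factorial : ℝ)) *
              ∑ m' ∈ Finset.univ.filter (fun m' : Fin M → ι => Function.Injective m'),
                g ((1 / (M : ℝ)) * ∑ j : Fin M, a (m' j))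
            ≤ g abar + mb / 2 * (((N : ℝ) - M) / ((N : ℝ) - 1)) * (1 / (M : ℝ)) * V) := by
  have hNR : ((Fintype.card ι : ℕ) : ℝ) = (N : ℝ) := by exact_mod_cast congrArg Nat.cast hN.symm
  have hN0 : (0 : ℝ) < (N : ℝ) := by
    have : (2 : ℝ) ≤ (N : ℝ) := by exact_mod_cast hN2
    linarith
  have hNne : (N : ℝ) ≠ 0 := ne_of_gt hN0
  set b : ι → ℝ := fun I => a I - abar with hbdef
  have hsuma : ∑ I : ι, a I = (N : ℝ) * abar := by
    rw [habar]; field_simp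
  have hb : ∑ I : ι, b I = 0 := by
    simp only [hbdef]
    rw [Finset.sum_sub_distrib, hsuma, Finset.sum_const, Finset.card_univ, ← hN,
      nsmul_eq_mul]
    ring
  have hSbb : ∑ I : ι, b I * b I = (N : ℝ) * V := by
    have hsq : ∀ I : ι, b I * b I = (a I - abar) ^ 2 := fun I => by
      simp only [hbdef]; ring
    have e1 : ∑ I : ι, b I * b I = ∑ I : ι, (a I - abar) ^ 2 :=
      Finset.sum_congr rfl fun I _ => hsq I
    rw [e1, hV]
    field_simp
  have hpt := BRS.sandwich_pt g mc mb hdiff hsc hsmooth abar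
  constructor
  · -- with replacement
    intro M hM
    have hM0 : (0 : ℝ) < (M : ℝ) := by exact_mod_cast lt_of_lt_of_le one_pos hM
    have hMne : (M : ℝ) ≠ 0 := ne_of_gt hM0
    have hXc : ∀ m' : Fin M → ι,
        (1 / (M : ℝ)) * ∑ j : Fin M, a (m' j) - abar
          = (1 / (M : ℝ)) * ∑ j : Fin M, b (m' j) := by
      intro m'
      simp only [hbdef]
      rw [Finset.sum_sub_distrib, Finset.sum_const, Finset.card_univ, Fintype.card_fin,
        nsmul_eq_mul]
      field_simp
    have hcardj : ∀ j : Fin M, ((Fintype.card ({i : Fin M // i ≠ j} → ι)) : ℝ)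
        = (N : ℝ) ^ M / (N : ℝ) := by
      intro j
      have h1 := BRS.card_split (ι := ι) (τ := Fin M) j
      have h1' : Fintype.card ι * Fintype.card ({i : Fin M // i ≠ j} → ι)
          = Fintype.card ι ^ M := by
        rw [h1, Fintype.card_fun, Fintype.card_fin]
      have h2 : ((Fintype.card ι : ℕ) : ℝ) * ((Fintype.card ({i : Fin M // i ≠ j} → ι)) : ℝ)
          = ((Fintype.card ι : ℕ) : ℝ) ^ M := by exact_mod_cast congrArg Nat.cast h1'
      rw [hNR] at h2
      rw [eq_div_iff hNne]
      linear_combination h2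
    have hd : ∀ j : Fin M, ∑ m' : Fin M → ι, b (m' j) * b (m' j)
        = (N : ℝ) ^ M / (N : ℝ) * ∑ I : ι, b I * b I := by
      intro j
      have h := BRS.Zgen (ι := ι) (τ := Fin M) j (fun I => b I * b I)
      rw [hcardj j] at h
      exact h
    have ho : ∀ j k : Fin M, j ≠ k →
        ∑ m' : Fin M → ι, b (m' j) * b (m' k) = 0 := by
      intro j k hjk
      exact BRS.Zprod j k (Ne.symm hjk) b b hb
    have hsum2 : ∑ m' : Fin M → ι,
        ((1 / (M : ℝ)) * ∑ j : Fin M, a (m' j) - abar) ^ 2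
          = (1 / (M : ℝ)) ^ 2 * ((M : ℝ) * ((N : ℝ) ^ M / (N : ℝ) * ∑ I : ι, b I * b I)
              + (M : ℝ) * ((M : ℝ) - 1) * 0) := by
      have e1 : ∑ m' : Fin M → ι, ((1 / (M : ℝ)) * ∑ j : Fin M, a (m' j) - abar) ^ 2
          = ∑ m' : Fin M → ι, (1 / (M : ℝ)) ^ 2 * (∑ j : Fin M, b (m' j)) ^ 2 :=
        Finset.sum_congr rfl fun m' _ => by rw [hXc m', mul_pow]
      have e2 := BRS.sum_sq_expand (Finset.univ : Finset (Fin M → ι)) M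
        (fun m' j => b (m' j)) ((N : ℝ) ^ M / (N : ℝ) * ∑ I : ι, b I * b I) 0 hd ho
      rw [e1, ← Finset.mul_sum, e2]
    have hmean : ∑ m' : Fin M → ι,
        ((1 / (M : ℝ)) * ∑ j : Fin M, a (m' j) - abar) = 0 := by
      have e1 : ∑ m' : Fin M → ι, ((1 / (M : ℝ)) * ∑ j : Fin M, a (m' j) - abar)
          = ∑ m' : Fin M → ι, (1 / (M : ℝ)) * ∑ j : Fin M, b (m' j) :=
        Finset.sum_congr rfl fun m' _ => hXc m'
      have e3 := BRS.sum_mean (Finset.univ : Finset (Fin M → ι)) M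
        (fun m' j => b (m' j)) (fun j => BRS.Zzero j b hb)
      rw [e1, ← Finset.mul_sum, e3, mul_zero]
    have hNM0 : ((N : ℝ) ^ M) ≠ 0 := pow_ne_zero _ hNne
    have hcardF : (((Finset.univ : Finset (Fin M → ι)).card : ℕ) : ℝ) = (N : ℝ) ^ M := by
      rw [Finset.card_univ, Fintype.card_fun, Fintype.card_fin]
      push_cast
      rw [hNR]
    have hwS : ((N : ℝ) ^ M)⁻¹ * (((Finset.univ : Finset (Fin M → ι)).card : ℕ) : ℝ) = 1 := by
      rw [hcardF]; field_simp
    have hvar : ((N : ℝ) ^ M)⁻¹ * ∑ m' : Fin M → ι,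
        ((1 / (M : ℝ)) * ∑ j : Fin M, a (m' j) - abar) ^ 2
          = (1 / (M : ℝ)) * V := by
      rw [hsum2, hSbb]
      field_simp
      ring
    obtain ⟨h1, h2⟩ := BRS.exp_sandwich g mc mb abar hpt
      (Finset.univ : Finset (Fin M → ι))
      (fun m' => (1 / (M : ℝ)) * ∑ j : Fin M, a (m' j))
      (((N : ℝ) ^ M)⁻¹) ((1 / (M : ℝ)) * V) (by positivity) hwS hmean hvar
    constructor
    · calc g abar + mc / 2 * (1 / (M : ℝ)) * V
          = g abar + mc / 2 * ((1 / (M : ℝ)) * V) := by ring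
        _ ≤ _ := h1
    · calc ((N : ℝ) ^ M)⁻¹ * ∑ m' : Fin M → ι, g ((1 / (M : ℝ)) * ∑ j : Fin M, a (m' j))
          ≤ g abar + mb / 2 * ((1 / (M : ℝ)) * V) := h2
        _ = g abar + mb / 2 * (1 / (M : ℝ)) * V := by ring
  · -- without replacement
    intro M hM hMN
    have hM0 : (0 : ℝ) < (M : ℝ) := by exact_mod_cast lt_of_lt_of_le one_pos hM
    have hMne : (M : ℝ) ≠ 0 := ne_of_gt hM0
    have hN1 : ((N : ℝ) - 1) ≠ 0 := by
      have : (2 : ℝ) ≤ (N : ℝ) := by exact_mod_cast hN2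
      intro h; linarith
    set S := Finset.univ.filter (fun m' : Fin M → ι => Function.Injective m') with hSdef
    have hcard2 : 2 ≤ Fintype.card ι := hN ▸ hN2
    obtain ⟨hm0, hm1, hm2⟩ := BRS.inj_moments hcard2 M b hb
    have hXc : ∀ m' : Fin M → ι,
        (1 / (M : ℝ)) * ∑ j : Fin M, a (m' j) - abar
          = (1 / (M : ℝ)) * ∑ j : Fin M, b (m' j) := by
      intro m'
      simp only [hbdef]
      rw [Finset.sum_sub_distrib, Finset.sum_const, Finset.card_univ, Fintype.card_fin,
        nsmul_eq_mul]
      field_simp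
    have hmean : ∑ m' ∈ S, ((1 / (M : ℝ)) * ∑ j : Fin M, a (m' j) - abar) = 0 := by
      have e1 : ∑ m' ∈ S, ((1 / (M : ℝ)) * ∑ j : Fin M, a (m' j) - abar)
          = ∑ m' ∈ S, (1 / (M : ℝ)) * ∑ j : Fin M, b (m' j) :=
        Finset.sum_congr rfl fun m' _ => hXc m'
      have e3 := BRS.sum_mean S M (fun m' j => b (m' j)) hm0
      rw [e1, ← Finset.mul_sum, e3, mul_zero]
    have hsum2 : ∑ m' ∈ S, ((1 / (M : ℝ)) * ∑ j : Fin M, a (m' j) - abar) ^ 2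
        = (1 / (M : ℝ)) ^ 2 * ((M : ℝ) * (((S.card : ℕ) : ℝ) / ((Fintype.card ι : ℕ) : ℝ)
              * ∑ I : ι, b I * b I)
            + (M : ℝ) * ((M : ℝ) - 1) * (-(((S.card : ℕ) : ℝ)
              / (((Fintype.card ι : ℕ) : ℝ) ^ 2 - ((Fintype.card ι : ℕ) : ℝ)))
              * ∑ I : ι, b I * b I)) := by
      have e1 : ∑ m' ∈ S, ((1 / (M : ℝ)) * ∑ j : Fin M, a (m' j) - abar) ^ 2
          = ∑ m' ∈ S, (1 / (M : ℝ)) ^ 2 * (∑ j : Fin M, b (m' j)) ^ 2 :=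
        Finset.sum_congr rfl fun m' _ => by rw [hXc m', mul_pow]
      have e2 := BRS.sum_sq_expand S M (fun m' j => b (m' j))
        ((((Finset.univ.filter fun m' : Fin M → ι => Function.Injective m').card : ℝ)
          / (Fintype.card ι : ℝ)) * ∑ I : ι, b I * b I)
        (-(((Finset.univ.filter fun m' : Fin M → ι => Function.Injective m').card : ℝ)
          / ((Fintype.card ι : ℝ) ^ 2 - (Fintype.card ι : ℝ))) * ∑ I : ι, b I * b I)
        hm1 hm2
      rw [e1, ← Finset.mul_sum, e2]
    have hfacne : ((N.factorial : ℕ) : ℝ) ≠ 0 := by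
      exact_mod_cast Nat.factorial_ne_zero N
    have hfacne2 : (((N - M).factorial : ℕ) : ℝ) ≠ 0 := by
      exact_mod_cast Nat.factorial_ne_zero (N - M)
    have hFval : ((S.card : ℕ) : ℝ) = (N.factorial : ℝ) / ((N - M).factorial : ℝ) := by
      have h1 : (N - M).factorial * S.card = N.factorial := by
        rw [hSdef, BRS.inj_card M, ← hN]
        exact Nat.factorial_mul_descFactorial hMN
      have h2 : (((N - M).factorial : ℕ) : ℝ) * ((S.card : ℕ) : ℝ) = ((N.factorial : ℕ) : ℝ) := by
        exact_mod_cast congrArg Nat.cast h1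
      field_simp
      linarith [h2]
    have hwS : (((N - M).factorial : ℝ) / (N.factorial : ℝ)) * ((S.card : ℕ) : ℝ) = 1 := by
      rw [hFval]; field_simp
    have hvar : (((N - M).factorial : ℝ) / (N.factorial : ℝ)) *
        ∑ m' ∈ S, ((1 / (M : ℝ)) * ∑ j : Fin M, a (m' j) - abar) ^ 2
          = ((N : ℝ) - M) / ((N : ℝ) - 1) * ((1 / (M : ℝ)) * V) := by
      rw [hsum2, hSbb, hFval, hNR]
      have hfact : (N : ℝ) ^ 2 - (N : ℝ) = (N : ℝ) * ((N : ℝ) - 1) := by ring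
      rw [hfact]
      field_simp
      ring
    obtain ⟨h1, h2⟩ := BRS.exp_sandwich g mc mb abar hpt S
      (fun m' => (1 / (M : ℝ)) * ∑ j : Fin M, a (m' j))
      (((N - M).factorial : ℝ) / (N.factorial : ℝ))
      (((N : ℝ) - M) / ((N : ℝ) - 1) * ((1 / (M : ℝ)) * V)) (by positivity) hwS hmean hvar
    constructor
    · calc g abar + mc / 2 * (((N : ℝ) - M) / ((N : ℝ) - 1)) * (1 / (M : ℝ)) * V
          = g abar + mc / 2 * (((N : ℝ) - M) / ((N : ℝ) - 1) * ((1 / (M : ℝ)) * V)) := by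
            ring
        _ ≤ _ := h1
    · calc (((N - M).factorial : ℝ) / (N.factorial : ℝ)) *
            ∑ m' ∈ S, g ((1 / (M : ℝ)) * ∑ j : Fin M, a (m' j))
          ≤ g abar + mb / 2 * (((N : ℝ) - M) / ((N : ℝ) - 1) * ((1 / (M : ℝ)) * V)) := h2
        _ = g abar + mb / 2 * (((N : ℝ) - M) / ((N : ℝ) - 1)) * (1 / (M : ℝ)) * V := by
            ring
end

section
/- Let 0 < a ≤ b < ∞, let P be a probability measure on ℝ supported on [a, b], let φ > 1, and define f(x) = 1/x − φ ∫ r/(1 + r x) dP(r) for x > 0. Then: (i) there exists a unique x₀ ∈ (0, ∞) with f(x₀) = 0; (ii) f is strictly positive and strictly decreasing on (0, x₀) and strictly negative on (x₀, ∞); (iii) f(x) → +∞ as x → 0⁺ and f(x) → 0 as x → ∞; (iv) f is differentiable on (0, ∞) with f′(x) = −1/x² + φ ∫ r²/(1 + x r)² dP(r), f′ is strictly increasing on (0, x₀), f′(x) → −∞ as x → 0⁺, and f′(x₀) < 0 (equivalently, 1/x₀² > φ ∫ r²/(1 + x₀ r)² dP(r)). (Properties of the solution of the ridgeless fixed-point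 equation.) -/
open MeasureTheory Filter Set Metric

section aux
variable {a b : ℝ} {P : Measure ℝ} [IsProbabilityMeasure P]

lemma rfp_integrable (hsupp : ∀ᵐ r ∂P, r ∈ Icc a b) {g : ℝ → ℝ} (hg : Measurable g)
    {C : ℝ} (hC : ∀ r ∈ Icc a b, |g r| ≤ C) : Integrable g P := by
  refine Integrable.mono' (integrable_const C) hg.aestronglyMeasurable ?_
  filter_upwards [hsupp] with r hr
  simpa using hC r hr

omit [IsProbabilityMeasure P] in
lemma rfp_mono (hsupp : ∀ᵐ r ∂P, r ∈ Icc a b) {g₁ g₂ : ℝ → ℝ} (h₁ : Integrable g₁ P)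
    (h₂ : Integrable g₂ P) (h : ∀ r ∈ Icc a b, g₁ r ≤ g₂ r) :
    ∫ r, g₁ r ∂P ≤ ∫ r, g₂ r ∂P :=
  integral_mono_ae h₁ h₂ (by filter_upwards [hsupp] with r hr using h r hr)

lemma rfp_lb (hsupp : ∀ᵐ r ∂P, r ∈ Icc a b) {g : ℝ → ℝ} (hg : Integrable g P) {c : ℝ}
    (h : ∀ r ∈ Icc a b, c ≤ g r) : c ≤ ∫ r, g r ∂P := by
  have h0 : ∫ (_ : ℝ), c ∂P = c := by simp
  rw [← h0]; exact rfp_mono hsupp (integrable_const c) hg h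

lemma rfp_ub (hsupp : ∀ᵐ r ∂P, r ∈ Icc a b) {g : ℝ → ℝ} (hg : Integrable g P) {c : ℝ}
    (h : ∀ r ∈ Icc a b, g r ≤ c) : ∫ r, g r ∂P ≤ c := by
  have h0 : ∫ (_ : ℝ), c ∂P = c := by simp
  rw [← h0]; exact rfp_mono hsupp hg (integrable_const c) h
end aux

set_option maxHeartbeats 2000000 in
/-- Properties of the solution of the ridgeless fixed-point equation. -/
theorem ridgeless_fixed_point_properties
    (a b : ℝ) (ha : 0 < a) (hab : a ≤ b)
    (P : Measure ℝ) [IsProbabilityMeasure P]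
    (hsupp : ∀ᵐ r ∂P, r ∈ Icc a b)
    (φ : ℝ) (hφ : 1 < φ)
    (f f' : ℝ → ℝ)
    (hf : ∀ x : ℝ, f x = 1 / x - φ * ∫ r, r / (1 + r * x) ∂P)
    (hf' : ∀ x : ℝ, f' x = -(1 / x ^ 2) + φ * ∫ r, r ^ 2 / (1 + x * r) ^ 2 ∂P) :
    ∃ x₀ : ℝ, 0 < x₀ ∧ f x₀ = 0
      ∧ (∀ x : ℝ, 0 < x → f x = 0 → x = x₀)
      ∧ (∀ x ∈ Ioo 0 x₀, 0 < f x)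
      ∧ StrictAntiOn f (Ioo 0 x₀)
      ∧ (∀ x ∈ Ioi x₀, f x < 0)
      ∧ Tendsto f (nhdsWithin 0 (Ioi 0)) atTop
      ∧ Tendsto f atTop (nhds 0)
      ∧ (∀ x ∈ Ioi (0 : ℝ), HasDerivAt f (f' x) x)
      ∧ StrictMonoOn f' (Ioo 0 x₀)
      ∧ Tendsto f' (nhdsWithin 0 (Ioi 0)) atBot
      ∧ f' x₀ < 0
      ∧ φ * ∫ r, r ^ 2 / (1 + x₀ * r) ^ 2 ∂P < 1 / x₀ ^ 2 := by
  have hb : 0 < b := ha.trans_le hab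
  have hφ0 : (0:ℝ) < φ := by linarith
  set I : ℝ → ℝ := fun x => ∫ r, r / (1 + r * x) ∂P with hIdef
  set J : ℝ → ℝ := fun x => ∫ r, r ^ 2 / (1 + x * r) ^ 2 ∂P with hJdef
  have hfI : ∀ x : ℝ, f x = 1 / x - φ * I x := hf
  have hf'J : ∀ x : ℝ, f' x = -(1 / x ^ 2) + φ * J x := hf'
  -- integrability
  have hI_int : ∀ x : ℝ, 0 ≤ x → Integrable (fun r => r / (1 + r * x)) P := by
    intro x hx
    refine rfp_integrable hsupp (by fun_prop) (C := b) ?_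
    rintro r ⟨h1, h2⟩
    have hr0 : 0 < r := ha.trans_le h1
    have hrx : 0 ≤ r * x := mul_nonneg hr0.le hx
    have hd : (0:ℝ) < 1 + r * x := by linarith
    rw [abs_of_nonneg (div_nonneg hr0.le hd.le)]
    exact le_trans (div_le_self hr0.le (by linarith)) h2
  have hJ_int : ∀ x : ℝ, 0 ≤ x → Integrable (fun r => r ^ 2 / (1 + x * r) ^ 2) P := by
    intro x hx
    refine rfp_integrable hsupp (by fun_prop) (C := b ^ 2) ?_
    rintro r ⟨h1, h2⟩
    have hr0 : 0 < r := ha.trans_le h1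
    have hrx : 0 ≤ x * r := mul_nonneg hx hr0.le
    have h1q : 1 ≤ (1 + x * r) ^ 2 := by nlinarith
    rw [abs_of_nonneg (by positivity)]
    refine le_trans (div_le_self (by positivity) h1q) (by nlinarith)
  -- basic bounds on I
  have hI_nonneg : ∀ x : ℝ, 0 ≤ x → 0 ≤ I x := by
    intro x hx
    refine rfp_lb hsupp (hI_int x hx) ?_
    rintro r ⟨h1, h2⟩
    have hr0 : 0 < r := ha.trans_le h1
    have hd : (0:ℝ) < 1 + r * x := by nlinarith
    positivity
  have hI_ub : ∀ x : ℝ, 0 ≤ x → I x ≤ b := by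
    intro x hx
    refine rfp_ub hsupp (hI_int x hx) ?_
    rintro r ⟨h1, h2⟩
    have hr0 : 0 < r := ha.trans_le h1
    have hrx : 0 ≤ r * x := mul_nonneg hr0.le hx
    exact le_trans (div_le_self hr0.le (by linarith)) h2
  have hI_ub2 : ∀ x : ℝ, 0 ≤ x → I x ≤ b / (1 + a * x) := by
    intro x hx
    refine rfp_ub hsupp (hI_int x hx) ?_
    rintro r ⟨h1, h2⟩
    have hr0 : 0 < r := ha.trans_le h1
    have hd : (0:ℝ) < 1 + r * x := by nlinarith
    have hd2 : (0:ℝ) < 1 + a * x := by nlinarith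
    rw [div_le_div_iff₀ hd hd2]
    nlinarith [mul_le_mul_of_nonneg_right hab (mul_nonneg hr0.le hx)]
  have hI_lb : ∀ x : ℝ, 0 ≤ x → a / (1 + a * x) ≤ I x := by
    intro x hx
    refine rfp_lb hsupp (hI_int x hx) ?_
    rintro r ⟨h1, h2⟩
    have hr0 : 0 < r := ha.trans_le h1
    have hd : (0:ℝ) < 1 + r * x := by nlinarith
    have hd2 : (0:ℝ) < 1 + a * x := by nlinarith
    rw [div_le_div_iff₀ hd2 hd]
    nlinarith
  have hJ_ub : ∀ x : ℝ, 0 ≤ x → J x ≤ b ^ 2 := by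
    intro x hx
    refine rfp_ub hsupp (hJ_int x hx) ?_
    rintro r ⟨h1, h2⟩
    have hr0 : 0 < r := ha.trans_le h1
    have hrx : 0 ≤ x * r := mul_nonneg hx hr0.le
    have h1q : 1 ≤ (1 + x * r) ^ 2 := by nlinarith
    refine le_trans (div_le_self (by positivity) h1q) (by nlinarith)
  -- the derivative of f
  have hderiv : ∀ x ∈ Ioi (0 : ℝ), HasDerivAt f (f' x) x := by
    intro x hx
    rw [Set.mem_Ioi] at hx
    have hfun : f = fun y => 1 / y - φ * I y := funext hfI
    have hmain := hasDerivAt_integral_of_dominated_loc_of_deriv_le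
      (F := fun x (r : ℝ) => r / (1 + r * x)) (F' := fun x (r : ℝ) => -(r ^ 2 / (1 + x * r) ^ 2))
      (μ := P) (x₀ := x) (bound := fun _ => b ^ 2) (ball_mem_nhds x (half_pos hx))
      (Eventually.of_forall fun y =>
        (by fun_prop : Measurable fun r : ℝ => r / (1 + r * y)).aestronglyMeasurable)
      (hI_int x hx.le)
      ((by fun_prop : Measurable fun r : ℝ => -(r ^ 2 / (1 + x * r) ^ 2)).aestronglyMeasurable)
      ?_ (integrable_const _) ?_
    · have hID : HasDerivAt I (∫ r, -(r ^ 2 / (1 + x * r) ^ 2) ∂P) x := hmain.2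
      have h1 : HasDerivAt (fun y : ℝ => 1 / y) (-(1 / x ^ 2)) x := by
        simpa [one_div] using hasDerivAt_inv (ne_of_gt hx)
      have h2 := h1.sub (hID.const_mul φ)
      rw [hfun, hf'J x]
      refine h2.congr_deriv (Eq.symm ?_)
      rw [integral_neg]
      show -(1 / x ^ 2) + φ * J x = _
      ring
    · filter_upwards [hsupp] with r hr
      rintro y hy
      rw [mem_ball, Real.dist_eq, abs_lt] at hy
      have hy0 : 0 < y := by linarith [hy.1]
      obtain ⟨h1, h2⟩ := hr
      have hr0 : 0 < r := ha.trans_le h1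
      have hrx : 0 ≤ y * r := mul_nonneg hy0.le hr0.le
      have h1q : 1 ≤ (1 + y * r) ^ 2 := by nlinarith
      rw [Real.norm_eq_abs, abs_neg, abs_of_nonneg (by positivity)]
      refine le_trans (div_le_self (by positivity) h1q) (by nlinarith)
    · filter_upwards [hsupp] with r hr
      rintro y hy
      rw [mem_ball, Real.dist_eq, abs_lt] at hy
      have hy0 : 0 < y := by linarith [hy.1]
      obtain ⟨h1, h2⟩ := hr
      have hr0 : 0 < r := ha.trans_le h1
      have hd : (0:ℝ) < 1 + r * y := by nlinarith
      have hden : HasDerivAt (fun z : ℝ => 1 + r * z) r y := by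
        simpa using ((hasDerivAt_id y).const_mul r).const_add 1
      have hD := (hasDerivAt_const y r).div hden (ne_of_gt hd)
      have heq : -(r ^ 2 / (1 + y * r) ^ 2) = (0 * (1 + r * y) - r * r) / (1 + r * y) ^ 2 := by
        rw [mul_comm y r]; ring
      rw [heq]
      exact hD
  have hcont : ∀ x : ℝ, 0 < x → ContinuousAt f x := fun x hx =>
    (hderiv x (Set.mem_Ioi.mpr hx)).continuousAt
  -- strict monotonicity of x ↦ x * I x
  have hm : ∀ x y : ℝ, 0 < x → x < y → x * I x < y * I y := by
    intro x y hx hxy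
    have hy : 0 < y := hx.trans hxy
    have hG_int : Integrable (fun r => r / ((1 + r * x) * (1 + r * y))) P := by
      refine rfp_integrable hsupp (by fun_prop) (C := b) ?_
      rintro r ⟨h1, h2⟩
      have hr0 : 0 < r := ha.trans_le h1
      have hd1 : (0:ℝ) < 1 + r * x := by nlinarith
      have hd2 : (0:ℝ) < 1 + r * y := by nlinarith
      have h1d : 1 ≤ (1 + r * x) * (1 + r * y) := by
        nlinarith [mul_nonneg hr0.le hx.le, mul_nonneg hr0.le hy.le,
          mul_nonneg (mul_nonneg hr0.le hx.le) (mul_nonneg hr0.le hy.le)]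
      rw [abs_of_nonneg (div_nonneg hr0.le (by positivity))]
      exact le_trans (div_le_self hr0.le h1d) h2
    have hkey : y * I y - x * I x = (y - x) * ∫ r, r / ((1 + r * x) * (1 + r * y)) ∂P := by
      rw [hIdef]
      simp only
      rw [← integral_const_mul, ← integral_const_mul, ← integral_const_mul,
        ← integral_sub ((hI_int y hy.le).const_mul y) ((hI_int x hx.le).const_mul x)]
      apply integral_congr_ae
      filter_upwards [hsupp] with r hr
      obtain ⟨h1, h2⟩ := hr
      have hr0 : 0 < r := ha.trans_le h1
      have hd1 : (0:ℝ) < 1 + r * x := by nlinarith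
      have hd2 : (0:ℝ) < 1 + r * y := by nlinarith
      field_simp
      ring
    have hlb : a / ((1 + b * y) ^ 2) ≤ ∫ r, r / ((1 + r * x) * (1 + r * y)) ∂P := by
      refine rfp_lb hsupp hG_int ?_
      rintro r ⟨h1, h2⟩
      have hr0 : 0 < r := ha.trans_le h1
      have hd1 : (0:ℝ) < 1 + r * x := by nlinarith
      have hd2 : (0:ℝ) < 1 + r * y := by nlinarith
      have hdb : (0:ℝ) < 1 + b * y := by nlinarith
      rw [div_le_div_iff₀ (by positivity) (by positivity)]
      have e1 : 1 + r * x ≤ 1 + b * y := by nlinarith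
      have e2 : 1 + r * y ≤ 1 + b * y := by nlinarith
      have e3 : (1 + r * x) * (1 + r * y) ≤ (1 + b * y) ^ 2 := by
        nlinarith [mul_le_mul e1 e2 hd2.le hdb.le]
      nlinarith [mul_le_mul_of_nonneg_left e3 ha.le,
        mul_le_mul_of_nonneg_right h1 (sq_nonneg (1 + b * y))]
    have hpos : 0 < ∫ r, r / ((1 + r * x) * (1 + r * y)) ∂P := by
      have hdb : (0:ℝ) < 1 + b * y := by nlinarith
      exact lt_of_lt_of_le (by positivity) hlb
    nlinarith [mul_pos (sub_pos.2 hxy) hpos]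
  -- a point where f is positive
  set x₁ : ℝ := 1 / (2 * (φ * b)) with hx₁def
  have hx₁ : 0 < x₁ := by positivity
  have hfx₁ : 0 < f x₁ := by
    have h1 : φ * I x₁ ≤ φ * b := mul_le_mul_of_nonneg_left (hI_ub x₁ hx₁.le) hφ0.le
    have h2 : 1 / x₁ = 2 * (φ * b) := by rw [hx₁def, one_div_one_div]
    rw [hfI x₁, h2]
    nlinarith
  -- f is negative for large x
  have hx2 : ∀ x : ℝ, 1 / (a * (φ - 1)) < x → f x < 0 := by
    intro x hxgt
    have haφ : 0 < a * (φ - 1) := by nlinarith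
    have hx0 : 0 < x := lt_trans (by positivity) hxgt
    have hd : (0:ℝ) < 1 + a * x := by positivity
    have h1 : φ * (a / (1 + a * x)) ≤ φ * I x := mul_le_mul_of_nonneg_left (hI_lb x hx0.le) hφ0.le
    have hgt : 1 < x * (a * (φ - 1)) := by
      rw [div_lt_iff₀ haφ] at hxgt; linarith
    have h2 : 1 / x < φ * a / (1 + a * x) := by
      rw [div_lt_div_iff₀ hx0 hd]; nlinarith
    have h3 : φ * a / (1 + a * x) = φ * (a / (1 + a * x)) := by ring
    rw [hfI x]
    linarith [h3 ▸ h2]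
  -- existence of zero by IVT
  have hx₁c : x₁ ≤ 1 / (a * (φ - 1)) + x₁ := by
    have haφ : 0 < a * (φ - 1) := by nlinarith
    have : 0 < 1 / (a * (φ - 1)) := by positivity
    linarith
  have hfc : f (1 / (a * (φ - 1)) + x₁) < 0 := hx2 _ (by linarith)
  have hivt := intermediate_value_Icc' hx₁c
    (fun t ht => (hcont t (lt_of_lt_of_le hx₁ ht.1)).continuousWithinAt)
  obtain ⟨x₀, hx₀mem, hx₀⟩ := hivt ⟨hfc.le, hfx₁.le⟩
  have hx₀pos : 0 < x₀ := lt_of_lt_of_le hx₁ hx₀mem.1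
  -- fixed point identity
  have hIx₀ : φ * (x₀ * I x₀) = 1 := by
    have h0 := hfI x₀
    rw [hx₀] at h0
    have h1 : φ * I x₀ = 1 / x₀ := by linarith
    calc φ * (x₀ * I x₀) = x₀ * (φ * I x₀) := by ring
      _ = x₀ * (1 / x₀) := by rw [h1]
      _ = 1 := by field_simp
  -- sign facts
  have hsign_lt : ∀ x, 0 < x → x < x₀ → φ * I x < 1 / x := by
    intro x hx hxlt
    have h1 : φ * (x * I x) < φ * (x₀ * I x₀) := by
      exact mul_lt_mul_of_pos_left (hm x x₀ hx hxlt) hφ0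
    rw [hIx₀] at h1
    rw [lt_div_iff₀ hx]
    nlinarith
  have hfpos : ∀ x ∈ Ioo (0:ℝ) x₀, 0 < f x := by
    rintro x ⟨hx0, hxlt⟩
    rw [hfI x]
    have := hsign_lt x hx0 hxlt
    linarith
  have hfneg : ∀ x ∈ Ioi x₀, f x < 0 := by
    intro x hx
    rw [Set.mem_Ioi] at hx
    have hx0 : 0 < x := hx₀pos.trans hx
    have h1 : φ * (x₀ * I x₀) < φ * (x * I x) :=
      mul_lt_mul_of_pos_left (hm x₀ x hx₀pos hx) hφ0
    rw [hIx₀] at h1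
    have h2 : 1 / x < φ * I x := by rw [div_lt_iff₀ hx0]; nlinarith
    rw [hfI x]
    linarith
  have huniq : ∀ x : ℝ, 0 < x → f x = 0 → x = x₀ := by
    intro x hx hfx
    rcases lt_trichotomy x x₀ with h | h | h
    · exfalso; have := hfpos x ⟨hx, h⟩; rw [hfx] at this; exact lt_irrefl 0 this
    · exact h
    · exfalso; have := hfneg x h; rw [hfx] at this; exact lt_irrefl 0 this
  have hsign_le : ∀ x, 0 < x → x ≤ x₀ → φ * I x ≤ 1 / x := by
    intro x hx hxle
    rcases eq_or_lt_of_le hxle with h | h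
    · subst h
      rw [le_div_iff₀ hx]
      nlinarith
    · exact (hsign_lt x hx h).le
  -- key inequality: φ J x < 1/x² on (0, x₀]
  have hJlt : ∀ x, 0 < x → x ≤ x₀ → φ * J x < 1 / x ^ 2 := by
    intro x hx hxle
    have hdb : (0:ℝ) < 1 + x * b := by positivity
    have hJle : J x ≤ b / (1 + x * b) * I x := by
      rw [hIdef, hJdef]
      simp only
      rw [← integral_const_mul]
      refine rfp_mono hsupp (hJ_int x hx.le) ((hI_int x hx.le).const_mul _) ?_
      rintro r ⟨h1, h2⟩
      have hr0 : 0 < r := ha.trans_le h1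
      have hd : (0:ℝ) < 1 + x * r := by nlinarith
      have hd2 : (0:ℝ) < 1 + r * x := by nlinarith
      rw [div_mul_div_comm, div_le_div_iff₀ (by positivity) (by positivity)]
      nlinarith [mul_nonneg (mul_nonneg hr0.le hd.le) (sub_nonneg.2 h2)]
    have h1 : φ * J x ≤ φ * (b / (1 + x * b) * I x) :=
      mul_le_mul_of_nonneg_left hJle hφ0.le
    have e1 : φ * (b / (1 + x * b) * I x) = b / (1 + x * b) * (φ * I x) := by ring
    have h2 : b / (1 + x * b) * (φ * I x) ≤ b / (1 + x * b) * (1 / x) :=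
      mul_le_mul_of_nonneg_left (hsign_le x hx hxle) (by positivity)
    have h3 : b / (1 + x * b) < 1 / x := by
      rw [div_lt_div_iff₀ hdb hx]; linarith
    have h4 : b / (1 + x * b) * (1 / x) < 1 / x * (1 / x) :=
      mul_lt_mul_of_pos_right h3 (by positivity)
    have h5 : 1 / x * (1 / x) = 1 / x ^ 2 := by ring
    linarith
  have hlast : φ * J x₀ < 1 / x₀ ^ 2 := hJlt x₀ hx₀pos le_rfl
  have hf'x₀ : f' x₀ < 0 := by rw [hf'J x₀]; linarith
  -- strict antitonicity of f on (0, x₀)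
  have hanti : StrictAntiOn f (Ioo 0 x₀) := by
    rintro x ⟨hx0, hxx₀⟩ y ⟨hy0, hyx₀⟩ hxy
    have hyx : 0 < y - x := sub_pos.2 hxy
    have hC_int : Integrable (fun r => r ^ 2 / ((1 + r * x) * (1 + r * y))) P := by
      refine rfp_integrable hsupp (by fun_prop) (C := b ^ 2) ?_
      rintro r ⟨h1, h2⟩
      have hr0 : 0 < r := ha.trans_le h1
      have hd1 : (0:ℝ) < 1 + r * x := by nlinarith
      have hd2 : (0:ℝ) < 1 + r * y := by nlinarith
      have h1d : 1 ≤ (1 + r * x) * (1 + r * y) := by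
        nlinarith [mul_nonneg hr0.le hx0.le, mul_nonneg hr0.le hy0.le,
          mul_nonneg (mul_nonneg hr0.le hx0.le) (mul_nonneg hr0.le hy0.le)]
      rw [abs_of_nonneg (div_nonneg (by positivity) (by positivity))]
      refine le_trans (div_le_self (by positivity) h1d) (by nlinarith)
    have hkey : I x - I y = (y - x) * ∫ r, r ^ 2 / ((1 + r * x) * (1 + r * y)) ∂P := by
      rw [hIdef]
      simp only
      rw [← integral_const_mul, ← integral_sub (hI_int x hx0.le) (hI_int y hy0.le)]
      apply integral_congr_ae
      filter_upwards [hsupp] with r hr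
      obtain ⟨h1, h2⟩ := hr
      have hr0 : 0 < r := ha.trans_le h1
      have hd1 : (0:ℝ) < 1 + r * x := by nlinarith
      have hd2 : (0:ℝ) < 1 + r * y := by nlinarith
      field_simp
      ring
    have hub : ∫ r, r ^ 2 / ((1 + r * x) * (1 + r * y)) ∂P ≤ 1 / x * I y := by
      rw [hIdef]
      simp only
      rw [← integral_const_mul]
      refine rfp_mono hsupp hC_int ((hI_int y hy0.le).const_mul _) ?_
      rintro r ⟨h1, h2⟩
      have hr0 : 0 < r := ha.trans_le h1
      have hd1 : (0:ℝ) < 1 + r * x := by nlinarith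
      have hd2 : (0:ℝ) < 1 + r * y := by nlinarith
      have e : 1 / x * (r / (1 + r * y)) = r / (x * (1 + r * y)) := by
        field_simp
      rw [e, div_le_div_iff₀ (by positivity) (by positivity)]
      nlinarith [mul_pos hr0 hd2]
    have hIy := hsign_lt y hy0 hyx₀
    have t1 : φ * I x - φ * I y = (φ * (y - x)) * ∫ r, r ^ 2 / ((1 + r * x) * (1 + r * y)) ∂P := by
      linear_combination φ * hkey
    have t2 : (φ * (y - x)) * (∫ r, r ^ 2 / ((1 + r * x) * (1 + r * y)) ∂P)
        ≤ (φ * (y - x)) * (1 / x * I y) :=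
      mul_le_mul_of_nonneg_left hub (by positivity)
    have t3 : (φ * (y - x)) * (1 / x * I y) = ((y - x) * (1 / x)) * (φ * I y) := by ring
    have t4 : ((y - x) * (1 / x)) * (φ * I y) < ((y - x) * (1 / x)) * (1 / y) :=
      mul_lt_mul_of_pos_left hIy (by positivity)
    have t5 : ((y - x) * (1 / x)) * (1 / y) = 1 / x - 1 / y := by
      field_simp
    rw [hfI x, hfI y]
    linarith
  -- strict monotonicity of f' on (0, x₀)
  have hmono' : StrictMonoOn f' (Ioo 0 x₀) := by
    rintro x ⟨hx0, hxx₀⟩ y ⟨hy0, hyx₀⟩ hxy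
    have hyx : 0 < y - x := sub_pos.2 hxy
    have hD_int : Integrable
        (fun r => r ^ 3 * (2 + (x + y) * r) / ((1 + x * r) ^ 2 * (1 + y * r) ^ 2)) P := by
      refine rfp_integrable hsupp (by fun_prop) (C := b ^ 3 * (2 + (x + y) * b)) ?_
      rintro r ⟨h1, h2⟩
      have hr0 : 0 < r := ha.trans_le h1
      have hd1 : (0:ℝ) < 1 + x * r := by nlinarith
      have hd2 : (0:ℝ) < 1 + y * r := by nlinarith
      have hnum : 0 ≤ r ^ 3 * (2 + (x + y) * r) := by positivity
      have h1d : 1 ≤ (1 + x * r) ^ 2 * (1 + y * r) ^ 2 := by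
        have u1 : 1 ≤ (1 + x * r) ^ 2 := by nlinarith [mul_nonneg hx0.le hr0.le]
        have u2 : 1 ≤ (1 + y * r) ^ 2 := by nlinarith [mul_nonneg hy0.le hr0.le]
        nlinarith
      rw [abs_of_nonneg (div_nonneg hnum (by positivity))]
      refine le_trans (div_le_self hnum h1d) ?_
      have q1 : r ^ 3 ≤ b ^ 3 := pow_le_pow_left₀ hr0.le h2 3
      have q2 : 2 + (x + y) * r ≤ 2 + (x + y) * b := by
        nlinarith [mul_le_mul_of_nonneg_left h2 (by positivity : (0:ℝ) ≤ x + y)]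
      have q0 : 0 ≤ 2 + (x + y) * r := by
        nlinarith [mul_pos (by linarith : (0:ℝ) < x + y) hr0]
      exact mul_le_mul q1 q2 q0 (by positivity)
    have hkey : J x - J y
        = (y - x) * ∫ r, r ^ 3 * (2 + (x + y) * r) / ((1 + x * r) ^ 2 * (1 + y * r) ^ 2) ∂P := by
      rw [hJdef]
      simp only
      rw [← integral_const_mul, ← integral_sub (hJ_int x hx0.le) (hJ_int y hy0.le)]
      apply integral_congr_ae
      filter_upwards [hsupp] with r hr
      obtain ⟨h1, h2⟩ := hr
      have hr0 : 0 < r := ha.trans_le h1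
      have hd1 : (0:ℝ) < 1 + x * r := by nlinarith
      have hd2 : (0:ℝ) < 1 + y * r := by nlinarith
      field_simp
      ring
    have hub : ∫ r, r ^ 3 * (2 + (x + y) * r) / ((1 + x * r) ^ 2 * (1 + y * r) ^ 2) ∂P
        ≤ 1 / x * J y + 1 / y * J x := by
      rw [hJdef]
      simp only
      rw [← integral_const_mul, ← integral_const_mul,
        ← integral_add ((hJ_int y hy0.le).const_mul _) ((hJ_int x hx0.le).const_mul _)]
      refine rfp_mono hsupp hD_int
        (((hJ_int y hy0.le).const_mul _).add ((hJ_int x hx0.le).const_mul _)) ?_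
      rintro r ⟨h1, h2⟩
      have hr0 : 0 < r := ha.trans_le h1
      have hd1 : (0:ℝ) < 1 + x * r := by nlinarith
      have hd2 : (0:ℝ) < 1 + y * r := by nlinarith
      have eid : r ^ 3 * (2 + (x + y) * r) / ((1 + x * r) ^ 2 * (1 + y * r) ^ 2)
          = r / (1 + x * r) * (r ^ 2 / (1 + y * r) ^ 2)
            + r / (1 + y * r) * (r ^ 2 / (1 + x * r) ^ 2) := by
        field_simp
        ring
      have b1 : r / (1 + x * r) ≤ 1 / x := by
        rw [div_le_div_iff₀ hd1 hx0]; nlinarith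
      have b2 : r / (1 + y * r) ≤ 1 / y := by
        rw [div_le_div_iff₀ hd2 hy0]; nlinarith
      rw [eid]
      exact add_le_add (mul_le_mul_of_nonneg_right b1 (by positivity))
        (mul_le_mul_of_nonneg_right b2 (by positivity))
    have hJx := hJlt x hx0 hxx₀.le
    have hJy := hJlt y hy0 hyx₀.le
    have t1 : φ * J x - φ * J y = (φ * (y - x))
        * ∫ r, r ^ 3 * (2 + (x + y) * r) / ((1 + x * r) ^ 2 * (1 + y * r) ^ 2) ∂P := by
      linear_combination φ * hkey
    have t2 : (φ * (y - x))
        * (∫ r, r ^ 3 * (2 + (x + y) * r) / ((1 + x * r) ^ 2 * (1 + y * r) ^ 2) ∂P)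
        ≤ (φ * (y - x)) * (1 / x * J y + 1 / y * J x) :=
      mul_le_mul_of_nonneg_left hub (by positivity)
    have t3 : (φ * (y - x)) * (1 / x * J y + 1 / y * J x)
        = ((y - x) * (1 / x)) * (φ * J y) + ((y - x) * (1 / y)) * (φ * J x) := by ring
    have t4 : ((y - x) * (1 / x)) * (φ * J y) < ((y - x) * (1 / x)) * (1 / y ^ 2) :=
      mul_lt_mul_of_pos_left hJy (by positivity)
    have t5 : ((y - x) * (1 / y)) * (φ * J x) < ((y - x) * (1 / y)) * (1 / x ^ 2) :=
      mul_lt_mul_of_pos_left hJx (by positivity)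
    have t6 : ((y - x) * (1 / x)) * (1 / y ^ 2) + ((y - x) * (1 / y)) * (1 / x ^ 2)
        = 1 / x ^ 2 - 1 / y ^ 2 := by
      field_simp
      ring
    rw [hf'J x, hf'J y]
    linarith
  -- limits
  have htop : Tendsto f (nhdsWithin 0 (Ioi 0)) atTop := by
    have h1 : Tendsto (fun x : ℝ => 1 / x - φ * b) (nhdsWithin 0 (Ioi 0)) atTop := by
      exact tendsto_atTop_add_const_right _ _
        ((tendsto_inv_nhdsGT_zero (𝕜 := ℝ)).congr fun x => (one_div x).symm)
    refine tendsto_atTop_mono' _ ?_ h1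
    filter_upwards [self_mem_nhdsWithin] with x hx
    rw [Set.mem_Ioi] at hx
    rw [hfI x]
    have h2 := mul_le_mul_of_nonneg_left (hI_ub x hx.le) hφ0.le
    linarith
  have hzero : Tendsto f atTop (nhds 0) := by
    have l1 : Tendsto (fun x : ℝ => 1 / x) atTop (nhds 0) := by
      exact (tendsto_inv_atTop_zero (𝕜 := ℝ)).congr fun x => (one_div x).symm
    have l2 : Tendsto (fun x : ℝ => 1 + a * x) atTop atTop :=
      tendsto_atTop_add_const_left _ _ (Tendsto.const_mul_atTop ha tendsto_id)
    have l3 : Tendsto (fun x : ℝ => b / (1 + a * x)) atTop (nhds 0) := by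
      have := (tendsto_inv_atTop_zero (𝕜 := ℝ)).comp l2
      simpa [div_eq_mul_inv, Function.comp] using this.const_mul b
    have hlow : Tendsto (fun x : ℝ => 1 / x - φ * (b / (1 + a * x))) atTop (nhds 0) := by
      simpa using l1.sub (l3.const_mul φ)
    refine tendsto_of_tendsto_of_tendsto_of_le_of_le' hlow l1 ?_ ?_
    · filter_upwards [eventually_gt_atTop (0:ℝ)] with x hx
      rw [hfI x]
      have h2 := mul_le_mul_of_nonneg_left (hI_ub2 x hx.le) hφ0.le
      linarith
    · filter_upwards [eventually_gt_atTop (0:ℝ)] with x hx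
      rw [hfI x]
      have h2 := mul_nonneg hφ0.le (hI_nonneg x hx.le)
      have h3 : 0 < 1 / x := by positivity
      linarith
  have hbot : Tendsto f' (nhdsWithin 0 (Ioi 0)) atBot := by
    have h1 : Tendsto (fun x : ℝ => 1 / x ^ 2) (nhdsWithin 0 (Ioi 0)) atTop := by
      have h2 := (tendsto_inv_nhdsGT_zero (𝕜 := ℝ)).atTop_mul_atTop₀ (tendsto_inv_nhdsGT_zero (𝕜 := ℝ))
      refine h2.congr fun x => ?_
      rw [← mul_inv, ← sq, one_div]
    have h3 : Tendsto (fun x : ℝ => -(1 / x ^ 2) + φ * b ^ 2) (nhdsWithin 0 (Ioi 0)) atBot := by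
      apply tendsto_atBot_add_const_right
      exact tendsto_neg_atTop_atBot.comp h1
    refine tendsto_atBot_mono' _ ?_ h3
    filter_upwards [self_mem_nhdsWithin] with x hx
    rw [Set.mem_Ioi] at hx
    rw [hf'J x]
    have h2 := mul_le_mul_of_nonneg_left (hJ_ub x hx.le) hφ0.le
    linarith
  exact ⟨x₀, hx₀pos, hx₀, huniq, hfpos, hanti, hfneg, htop, hzero, hderiv, hmono', hbot,
    hf'x₀, hlast⟩
end

section
/- Let 0 < a ≤ b < ∞, let P be a probability measure on ℝ supported on [a, b], let λ > 0 and φ > 0, and define f(x) = 1/x − φ ∫ r/(1 + r x) dP(r) − λ for x > 0. Then: (i) there exists a unique x₀^λ ∈ (0, ∞) with f(x₀^λ) = 0; (ii) f is strictly positive and strictly decreasing on (0, x₀^λ) and strictly negative on (x₀^λ, ∞); (iii) f(x) → +∞ as x → 0⁺ and f(x) → −λ as x → ∞; (iv) f is differentiable on (0, ∞) with f′(x) = −1/x² + φ ∫ r²/(1 + x r)² dP(r), f′ is strictly increasing on (0, x₀^λ), f′(x) → −∞ as x → 0⁺, and f′(x₀^λ) < 0 (equivalently, 1/(x₀^λ)²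 > φ ∫ r²/(1 + x₀^λ r)² dP(r)). (Properties of the solution of the ridge fixed-point equation.) -/
open MeasureTheory Filter Set Metric Topology

namespace RidgeFP

variable {P : Measure ℝ} [IsProbabilityMeasure P] {a b : ℝ}

lemma denom_ge {r x : ℝ} (hr : 0 < r) (hx : 0 ≤ x) : (1:ℝ) ≤ 1 + x * r := by nlinarith


lemma frac_le {r x : ℝ} (hr : 0 < r) (hx : 0 < x) : r / (1 + x * r) ≤ 1 / x := by
  rw [div_le_div_iff₀ (by nlinarith) hx]
  nlinarith

lemma meas_aux (n m : ℕ) (x : ℝ) :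
    AEStronglyMeasurable (fun r : ℝ => r ^ n / (1 + x * r) ^ m) P :=
  ((measurable_id.pow_const n).div
    (((measurable_id.const_mul x).const_add 1).pow_const m)).aestronglyMeasurable

lemma integrable_aux (ha : 0 < a) (hsupp : ∀ᵐ r ∂P, r ∈ Icc a b)
    (n m : ℕ) {x : ℝ} (hx : 0 ≤ x) :
    Integrable (fun r : ℝ => r ^ n / (1 + x * r) ^ m) P := by
  refine (integrable_const (b ^ n)).mono' (meas_aux n m x) ?_
  filter_upwards [hsupp] with r hr
  have hr0 : 0 < r := lt_of_lt_of_le ha hr.1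
  have h1 : (1:ℝ) ≤ (1 + x * r) ^ m := one_le_pow₀ (denom_ge hr0 hx)
  rw [Real.norm_eq_abs, abs_of_nonneg (by positivity)]
  calc r ^ n / (1 + x * r) ^ m ≤ r ^ n := div_le_self (by positivity) h1
    _ ≤ b ^ n := pow_le_pow_left₀ hr0.le hr.2 n

lemma hasDerivAt_inner1 {r x : ℝ} (h : (0:ℝ) < 1 + x * r) :
    HasDerivAt (fun y : ℝ => r / (1 + y * r)) (-(r ^ 2 / (1 + x * r) ^ 2)) x := by
  have hD : HasDerivAt (fun y : ℝ => 1 + y * r) r x := by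
    simpa using (hasDerivAt_mul_const r).const_add 1
  have : HasDerivAt (fun y : ℝ => r / (1 + y * r)) _ x := (hasDerivAt_const x r).div hD h.ne'
  convert this using 1
  field_simp
  ring

lemma hasDerivAt_inner2 {r x : ℝ} (h : (0:ℝ) < 1 + x * r) :
    HasDerivAt (fun y : ℝ => r ^ 2 / (1 + y * r) ^ 2)
      (-(2 * (r ^ 3 / (1 + x * r) ^ 3))) x := by
  have hD : HasDerivAt (fun y : ℝ => 1 + y * r) r x := by
    simpa using (hasDerivAt_mul_const r).const_add 1
  have hD2 : HasDerivAt (fun y : ℝ => (1 + y * r) ^ 2) (2 * (1 + x * r) * r) x := by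
    exact (hD.pow 2).congr_deriv (by simp)
  have : HasDerivAt (fun y : ℝ => r ^ 2 / (1 + y * r) ^ 2) _ x :=
    (hasDerivAt_const x (r ^ 2)).div hD2 (pow_ne_zero 2 h.ne')
  convert this using 1
  field_simp
  ring

lemma ball_pos {x y : ℝ} (hx : 0 < x) (hy : y ∈ ball x (x / 2)) : 0 < y := by
  have := mem_ball_iff_norm.mp hy
  rw [Real.norm_eq_abs, abs_lt] at this
  linarith [this.1]

lemma hasDerivAt_int1 (ha : 0 < a) (hsupp : ∀ᵐ r ∂P, r ∈ Icc a b) {x : ℝ} (hx : 0 < x) :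
    HasDerivAt (fun y : ℝ => ∫ r, r / (1 + y * r) ∂P)
      (∫ r, -(r ^ 2 / (1 + x * r) ^ 2) ∂P) x := by
  have key := hasDerivAt_integral_of_dominated_loc_of_deriv_le (μ := P)
      (F := fun y r => r / (1 + y * r)) (F' := fun y r => -(r ^ 2 / (1 + y * r) ^ 2))
      (x₀ := x) (bound := fun _ => b ^ 2) (s := ball x (x / 2)) (ball_mem_nhds x (half_pos hx))
      (Eventually.of_forall fun y => by simpa using meas_aux (P := P) 1 1 y)
      (by simpa using integrable_aux ha hsupp 1 1 hx.le)
      ((meas_aux (P := P) 2 2 x).neg)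
      ?_ (integrable_const _) ?_
  · exact key.2
  · filter_upwards [hsupp] with r hr y hy
    have hr0 : 0 < r := lt_of_lt_of_le ha hr.1
    have hy0 : 0 < y := ball_pos hx hy
    have h1 : (1:ℝ) ≤ (1 + y * r) ^ 2 := one_le_pow₀ (denom_ge hr0 hy0.le)
    rw [norm_neg, Real.norm_eq_abs, abs_of_nonneg (by positivity)]
    calc r ^ 2 / (1 + y * r) ^ 2 ≤ r ^ 2 := div_le_self (by positivity) h1
      _ ≤ b ^ 2 := pow_le_pow_left₀ hr0.le hr.2 2
  · filter_upwards [hsupp] with r hr y hy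
    have hr0 : 0 < r := lt_of_lt_of_le ha hr.1
    have hy0 : 0 < y := ball_pos hx hy
    exact hasDerivAt_inner1 (lt_of_lt_of_le one_pos (denom_ge hr0 hy0.le))

lemma hasDerivAt_int2 (ha : 0 < a) (hsupp : ∀ᵐ r ∂P, r ∈ Icc a b) {x : ℝ} (hx : 0 < x) :
    HasDerivAt (fun y : ℝ => ∫ r, r ^ 2 / (1 + y * r) ^ 2 ∂P)
      (∫ r, -(2 * (r ^ 3 / (1 + x * r) ^ 3)) ∂P) x := by
  have key := hasDerivAt_integral_of_dominated_loc_of_deriv_le (μ := P)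
      (F := fun y r => r ^ 2 / (1 + y * r) ^ 2)
      (F' := fun y r => -(2 * (r ^ 3 / (1 + y * r) ^ 3)))
      (x₀ := x) (bound := fun _ => 2 * b ^ 3) (s := ball x (x / 2)) (ball_mem_nhds x (half_pos hx))
      (Eventually.of_forall fun y => meas_aux (P := P) 2 2 y)
      (integrable_aux ha hsupp 2 2 hx.le)
      (((meas_aux (P := P) 3 3 x).const_mul 2).neg)
      ?_ (integrable_const _) ?_
  · exact key.2
  · filter_upwards [hsupp] with r hr y hy
    have hr0 : 0 < r := lt_of_lt_of_le ha hr.1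
    have hy0 : 0 < y := ball_pos hx hy
    have h1 : (1:ℝ) ≤ (1 + y * r) ^ 3 := one_le_pow₀ (denom_ge hr0 hy0.le)
    rw [norm_neg, Real.norm_eq_abs, abs_of_nonneg (by positivity)]
    have : r ^ 3 / (1 + y * r) ^ 3 ≤ b ^ 3 :=
      le_trans (div_le_self (by positivity) h1) (pow_le_pow_left₀ hr0.le hr.2 3)
    linarith
  · filter_upwards [hsupp] with r hr y hy
    have hr0 : 0 < r := lt_of_lt_of_le ha hr.1
    have hy0 : 0 < y := ball_pos hx hy
    exact hasDerivAt_inner2 (lt_of_lt_of_le one_pos (denom_ge hr0 hy0.le))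

end RidgeFP


/-- Properties of the solution of the ridge fixed-point equation. -/
theorem ridge_fixed_point_properties
    (a b : ℝ) (ha : 0 < a) (hab : a ≤ b)
    (P : Measure ℝ) [IsProbabilityMeasure P]
    (hsupp : ∀ᵐ r ∂P, r ∈ Icc a b)
    (lam φ : ℝ) (hlam : 0 < lam) (hφ : 0 < φ)
    (f f' : ℝ → ℝ)
    (hf : ∀ x : ℝ, f x = 1 / x - φ * ∫ r, r / (1 + r * x) ∂P - lam)
    (hf' : ∀ x : ℝ, f' x = -(1 / x ^ 2) + φ * ∫ r, r ^ 2 / (1 + x * r) ^ 2 ∂P) :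
    ∃ x₀ : ℝ, 0 < x₀ ∧ f x₀ = 0
      ∧ (∀ x : ℝ, 0 < x → f x = 0 → x = x₀)
      ∧ (∀ x ∈ Ioo 0 x₀, 0 < f x)
      ∧ StrictAntiOn f (Ioo 0 x₀)
      ∧ (∀ x ∈ Ioi x₀, f x < 0)
      ∧ Tendsto f (nhdsWithin 0 (Ioi 0)) atTop
      ∧ Tendsto f atTop (nhds (-lam))
      ∧ (∀ x ∈ Ioi (0 : ℝ), HasDerivAt f (f' x) x)
      ∧ StrictMonoOn f' (Ioo 0 x₀)
      ∧ Tendsto f' (nhdsWithin 0 (Ioi 0)) atBot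
      ∧ f' x₀ < 0
      ∧ φ * ∫ r, r ^ 2 / (1 + x₀ * r) ^ 2 ∂P < 1 / x₀ ^ 2 := by
  set G : ℝ → ℝ := fun x => ∫ r, r / (1 + x * r) ∂P with hG
  set H : ℝ → ℝ := fun x => ∫ r, r ^ 2 / (1 + x * r) ^ 2 ∂P with hH
  set K : ℝ → ℝ := fun x => ∫ r, r ^ 3 / (1 + x * r) ^ 3 ∂P with hK
  have hgf : ∀ x : ℝ, f x = 1 / x - φ * G x - lam := by
    intro x
    have e : (∫ r, r / (1 + r * x) ∂P) = ∫ r, r / (1 + x * r) ∂P := by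
      congr 1; funext r; rw [mul_comm]
    rw [hf x, e]
  have hfp : ∀ x : ℝ, f' x = -(1 / x ^ 2) + φ * H x := hf'
  have int1 : ∀ {x : ℝ}, 0 ≤ x → Integrable (fun r : ℝ => r / (1 + x * r)) P :=
    fun {x} hx => by simpa using RidgeFP.integrable_aux ha hsupp 1 1 hx
  have int2 : ∀ {x : ℝ}, 0 ≤ x → Integrable (fun r : ℝ => r ^ 2 / (1 + x * r) ^ 2) P :=
    fun {x} hx => RidgeFP.integrable_aux ha hsupp 2 2 hx
  have int3 : ∀ {x : ℝ}, 0 ≤ x → Integrable (fun r : ℝ => r ^ 3 / (1 + x * r) ^ 3) P :=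
    fun {x} hx => RidgeFP.integrable_aux ha hsupp 3 3 hx
  -- nonnegativity of G
  have hGnn : ∀ {x : ℝ}, 0 ≤ x → 0 ≤ G x := by
    intro x hx
    apply integral_nonneg_of_ae
    filter_upwards [hsupp] with r hr
    have hr0 : 0 < r := lt_of_lt_of_le ha hr.1
    have hd := RidgeFP.denom_ge hr0 hx
    positivity
  have hGb : ∀ {x : ℝ}, 0 ≤ x → G x ≤ b := by
    intro x hx
    calc G x ≤ ∫ _r, b ∂P := by
          apply integral_mono_ae (int1 hx) (integrable_const b)
          filter_upwards [hsupp] with r hr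
          have hr0 : 0 < r := lt_of_lt_of_le ha hr.1
          have h1 := RidgeFP.denom_ge hr0 hx
          calc r / (1 + x * r) ≤ r := div_le_self hr0.le h1
            _ ≤ b := hr.2
      _ = b := by simp
  have hG1x : ∀ {x : ℝ}, 0 < x → G x ≤ 1 / x := by
    intro x hx
    calc G x ≤ ∫ _r, 1 / x ∂P := by
          apply integral_mono_ae (int1 hx.le) (integrable_const _)
          filter_upwards [hsupp] with r hr
          have hr0 : 0 < r := lt_of_lt_of_le ha hr.1
          exact RidgeFP.frac_le hr0 hx
      _ = 1 / x := by simp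
  have hHb : ∀ {x : ℝ}, 0 ≤ x → H x ≤ b ^ 2 := by
    intro x hx
    calc H x ≤ ∫ _r, b ^ 2 ∂P := by
          apply integral_mono_ae (int2 hx) (integrable_const _)
          filter_upwards [hsupp] with r hr
          have hr0 : 0 < r := lt_of_lt_of_le ha hr.1
          have h1 : (1:ℝ) ≤ (1 + x * r) ^ 2 := one_le_pow₀ (RidgeFP.denom_ge hr0 hx)
          calc r ^ 2 / (1 + x * r) ^ 2 ≤ r ^ 2 := div_le_self (by positivity) h1
            _ ≤ b ^ 2 := pow_le_pow_left₀ hr0.le hr.2 2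
      _ = b ^ 2 := by simp
  have hHG : ∀ {x : ℝ}, 0 < x → H x ≤ 1 / x * G x := by
    intro x hx
    calc H x ≤ ∫ r, 1 / x * (r / (1 + x * r)) ∂P := by
          apply integral_mono_ae (int2 hx.le) ((int1 hx.le).const_mul _)
          filter_upwards [hsupp] with r hr
          have hr0 : 0 < r := lt_of_lt_of_le ha hr.1
          have hd : (0:ℝ) < 1 + x * r := by nlinarith
          have h0 : 0 ≤ r / (1 + x * r) := by positivity
          calc r ^ 2 / (1 + x * r) ^ 2 = (r / (1 + x * r)) ^ 2 := (div_pow _ _ _).symm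
            _ = r / (1 + x * r) * (r / (1 + x * r)) := by rw [pow_two]
            _ ≤ 1 / x * (r / (1 + x * r)) :=
                mul_le_mul_of_nonneg_right (RidgeFP.frac_le hr0 hx) h0
      _ = 1 / x * G x := integral_const_mul _ _
  have hKG : ∀ {x : ℝ}, 0 < x → K x ≤ 1 / x ^ 2 * G x := by
    intro x hx
    calc K x ≤ ∫ r, 1 / x ^ 2 * (r / (1 + x * r)) ∂P := by
          apply integral_mono_ae (int3 hx.le) ((int1 hx.le).const_mul _)
          filter_upwards [hsupp] with r hr
          have hr0 : 0 < r := lt_of_lt_of_le ha hr.1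
          have hd : (0:ℝ) < 1 + x * r := by nlinarith
          have h0 : 0 ≤ r / (1 + x * r) := by positivity
          have hsq : (r / (1 + x * r)) ^ 2 ≤ (1 / x) ^ 2 :=
            pow_le_pow_left₀ h0 (RidgeFP.frac_le hr0 hx) 2
          calc r ^ 3 / (1 + x * r) ^ 3 = (r / (1 + x * r)) ^ 3 := (div_pow _ _ _).symm
            _ = (r / (1 + x * r)) ^ 2 * (r / (1 + x * r)) := by rw [pow_succ]
            _ ≤ (1 / x) ^ 2 * (r / (1 + x * r)) := mul_le_mul_of_nonneg_right hsq h0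
            _ = 1 / x ^ 2 * (r / (1 + x * r)) := by rw [div_pow, one_pow]
      _ = 1 / x ^ 2 * G x := integral_const_mul _ _
  have hqmono : ∀ x y : ℝ, 0 < x → x ≤ y → x * G x ≤ y * G y := by
    intro x y hx hxy
    have hy : 0 < y := lt_of_lt_of_le hx hxy
    simp only [hG]
    rw [← integral_const_mul, ← integral_const_mul]
    apply integral_mono_ae ((int1 hx.le).const_mul x) ((int1 hy.le).const_mul y)
    filter_upwards [hsupp] with r hr
    have hr0 : 0 < r := lt_of_lt_of_le ha hr.1
    have d1 : (0:ℝ) < 1 + x * r := by nlinarith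
    have d2 : (0:ℝ) < 1 + y * r := by nlinarith
    rw [mul_div_assoc', mul_div_assoc', div_le_div_iff₀ d1 d2]
    nlinarith
  -- derivative of f
  have hfd : ∀ x ∈ Ioi (0:ℝ), HasDerivAt f (f' x) x := by
    intro x hx
    have hx : 0 < x := hx
    have h1 : HasDerivAt (fun y : ℝ => 1 / y) (-(1 / x ^ 2)) x := by
      simpa [one_div] using hasDerivAt_inv hx.ne'
    have h2 := RidgeFP.hasDerivAt_int1 ha hsupp hx
    have h2' : HasDerivAt G (-(H x)) x := by
      simp only [hG, hH]
      convert h2 using 1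
      rw [integral_neg]
    have h3 : HasDerivAt (fun y => 1 / y - φ * G y - lam)
        (-(1 / x ^ 2) - φ * -(H x)) x := (h1.sub (h2'.const_mul φ)).sub_const lam
    have hfe : f = fun y => 1 / y - φ * G y - lam := funext hgf
    rw [hfe, hfp x]
    convert h3 using 1
    ring
  -- derivative of f'
  have hfd' : ∀ x ∈ Ioi (0:ℝ), HasDerivAt f' (2 / x ^ 3 - 2 * φ * K x) x := by
    intro x hx
    have hx : 0 < x := hx
    have hA : HasDerivAt (fun y : ℝ => (y ^ 2)⁻¹) _ x := (hasDerivAt_pow 2 x).inv (pow_ne_zero 2 hx.ne')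
    have hA' : HasDerivAt (fun y : ℝ => -(1 / y ^ 2)) (2 / x ^ 3) x := by
      have : HasDerivAt (fun y : ℝ => -(y ^ 2)⁻¹) _ x := hA.neg
      simp only [one_div]
      convert this using 1
      field_simp
      ring
    have h2 := RidgeFP.hasDerivAt_int2 ha hsupp hx
    have h2' : HasDerivAt H (-(2 * K x)) x := by
      simp only [hH, hK]
      convert h2 using 1
      rw [integral_neg, integral_const_mul]
    have h3 : HasDerivAt (fun y => -(1 / y ^ 2) + φ * H y)
        (2 / x ^ 3 + φ * -(2 * K x)) x := hA'.add (h2'.const_mul φ)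
    have hfe : f' = fun y => -(1 / y ^ 2) + φ * H y := funext hfp
    rw [hfe]
    convert h3 using 1
    ring
  -- negativity of f' where f is nonnegative
  have hf'neg : ∀ x : ℝ, 0 < x → 0 ≤ f x → f' x < 0 := by
    intro x hx hfx
    rw [hgf x] at hfx
    have hA : φ * G x ≤ 1 / x - lam := by linarith
    have c1 : φ * H x ≤ 1 / x * (φ * G x) := by
      calc φ * H x ≤ φ * (1 / x * G x) := mul_le_mul_of_nonneg_left (hHG hx) hφ.le
        _ = 1 / x * (φ * G x) := by ring
    have c2 : 1 / x * (φ * G x) ≤ 1 / x * (1 / x - lam) :=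
      mul_le_mul_of_nonneg_left hA (by positivity)
    have c3 : 1 / x * (1 / x - lam) = 1 / x ^ 2 - lam * (1 / x) := by ring
    have c4 : 0 < lam * (1 / x) := by positivity
    rw [hfp x]; linarith
  -- limits
  have t0 : Tendsto (fun x : ℝ => 1 / x) atTop (𝓝 0) := by
    simpa [one_div] using (tendsto_inv_atTop_zero : Tendsto (fun x : ℝ => x⁻¹) atTop (𝓝 0))
  have htendtop : Tendsto f atTop (𝓝 (-lam)) := by
    have tlow : Tendsto (fun x : ℝ => 1 / x - φ * (1 / x) - lam) atTop (𝓝 (-lam)) := by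
      have := (t0.sub (t0.const_mul φ)).sub_const lam
      simpa using this
    have thigh : Tendsto (fun x : ℝ => 1 / x - lam) atTop (𝓝 (-lam)) := by
      simpa using t0.sub_const lam
    apply tendsto_of_tendsto_of_tendsto_of_le_of_le' tlow thigh
    · filter_upwards [eventually_gt_atTop 0] with x hx
      rw [hgf x]
      have h2 : φ * G x ≤ φ * (1 / x) := mul_le_mul_of_nonneg_left (hG1x hx) hφ.le
      linarith
    · filter_upwards [eventually_gt_atTop 0] with x hx
      rw [hgf x]
      have h1 := mul_nonneg hφ.le (hGnn hx.le)
      linarith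
  have tinv : Tendsto (fun x : ℝ => 1 / x) (𝓝[>] (0:ℝ)) atTop := by
    simpa [one_div] using tendsto_inv_nhdsGT_zero (𝕜 := ℝ)
  have htend0 : Tendsto f (𝓝[>] (0:ℝ)) atTop := by
    apply tendsto_atTop_mono' _ ?_ (tendsto_atTop_add_const_right _ (-(φ * b + lam)) tinv)
    filter_upwards [self_mem_nhdsWithin] with x hx
    have hx : (0:ℝ) < x := hx
    rw [hgf x]
    have h2 : φ * G x ≤ φ * b := mul_le_mul_of_nonneg_left (hGb hx.le) hφ.le
    linarith
  have htendf' : Tendsto f' (𝓝[>] (0:ℝ)) atBot := by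
    have tsq : Tendsto (fun x : ℝ => 1 / x * (1 / x)) (𝓝[>] (0:ℝ)) atTop :=
      tinv.atTop_mul_atTop₀ tinv
    have tneg : Tendsto (fun x : ℝ => -(1 / x * (1 / x))) (𝓝[>] (0:ℝ)) atBot :=
      tendsto_neg_atTop_atBot.comp tsq
    apply tendsto_atBot_mono' _ ?_ (tendsto_atBot_add_const_right _ (φ * b ^ 2) tneg)
    filter_upwards [self_mem_nhdsWithin] with x hx
    have hx : (0:ℝ) < x := hx
    rw [hfp x]
    have h2 : φ * H x ≤ φ * b ^ 2 := mul_le_mul_of_nonneg_left (hHb hx.le) hφ.le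
    have e : 1 / x * (1 / x) = 1 / x ^ 2 := by ring
    linarith
  -- existence of sign change
  obtain ⟨x₁, hfx₁, hx₁pos⟩ :=
    ((htend0.eventually_ge_atTop 1).and self_mem_nhdsWithin).exists
  have hx₁pos : (0:ℝ) < x₁ := hx₁pos
  obtain ⟨x₂, hfx₂, hx₁₂⟩ :=
    ((htendtop.eventually_lt_const (show -lam < 0 by linarith)).and
      (eventually_ge_atTop x₁)).exists
  have cont : ContinuousOn f (Icc x₁ x₂) := fun z hz =>
    (hfd z (lt_of_lt_of_le hx₁pos hz.1)).continuousAt.continuousWithinAt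
  obtain ⟨x₀, hx₀mem, hfx₀⟩ :=
    intermediate_value_Icc' hx₁₂ cont (⟨hfx₂.le, by linarith⟩ : (0:ℝ) ∈ Icc (f x₂) (f x₁))
  have hx₀pos : 0 < x₀ := lt_of_lt_of_le hx₁pos hx₀mem.1
  -- strict antitonicity of x * f x
  have hFanti : ∀ x y : ℝ, 0 < x → x < y → y * f y < x * f x := by
    intro x y hx hxy
    have hy : 0 < y := hx.trans hxy
    have hq := hqmono x y hx hxy.le
    have ex : x * f x = 1 - φ * (x * G x) - lam * x := by
      rw [hgf x]; field_simp
    have ey : y * f y = 1 - φ * (y * G y) - lam * y := by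
      rw [hgf y]; field_simp
    have h1 : φ * (x * G x) ≤ φ * (y * G y) := mul_le_mul_of_nonneg_left hq hφ.le
    have h2 : lam * x < lam * y := by nlinarith
    rw [ex, ey]; linarith
  have hpos : ∀ x ∈ Ioo 0 x₀, 0 < f x := by
    intro x hx
    have h1 := hFanti x x₀ hx.1 hx.2
    rw [hfx₀, mul_zero] at h1
    by_contra hc
    push_neg at hc
    nlinarith [hx.1]
  have hnegIoi : ∀ x ∈ Ioi x₀, f x < 0 := by
    intro x hx
    have hx' : x₀ < x := hx
    have h1 := hFanti x₀ x hx₀pos hx'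
    rw [hfx₀, mul_zero] at h1
    by_contra hc
    push_neg at hc
    nlinarith [hx₀pos.trans hx']
  have huniq : ∀ x : ℝ, 0 < x → f x = 0 → x = x₀ := by
    intro x hx hfx
    rcases lt_trichotomy x x₀ with h | h | h
    · have := hFanti x x₀ hx h
      rw [hfx, hfx₀, mul_zero, mul_zero] at this
      exact absurd this (lt_irrefl 0)
    · exact h
    · have := hFanti x₀ x hx₀pos h
      rw [hfx, hfx₀, mul_zero, mul_zero] at this
      exact absurd this (lt_irrefl 0)
  have hanti : StrictAntiOn f (Ioo 0 x₀) := by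
    apply strictAntiOn_of_deriv_neg (convex_Ioo _ _)
    · exact fun z hz => (hfd z hz.1).continuousAt.continuousWithinAt
    · intro z hz
      rw [interior_Ioo] at hz
      rw [(hfd z hz.1).deriv]
      exact hf'neg z hz.1 (hpos z hz).le
  have hmono : StrictMonoOn f' (Ioo 0 x₀) := by
    apply strictMonoOn_of_deriv_pos (convex_Ioo _ _)
    · exact fun z hz => (hfd' z hz.1).continuousAt.continuousWithinAt
    · intro z hz
      rw [interior_Ioo] at hz
      rw [(hfd' z hz.1).deriv]
      have hzp : 0 < z := hz.1
      have hfz := hpos z hz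
      rw [hgf z] at hfz
      have hφg : φ * G z < 1 / z := by linarith
      have c1 : φ * K z ≤ 1 / z ^ 2 * (φ * G z) := by
        calc φ * K z ≤ φ * (1 / z ^ 2 * G z) := mul_le_mul_of_nonneg_left (hKG hzp) hφ.le
          _ = 1 / z ^ 2 * (φ * G z) := by ring
      have c2 : 1 / z ^ 2 * (φ * G z) < 1 / z ^ 2 * (1 / z) :=
        mul_lt_mul_of_pos_left hφg (by positivity)
      have c3 : 1 / z ^ 2 * (1 / z) = 1 / z ^ 3 := by ring
      have c4 : 2 / z ^ 3 = 2 * (1 / z ^ 3) := by ring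
      linarith
  have hf'x₀ : f' x₀ < 0 := hf'neg x₀ hx₀pos (le_of_eq hfx₀.symm)
  have hlast : φ * ∫ r, r ^ 2 / (1 + x₀ * r) ^ 2 ∂P < 1 / x₀ ^ 2 := by
    have := hf'x₀
    rw [hf' x₀] at this
    linarith
  exact ⟨x₀, hx₀pos, hfx₀, huniq, hpos, hanti, hnegIoi, htend0, htendtop, hfd, hmono,
    htendf', hf'x₀, hlast⟩
end

section
/- Let 0 < a ≤ b < ∞, let P be a probability measure on ℝ supported on [a, b], and let λ > 0. For each φ > 0, let v(φ) denote the unique positive solution of 1/v(φ) = λ + φ ∫ r/(1 + v(φ) r) dP(r). Then: (i) 1/(λ + φ b) < v(φ) < 1/λ for every φ > 0; (ii) the function φ ↦ v(φ) is continuous and strictly decreasing on (0, ∞); (iii) v(φ) → 1/λ as φ → 0⁺; (iv) v(φ) → 0 as φ → ∞. (Continuity and monotonicity in the aspect ratio of the ridge fixed-point solution.) -/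
open MeasureTheory Filter Set

lemma ridge_meas (x : ℝ) : Measurable (fun r : ℝ => r / (1 + x * r)) :=
  measurable_id.div (measurable_const.add (measurable_const.mul measurable_id))

lemma ridge_integrable {a b : ℝ} (ha : 0 < a)
    (P : Measure ℝ) [IsProbabilityMeasure P]
    (hsupp : ∀ᵐ r ∂P, r ∈ Icc a b) (x : ℝ) (hx : 0 < x) :
    Integrable (fun r : ℝ => r / (1 + x * r)) P := by
  apply Integrable.mono' (integrable_const b) (ridge_meas x).aestronglyMeasurable
  filter_upwards [hsupp] with r hr
  have hr1 : a ≤ r := hr.1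
  have hd : (1:ℝ) ≤ 1 + x * r := by nlinarith
  have h0 : 0 ≤ r / (1 + x * r) := div_nonneg (by linarith) (by linarith)
  rw [Real.norm_eq_abs, abs_of_nonneg h0]
  calc r / (1 + x * r) ≤ r := div_le_self (by linarith) hd
    _ ≤ b := hr.2

lemma ridge_lb {a b : ℝ} (ha : 0 < a) (hab : a ≤ b)
    (P : Measure ℝ) [IsProbabilityMeasure P]
    (hsupp : ∀ᵐ r ∂P, r ∈ Icc a b) (x : ℝ) (hx : 0 < x) :
    a / (1 + x * b) ≤ ∫ r, r / (1 + x * r) ∂P := by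
  have h := integral_mono_ae (integrable_const (a / (1 + x * b)))
    (ridge_integrable ha P hsupp x hx) ?_
  · simpa using h
  · filter_upwards [hsupp] with r hr
    have hd : 0 < 1 + x * r := by nlinarith [hr.1]
    have hd2 : 1 + x * r ≤ 1 + x * b := by nlinarith [hr.2]
    exact div_le_div₀ (by linarith [hr.1]) hr.1 hd hd2

lemma ridge_ub {a b : ℝ} (ha : 0 < a) (hab : a ≤ b)
    (P : Measure ℝ) [IsProbabilityMeasure P]
    (hsupp : ∀ᵐ r ∂P, r ∈ Icc a b) (x : ℝ) (hx : 0 < x) :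
    ∫ r, r / (1 + x * r) ∂P ≤ b / (1 + x * a) := by
  have h := integral_mono_ae (ridge_integrable ha P hsupp x hx)
    (integrable_const (b / (1 + x * a))) ?_
  · simpa using h
  · filter_upwards [hsupp] with r hr
    have hd : 0 < 1 + x * a := by nlinarith
    have hd2 : 1 + x * a ≤ 1 + x * r := by nlinarith [hr.1]
    exact div_le_div₀ (by linarith) hr.2 hd hd2

lemma ridge_pos {a b : ℝ} (ha : 0 < a) (hab : a ≤ b)
    (P : Measure ℝ) [IsProbabilityMeasure P]
    (hsupp : ∀ᵐ r ∂P, r ∈ Icc a b) (x : ℝ) (hx : 0 < x) :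
    0 < ∫ r, r / (1 + x * r) ∂P := by
  have hb : 0 < b := lt_of_lt_of_le ha hab
  have h := ridge_lb ha hab P hsupp x hx
  have : 0 < a / (1 + x * b) := div_pos ha (by nlinarith)
  linarith

/-- Key comparison: if x₁ < x₂ are positive solutions at parameters φ₁, φ₂, then φ₂ < φ₁. -/
lemma ridge_key {a b : ℝ} (ha : 0 < a) (hab : a ≤ b)
    (P : Measure ℝ) [IsProbabilityMeasure P]
    (hsupp : ∀ᵐ r ∂P, r ∈ Icc a b)
    (lam : ℝ) (hlam : 0 < lam)
    (x1 x2 p1 p2 : ℝ) (hx1 : 0 < x1) (hx2 : 0 < x2) (hp1 : 0 < p1)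
    (h1 : 1 / x1 = lam + p1 * ∫ r, r / (1 + x1 * r) ∂P)
    (h2 : 1 / x2 = lam + p2 * ∫ r, r / (1 + x2 * r) ∂P)
    (hlt : x1 < x2) : p2 < p1 := by
  set f1 : ℝ → ℝ := fun r => r / (1 + x1 * r) with hf1
  set f2 : ℝ → ℝ := fun r => r / (1 + x2 * r) with hf2
  have hif1 : Integrable f1 P := ridge_integrable ha P hsupp x1 hx1
  have hif2 : Integrable f2 P := ridge_integrable ha P hsupp x2 hx2
  set I1 : ℝ := ∫ r, f1 r ∂P with hI1
  set I2 : ℝ := ∫ r, f2 r ∂P with hI2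
  -- product integrability
  have hmg : Measurable (fun r => f1 r * f2 r) := (ridge_meas x1).mul (ridge_meas x2)
  have hig : Integrable (fun r => f1 r * f2 r) P := by
    apply Integrable.mono' (integrable_const (b * b)) hmg.aestronglyMeasurable
    filter_upwards [hsupp] with r hr
    have hr1 : a ≤ r := hr.1
    have hd1 : (1:ℝ) ≤ 1 + x1 * r := by nlinarith
    have hd2 : (1:ℝ) ≤ 1 + x2 * r := by nlinarith
    have hb1 : 0 ≤ f1 r := div_nonneg (by linarith) (by linarith)
    have hb2 : 0 ≤ f2 r := div_nonneg (by linarith) (by linarith)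
    have hub1 : f1 r ≤ b := le_trans (div_le_self (by linarith) hd1) hr.2
    have hub2 : f2 r ≤ b := le_trans (div_le_self (by linarith) hd2) hr.2
    rw [Real.norm_eq_abs, abs_of_nonneg (mul_nonneg hb1 hb2)]
    exact mul_le_mul hub1 hub2 hb2 (by linarith)
  set J : ℝ := ∫ r, f1 r * f2 r ∂P with hJ
  -- step 1 : I1 - I2 = (x2 - x1) * J
  have hII : I1 - I2 = (x2 - x1) * J := by
    rw [hI1, hI2, ← integral_sub hif1 hif2, hJ, ← integral_const_mul]
    apply integral_congr_ae
    filter_upwards [hsupp] with r hr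
    have hr1 : a ≤ r := hr.1
    have hd1 : (0:ℝ) < 1 + x1 * r := by nlinarith
    have hd2 : (0:ℝ) < 1 + x2 * r := by nlinarith
    simp only [hf1, hf2]
    rw [div_sub_div _ _ hd1.ne' hd2.ne', div_mul_div_comm, mul_div_assoc']
    congr 1
    ring
  -- step 2 : J ≤ I1 / x2
  have hJle : J ≤ I1 * (1 / x2) := by
    rw [hJ, hI1, ← integral_mul_const]
    apply integral_mono_ae hig (hif1.mul_const _)
    filter_upwards [hsupp] with r hr
    have hr1 : a ≤ r := hr.1
    have hd1 : (0:ℝ) < 1 + x1 * r := by nlinarith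
    have hd2 : (0:ℝ) < 1 + x2 * r := by nlinarith
    have hb1 : 0 ≤ f1 r := div_nonneg (by linarith) (by linarith)
    have h2le : f2 r ≤ 1 / x2 := by
      rw [hf2, div_le_div_iff₀ hd2 hx2]
      nlinarith
    exact mul_le_mul_of_nonneg_left h2le hb1
  have hI2pos : 0 < I2 := ridge_pos ha hab P hsupp x2 hx2
  have hI1eq : p1 * I1 = 1 / x1 - lam := by linarith
  have hpJ : p1 * J < 1 / (x1 * x2) := by
    have h3 : p1 * J ≤ (1 / x1 - lam) * (1 / x2) := by
      calc p1 * J ≤ p1 * (I1 * (1 / x2)) := mul_le_mul_of_nonneg_left hJle hp1.le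
        _ = (p1 * I1) * (1 / x2) := by ring
        _ = (1 / x1 - lam) * (1 / x2) := by rw [hI1eq]
    have h4 : (1 / x1 - lam) * (1 / x2) < (1 / x1) * (1 / x2) := by
      have : 0 < 1 / x2 := by positivity
      nlinarith
    have h5 : (1 / x1) * (1 / x2) = 1 / (x1 * x2) := by field_simp
    linarith
  have hdiff : 1 / x1 - 1 / x2 = p1 * I1 - p2 * I2 := by linarith
  have h1x : 1 / x1 - 1 / x2 = (x2 - x1) * (1 / (x1 * x2)) := by
    field_simp
  have key_eq : (x2 - x1) * (1 / (x1 * x2) - p1 * J) = (p1 - p2) * I2 := by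
    linear_combination -h1x + hdiff + p1 * hII
  have hprod : 0 < (p1 - p2) * I2 := by
    rw [← key_eq]
    exact mul_pos (by linarith) (by linarith)
  by_contra hc
  push_neg at hc
  nlinarith

lemma one_div_swap_lt {x y : ℝ} (hx : 0 < x) (hy : 0 < y) (h : x < 1 / y) : y < 1 / x := by
  rw [lt_div_iff₀ hy] at h
  rw [lt_div_iff₀ hx]
  nlinarith

lemma swap_one_div_lt {x y : ℝ} (hx : 0 < x) (hy : 0 < y) (h : 1 / x < y) : 1 / y < x := by
  rw [div_lt_iff₀ hx] at h
  rw [div_lt_iff₀ hy]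
  nlinarith

set_option maxHeartbeats 1000000

/-- Continuity and monotonicity in the aspect ratio of the ridge fixed-point solution. -/
theorem ridge_fixed_point_solution_in_aspect_ratio
    (a b : ℝ) (ha : 0 < a) (hab : a ≤ b)
    (P : Measure ℝ) [IsProbabilityMeasure P]
    (hsupp : ∀ᵐ r ∂P, r ∈ Icc a b)
    (lam : ℝ) (hlam : 0 < lam)
    (v : ℝ → ℝ)
    (hv : ∀ φ : ℝ, 0 < φ →
      0 < v φ ∧ 1 / v φ = lam + φ * ∫ r, r / (1 + v φ * r) ∂P)
    (hvu : ∀ φ : ℝ, 0 < φ → ∀ x : ℝ, 0 < x →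
      1 / x = lam + φ * ∫ r, r / (1 + x * r) ∂P → x = v φ) :
    (∀ φ : ℝ, 0 < φ → 1 / (lam + φ * b) < v φ ∧ v φ < 1 / lam)
    ∧ ContinuousOn v (Ioi 0)
    ∧ StrictAntiOn v (Ioi 0)
    ∧ Tendsto v (nhdsWithin 0 (Ioi 0)) (nhds (1 / lam))
    ∧ Tendsto v atTop (nhds 0) := by
  have hb : 0 < b := lt_of_lt_of_le ha hab
  -- Part (i): bounds
  have bounds : ∀ φ : ℝ, 0 < φ → 1 / (lam + φ * b) < v φ ∧ v φ < 1 / lam := by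
    intro φ hφ
    obtain ⟨hvp, heq⟩ := hv φ hφ
    have hIub := ridge_ub ha hab P hsupp (v φ) hvp
    have hIpos := ridge_pos ha hab P hsupp (v φ) hvp
    constructor
    · -- 1/(lam + φ b) < v φ
      have hblt : b / (1 + v φ * a) < b := div_lt_self hb (by nlinarith)
      have h1 : 1 / v φ < lam + φ * b := by nlinarith
      exact swap_one_div_lt hvp (by nlinarith) h1
    · -- v φ < 1/lam
      have h1 : lam < 1 / v φ := by nlinarith
      exact one_div_swap_lt hlam hvp h1
  -- Part (iii): strict antitonicity
  have anti : StrictAntiOn v (Ioi 0) := by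
    intro p hp q hq hpq
    simp only [mem_Ioi] at hp hq
    obtain ⟨hvp, heqp⟩ := hv p hp
    obtain ⟨hvq, heqq⟩ := hv q hq
    rcases lt_trichotomy (v q) (v p) with h | h | h
    · exact h
    · exfalso
      have hIpos := ridge_pos ha hab P hsupp (v p) hvp
      rw [h] at heqq
      nlinarith
    · exfalso
      have := ridge_key ha hab P hsupp lam hlam (v p) (v q) p q hvp hvq hp heqp heqq h
      linarith
  -- Part (ii): continuity
  have cont : ContinuousOn v (Ioi 0) := by
    intro φ0 hφ0
    simp only [mem_Ioi] at hφ0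
    rw [Metric.continuousWithinAt_iff]
    intro ε hε
    obtain ⟨hvpos, heq0⟩ := hv φ0 hφ0
    obtain ⟨hlb0, hub0⟩ := bounds φ0 hφ0
    set x0 := v φ0 with hx0
    set e := min (ε / 2) (min (x0 / 2) ((1 / lam - x0) / 2)) with he
    have hepos : 0 < e := lt_min (by linarith) (lt_min (by linarith) (by linarith))
    have he1 : e ≤ ε / 2 := min_le_left _ _
    have he2 : e ≤ x0 / 2 := le_trans (min_le_right _ _) (min_le_left _ _)
    have he3 : e ≤ (1 / lam - x0) / 2 := le_trans (min_le_right _ _) (min_le_right _ _)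
    set x1 := x0 - e with hx1
    set x2 := x0 + e with hx2
    have hx1pos : 0 < x1 := by simp only [hx1]; linarith
    have hx2pos : 0 < x2 := by simp only [hx2]; linarith
    have hx2lt : x2 < 1 / lam := by simp only [hx2]; linarith
    have hx1lt : x1 < 1 / lam := by simp only [hx1]; linarith
    have hI1pos := ridge_pos ha hab P hsupp x1 hx1pos
    have hI2pos := ridge_pos ha hab P hsupp x2 hx2pos
    set s := (1 / x1 - lam) / (∫ r, r / (1 + x1 * r) ∂P) with hs
    set t := (1 / x2 - lam) / (∫ r, r / (1 + x2 * r) ∂P) with ht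
    have hlam1 : lam < 1 / x1 := one_div_swap_lt hx1pos hlam hx1lt
    have hlam2 : lam < 1 / x2 := one_div_swap_lt hx2pos hlam hx2lt
    have hspos : 0 < s := div_pos (by linarith) hI1pos
    have htpos : 0 < t := div_pos (by linarith) hI2pos
    have heqs : 1 / x1 = lam + s * ∫ r, r / (1 + x1 * r) ∂P := by
      rw [hs, div_mul_cancel₀ _ hI1pos.ne']; ring
    have heqt : 1 / x2 = lam + t * ∫ r, r / (1 + x2 * r) ∂P := by
      rw [ht, div_mul_cancel₀ _ hI2pos.ne']; ring
    have hφ0s : φ0 < s :=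
      ridge_key ha hab P hsupp lam hlam x1 x0 s φ0 hx1pos hvpos hspos heqs heq0
        (by simp only [hx1]; linarith)
    have htφ0 : t < φ0 :=
      ridge_key ha hab P hsupp lam hlam x0 x2 φ0 t hvpos hx2pos hφ0 heq0 heqt
        (by simp only [hx2]; linarith)
    refine ⟨min (s - φ0) (φ0 - t), lt_min (by linarith) (by linarith), ?_⟩
    intro φ hφmem hdist
    have hφpos : 0 < φ := hφmem
    obtain ⟨hvφpos, heqφ⟩ := hv φ hφpos
    rw [Real.dist_eq] at hdist
    have habs := abs_lt.mp hdist
    have hφs : φ < s := by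
      have := lt_of_lt_of_le habs.2 (min_le_left _ _); linarith
    have hφt : t < φ := by
      have h1 := min_le_right (s - φ0) (φ0 - t)
      linarith [habs.1]
    have hlow : x1 < v φ := by
      rcases lt_trichotomy (v φ) x1 with h | h | h
      · exfalso
        have := ridge_key ha hab P hsupp lam hlam (v φ) x1 φ s hvφpos hx1pos hφpos heqφ heqs h
        linarith
      · exfalso
        rw [← h] at heqs
        have hIp := ridge_pos ha hab P hsupp (v φ) hvφpos
        nlinarith
      · exact h
    have hhigh : v φ < x2 := by
      rcases lt_trichotomy (v φ) x2 with h | h | h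
      · exact h
      · exfalso
        rw [← h] at heqt
        have hIp := ridge_pos ha hab P hsupp (v φ) hvφpos
        nlinarith
      · exfalso
        have := ridge_key ha hab P hsupp lam hlam x2 (v φ) t φ hx2pos hvφpos htpos heqt heqφ h
        linarith
    rw [Real.dist_eq]
    have h1 : x0 - e < v φ := by simpa [hx1] using hlow
    have h2 : v φ < x0 + e := by simpa [hx2] using hhigh
    rw [abs_lt]
    constructor <;> [linarith; linarith]
  refine ⟨bounds, cont, anti, ?_, ?_⟩
  · -- limit at 0⁺
    apply tendsto_of_tendsto_of_tendsto_of_le_of_le'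
      (g := fun φ : ℝ => 1 / (lam + φ * b)) (h := fun _ : ℝ => 1 / lam)
    · have hc : ContinuousAt (fun φ : ℝ => 1 / (lam + φ * b)) 0 := by
        apply ContinuousAt.div continuousAt_const (by fun_prop)
        simp [hlam.ne']
      have h2 : Tendsto (fun φ : ℝ => 1 / (lam + φ * b)) (nhdsWithin 0 (Ioi 0))
          (nhds (1 / (lam + 0 * b))) := hc.tendsto.mono_left nhdsWithin_le_nhds
      simpa using h2
    · exact tendsto_const_nhds
    · filter_upwards [self_mem_nhdsWithin] with φ hφ
      exact (bounds φ hφ).1.le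
    · filter_upwards [self_mem_nhdsWithin] with φ hφ
      exact (bounds φ hφ).2.le
  · -- limit at ∞
    set c := a / (1 + b / lam) with hc
    have hcpos : 0 < c := div_pos ha (by positivity)
    apply tendsto_of_tendsto_of_tendsto_of_le_of_le'
      (g := fun _ : ℝ => (0 : ℝ)) (h := fun φ : ℝ => 1 / (lam + φ * c))
    · exact tendsto_const_nhds
    · have h1 : Tendsto (fun φ : ℝ => lam + φ * c) atTop atTop :=
        tendsto_atTop_add_const_left _ lam (Tendsto.atTop_mul_const hcpos tendsto_id)
      have := h1.inv_tendsto_atTop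
      simpa [one_div, Pi.inv_def] using this
    · filter_upwards [eventually_gt_atTop 0] with φ hφ
      exact (hv φ hφ).1.le
    · filter_upwards [eventually_gt_atTop 0] with φ hφ
      obtain ⟨hvp, heq⟩ := hv φ hφ
      have hub : v φ < 1 / lam := (bounds φ hφ).2
      have hIlb := ridge_lb ha hab P hsupp (v φ) hvp
      have hcle : c ≤ a / (1 + v φ * b) := by
        rw [hc]
        have hvb : v φ * b ≤ (1 / lam) * b := mul_le_mul_of_nonneg_right hub.le hb.le
        have hring : (1 / lam) * b = b / lam := by ring
        apply div_le_div_of_nonneg_left ha.le (by nlinarith) (by linarith)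
      have h2 : lam + φ * c ≤ 1 / v φ := by nlinarith
      have hd : 0 < lam + φ * c := by positivity
      rw [le_div_iff₀ hd]
      have e1 : v φ * (1 / v φ) = 1 := by field_simp
      nlinarith [mul_le_mul_of_nonneg_left h2 hvp.le]
end
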